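/- arXiv:2308.07668 — 13 statements merged into one kernel-verified Lean document; each statement's English description precedes it below -/
import Mathlib

section
/- Every metric space (M,d) whose diameter is at most 2 (i.e. d(x,y) ≤ 2 for all x,y ∈ M) can be isometrically embedded into the unit sphere of a Banach space of continuous functions on a compact Hausdorff space: there exist a compact Hausdorff space K and a map Ψ : M → C(K) such that ‖Ψ(x)‖∞ = 1 for every x ∈ M and ‖Ψ(x) − Ψ(y)‖∞ = d(x,y) for all x, y ∈ M. -/
/-!
Send `x` to the bounded continuous function `z ↦ 1 - d(x, z)` on `M`: the diameter bound keeps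
its values in `[-1, 1]` with value `1` at `z = x`, and the triangle inequality makes
`x ↦ 1 - d(x, ·)` an isometry for the sup norm, attained at `z = x`. Extending bounded continuous
functions to the Stone–Čech compactification `βM` preserves sup norms, which realises this
embedding inside `C(βM)`.
-/

universe u

open BoundedContinuousFunction

namespace BoundedContinuousFunction

variable {X : Type*} [TopologicalSpace X]

noncomputable def extendStoneCech (f : X →ᵇ ℝ) : C(StoneCech X, ℝ) :=
  have hf : Continuous fun x ↦ (⟨f x, abs_le.mp (f.norm_coe_le_norm x)⟩ : Set.Icc (-‖f‖) ‖f‖) :=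
    f.continuous.subtype_mk _
  ⟨Subtype.val ∘ stoneCechExtend hf, continuous_subtype_val.comp (continuous_stoneCechExtend hf)⟩

@[simp]
theorem extendStoneCech_stoneCechUnit (f : X →ᵇ ℝ) (x : X) :
    f.extendStoneCech (stoneCechUnit x) = f x := by
  simp [extendStoneCech]

theorem extendStoneCech_mem_Icc (f : X →ᵇ ℝ) (k : StoneCech X) :
    f.extendStoneCech k ∈ Set.Icc (-‖f‖) ‖f‖ :=
  Subtype.property (stoneCechExtend _ k)

theorem norm_extendStoneCech (f : X →ᵇ ℝ) : ‖f.extendStoneCech‖ = ‖f‖ := by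
  apply le_antisymm
  · refine (ContinuousMap.norm_le _ (norm_nonneg f)).2 fun k ↦ ?_
    exact abs_le.mpr (f.extendStoneCech_mem_Icc k)
  · refine (norm_le (norm_nonneg _)).2 fun x ↦ ?_
    rw [← extendStoneCech_stoneCechUnit]
    exact ContinuousMap.norm_coe_le_norm _ _

theorem extendStoneCech_sub (f g : X →ᵇ ℝ) :
    (f - g).extendStoneCech = f.extendStoneCech - g.extendStoneCech :=
  ContinuousMap.coe_injective <|
    stoneCech_hom_ext (map_continuous _) (map_continuous _) <| by ext; simp

end BoundedContinuousFunction

section Tent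

variable {M : Type*} [PseudoMetricSpace M] {r : ℝ}

noncomputable def tentAt (hM : ∀ x y : M, dist x y ≤ 2 * r) (x : M) : M →ᵇ ℝ :=
  ofNormedAddCommGroup (fun z ↦ r - dist x z) (by fun_prop) r fun z ↦ by
    rw [Real.norm_eq_abs, abs_le]
    constructor <;> linarith [hM x z, dist_nonneg (x := x) (y := z)]

@[simp]
theorem tentAt_apply (hM : ∀ x y : M, dist x y ≤ 2 * r) (x z : M) :
    tentAt hM x z = r - dist x z :=
  rfl

theorem norm_tentAt (hM : ∀ x y : M, dist x y ≤ 2 * r) (x : M) : ‖tentAt hM x‖ = r := by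
  have hr : 0 ≤ r := by linarith [hM x x, dist_self x]
  refine le_antisymm (norm_ofNormedAddCommGroup_le _ hr _) ?_
  simpa [abs_of_nonneg hr] using (tentAt hM x).norm_coe_le_norm x

theorem dist_tentAt (hM : ∀ x y : M, dist x y ≤ 2 * r) (x y : M) :
    dist (tentAt hM x) (tentAt hM y) = dist x y := by
  apply le_antisymm
  · refine (dist_le dist_nonneg).2 fun z ↦ ?_
    rw [tentAt_apply, tentAt_apply, Real.dist_eq, sub_sub_sub_cancel_left, abs_sub_comm]
    exact abs_dist_sub_le x y z
  · simpa [Real.dist_eq, dist_comm y x] using (tentAt hM x).dist_coe_le_dist (g := tentAt hM y) x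

end Tent

theorem stmt1 {M : Type u} [MetricSpace M] (h2 : ∀ x y : M, dist x y ≤ 2) :
    ∃ (K : Type u) (_ : TopologicalSpace K) (_ : CompactSpace K) (_ : T2Space K)
      (Ψ : M → C(K, ℝ)),
      (∀ x : M, ‖Ψ x‖ = 1) ∧ (∀ x y : M, ‖Ψ x - Ψ y‖ = dist x y) := by
  have hM : ∀ x y : M, dist x y ≤ 2 * 1 := by simpa using h2
  refine ⟨StoneCech M, inferInstance, inferInstance, inferInstance,
    fun x ↦ (tentAt hM x).extendStoneCech, fun x ↦ ?_, fun x y ↦ ?_⟩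
  · rw [norm_extendStoneCech, norm_tentAt]
  · rw [← extendStoneCech_sub, norm_extendStoneCech, ← dist_eq_norm, dist_tentAt]
end

section
/- Let κ be an infinite cardinal, let X be an infinite-dimensional Banach space of density κ, and let ε > 0. Then the unit sphere S_X admits a (1−ε)-separated subset of cardinality κ, and the diameter of S_X equals 2. -/
/-!
By Zorn's lemma the unit sphere contains a maximal `(1 - ε)`-separated set `N`, and by Riesz's
lemma its span is dense (otherwise a unit vector far from the closed span could be added to `N`).
In infinite dimension `N` is then infinite, and the union, over the finite `T ⊆ N`, of countable
dense subsets of the finite-dimensional spans of `T` is a dense set of cardinality at most `#N`;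
hence `κ ≤ #N`, and any `κ` points of `N` will do.
-/

universe u

open Cardinal Metric Submodule TopologicalSpace

theorem exists_maximal_pairwise_subset {α : Type*} (A : Set α) (r : α → α → Prop) :
    ∃ N, Maximal (fun S => S ⊆ A ∧ S.Pairwise r) N :=
  zorn_subset _ fun c hcS hc =>
    ⟨⋃₀ c, ⟨Set.sUnion_subset fun _ hs => (hcS hs).1,
      hc.pairwise_sUnion.2 fun _ hs => (hcS hs).2⟩, fun _ => Set.subset_sUnion_of_mem⟩

theorem dense_span_of_maximal_separated {𝕜 E : Type*} [RCLike 𝕜] [NormedAddCommGroup E]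
    [NormedSpace 𝕜 E] {r : ℝ} (hr : r < 1) {N : Set E}
    (hN : Maximal (fun S => S ⊆ sphere 0 1 ∧ S.Pairwise (fun x y => r ≤ ‖x - y‖)) N) :
    Dense (span 𝕜 N : Set E) := by
  set F := (span 𝕜 N).topologicalClosure
  have hNF : N ⊆ F := subset_span.trans (span 𝕜 N).le_topologicalClosure
  rw [dense_iff_topologicalClosure_eq_top, eq_top_iff']
  by_contra! hF
  obtain ⟨u, huF, hu, hfar⟩ := riesz_lemma_of_lt_one (span 𝕜 N).isClosed_topologicalClosure hF hr
  have hinsert : insert u N ⊆ sphere 0 1 ∧ (insert u N).Pairwise (fun x y => r ≤ ‖x - y‖) := by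
    refine ⟨Set.insert_subset (mem_sphere_zero_iff_norm.2 hu) hN.prop.1,
      hN.prop.2.insert fun n hn _ => ⟨hfar n (hNF hn), ?_⟩⟩
    rw [norm_sub_rev]
    exact hfar n (hNF hn)
  exact huF (hNF (hN.mem_of_prop_insert hinsert))

theorem Set.infinite_of_dense_span {𝕜 E : Type*} [NontriviallyNormedField 𝕜] [CompleteSpace 𝕜]
    [NormedAddCommGroup E] [NormedSpace 𝕜 E] (hE : ¬FiniteDimensional 𝕜 E) {s : Set E}
    (hs : Dense (span 𝕜 s : Set E)) : s.Infinite := by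
  intro hfin
  have : FiniteDimensional 𝕜 (span 𝕜 s) := FiniteDimensional.span_of_finite 𝕜 hfin
  have htop : span 𝕜 s = ⊤ := by
    rw [← dense_iff_topologicalClosure_eq_top.1 hs]
    exact ((span 𝕜 s).closed_of_finiteDimensional.submodule_topologicalClosure_eq).symm
  exact hE (Module.Finite.equiv (htop ▸ Submodule.topEquiv))

theorem exists_dense_mk_le_of_dense_span {R M : Type*} [Semiring R] [TopologicalSpace R]
    [SeparableSpace R] [AddCommMonoid M] [Module R M] [TopologicalSpace M] [ContinuousAdd M]
    [ContinuousSMul R M] {s : Set M} (hs : s.Infinite) (hdense : Dense (span R s : Set M)) :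
    ∃ D : Set M, Dense D ∧ #D ≤ #s := by
  have : Infinite s := hs.to_subtype
  choose c hc hspan using fun T : Finset s =>
    ((T.finite_toSet.image ((↑) : s → M)).countable.isSeparable).span (R := R)
  refine ⟨⋃ T, c T, ?_, ?_⟩
  · refine dense_closure.1 (hdense.mono fun x hx => ?_)
    obtain ⟨l, rfl⟩ := (Finsupp.mem_span_iff_linearCombination R s x).1 hx
    have hl : Finsupp.linearCombination R (↑) l ∈ span R (((↑) : s → M) '' l.support) :=
      (Finsupp.mem_span_image_iff_linearCombination R).2
        ⟨l, (Finsupp.mem_supported R l).2 subset_rfl, rfl⟩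
    exact closure_mono (Set.subset_iUnion c l.support) (hspan _ hl)
  · calc #(⋃ T, c T) ≤ #(Finset s) * ⨆ T, #(c T) := mk_iUnion_le c
      _ ≤ #s * ℵ₀ := by
        rw [mk_finset_of_infinite]
        gcongr
        exact ciSup_le' fun T => (hc T).le_aleph0
      _ = #s := mul_aleph0_eq (aleph0_le_mk s)

theorem stmt4_general {X : Type u} [NormedAddCommGroup X] [NormedSpace ℝ X]
    (κ : Cardinal.{u})
    (hdim : ¬FiniteDimensional ℝ X)
    (hdens_min : ∀ s : Set X, Dense s → κ ≤ Cardinal.mk s)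
    (ε : ℝ) (hε : 0 < ε) :
    (∃ N : Set X, N ⊆ {x : X | ‖x‖ = 1} ∧ Cardinal.mk N = κ ∧
        ∀ x ∈ N, ∀ y ∈ N, x ≠ y → 1 - ε ≤ ‖x - y‖) ∧
    Metric.diam {x : X | ‖x‖ = 1} = 2 := by
  have hsphere : {x : X | ‖x‖ = 1} = sphere 0 1 := by
    ext x
    simp
  rw [hsphere]
  obtain ⟨N, hN⟩ := exists_maximal_pairwise_subset (sphere (0 : X) 1) fun x y => 1 - ε ≤ ‖x - y‖
  have hdense : Dense (span ℝ N : Set X) := dense_span_of_maximal_separated (by linarith) hN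
  obtain ⟨D, hD, hDN⟩ :=
    exists_dense_mk_le_of_dense_span (Set.infinite_of_dense_span hdim hdense) hdense
  obtain ⟨N', hN'N, hN'⟩ := le_mk_iff_exists_subset.1 ((hdens_min D hD).trans hDN)
  have : Nontrivial X := not_subsingleton_iff_nontrivial.1 fun _ => hdim inferInstance
  exact ⟨⟨N', hN'N.trans hN.prop.1, hN', hN.prop.2.mono hN'N⟩, by simp [diam_sphere_eq]⟩

theorem stmt4 {X : Type u} [NormedAddCommGroup X] [NormedSpace ℝ X] [CompleteSpace X]
    (κ : Cardinal.{u}) (hκ : Cardinal.aleph0 ≤ κ)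
    (hdim : ¬FiniteDimensional ℝ X)
    (hdens_ex : ∃ s : Set X, Dense s ∧ Cardinal.mk s = κ)
    (hdens_min : ∀ s : Set X, Dense s → κ ≤ Cardinal.mk s)
    (ε : ℝ) (hε : 0 < ε) :
    (∃ N : Set X, N ⊆ {x : X | ‖x‖ = 1} ∧ Cardinal.mk N = κ ∧
        ∀ x ∈ N, ∀ y ∈ N, x ≠ y → 1 - ε ≤ ‖x - y‖) ∧
    Metric.diam {x : X | ‖x‖ = 1} = 2 :=
  stmt4_general κ hdim hdens_min ε hε
end

section
/- Let X be a Banach space which admits an uncountable Auerbach system {(x_i, x_i*) : i ∈ I} such that {x_i : i ∈ I} ⊆ Y, where Y ⊆ S_X is dichotomous. Then S_X admits an uncountable (1+)-separated set. -/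
/-- A subset `M` of a normed space is dichotomous if for every `r` with
`0 < r ≤ diam M`, either `M` admits an uncountable `(r+)`-separated subset,
or `M` is the union of countably many sets each of diameter at most `r`. -/
def Dichotomous {X : Type*} [NormedAddCommGroup X] (M : Set X) : Prop :=
  ∀ r : ℝ, 0 < r → r ≤ Metric.diam M →
    (∃ N ⊆ M, ¬N.Countable ∧ ∀ x ∈ N, ∀ y ∈ N, x ≠ y → r < ‖x - y‖) ∨
    (∃ f : ℕ → Set X, (⋃ n, f n) = M ∧ ∀ n, Metric.diam (f n) ≤ r)

open Set Metric


/-- Key construction: from an uncountable Auerbach subfamily whose vectors are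
pairwise at distance at most 1, build an uncountable (1+)-separated subset of
the unit sphere. -/
theorem aux_construction {X : Type*} [NormedAddCommGroup X] [NormedSpace ℝ X] [CompleteSpace X]
    {I : Type*} (x : I → X) (F : I → X →L[ℝ] ℝ)
    (hx : ∀ i, ‖x i‖ = 1) (hF : ∀ i, ‖F i‖ = 1)
    (hFx : ∀ i, F i (x i) = 1) (hFx' : ∀ i j, i ≠ j → F i (x j) = 0)
    (T : Set I) (hT : ¬T.Countable)
    (hd : ∀ i ∈ T, ∀ j ∈ T, ‖x i - x j‖ ≤ 1) :
    ∃ N : Set X, N ⊆ {z : X | ‖z‖ = 1} ∧ ¬N.Countable ∧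
      ∀ a ∈ N, ∀ b ∈ N, a ≠ b → 1 < ‖a - b‖ := by
  classical
  set W := (Cardinal.aleph 1).ord.ToType with hW
  -- embed W into T
  have hcard : (Cardinal.mk W) = Cardinal.aleph 1 := by
    rw [hW, Cardinal.mk_toType, Cardinal.card_ord]
  have hle : Cardinal.mk W ≤ Cardinal.mk T := by
    rw [hcard]
    by_contra h
    exact hT ((Cardinal.countable_iff_lt_aleph_one (T : Set I)).2 (lt_of_not_ge h))
  obtain ⟨e⟩ := (Cardinal.le_def _ _).1 hle
  set g : W → I := fun w => (e w : I) with hg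
  have hginj : Function.Injective g := fun a b h => e.injective (Subtype.ext h)
  have hgT : ∀ w, g w ∈ T := fun w => (e w).2
  -- countable initial segments, injections to ℕ
  have hIio : ∀ b : W, (Set.Iio b).Countable := fun b => by
    have := Cardinal.mk_Iio_ord_toType b
    rwa [← Cardinal.countable_iff_lt_aleph_one] at this
  have hn : ∀ b : W, ∃ f : (Set.Iio b) → ℕ, Function.Injective f := fun b => by
    have : Countable (Set.Iio b) := (hIio b).to_subtype
    exact Countable.exists_injective_nat _
  choose n hninj using hn
  -- the coefficients
  set c : ℕ → ℝ := fun k => (1 / 2 : ℝ) ^ k / 4 with hc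
  have hcpos : ∀ k, 0 < c k := fun k => by positivity
  have hcs : Summable c := summable_geometric_two.div_const 4
  have hctsum : ∑' k, c k = 1 / 2 := by
    rw [hc]
    rw [tsum_div_const, tsum_geometric_two]
    norm_num
  -- coefficient families
  have hScn : ∀ b : W, Summable (fun a : Set.Iio b => c (n b a)) := fun b =>
    hcs.comp_injective (hninj b)
  have hSx : ∀ b : W, Summable (fun a : Set.Iio b => c (n b a) • x (g a)) := fun b => by
    refine Summable.of_norm_bounded (hScn b) fun a => ?_
    rw [norm_smul, hx, Real.norm_eq_abs, abs_of_pos (hcpos _), mul_one]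
  set y : W → X := fun b => x (g b) - ∑' a : Set.Iio b, c (n b a) • x (g a) with hy
  set t : W → ℝ := fun b => ∑' a : Set.Iio b, c (n b a) with ht
  have htnonneg : ∀ b, 0 ≤ t b := fun b => tsum_nonneg fun a => (hcpos _).le
  have htle : ∀ b, t b ≤ 1 / 2 := fun b => by
    have := Summable.tsum_le_tsum_of_inj (n b) (hninj b) (fun k _ => (hcpos k).le)
      (fun a => le_refl (c (n b a))) (hScn b) hcs
    rw [hctsum] at this
    exact this
  -- functional values
  have hFy_self : ∀ b : W, F (g b) (y b) = 1 := fun b => by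
    rw [hy]
    simp only [map_sub, hFx]
    rw [ContinuousLinearMap.map_tsum _ (hSx b)]
    have : ∀ a : Set.Iio b, F (g b) (c (n b a) • x (g a)) = 0 := fun a => by
      rw [map_smul, hFx' (g b) (g a) (fun h => (ne_of_lt a.2) (hginj h).symm), smul_zero]
    rw [tsum_congr this, tsum_zero, sub_zero]
  have hFy_other : ∀ (a b : W) (hab : a < b), F (g a) (y b) = -(c (n b ⟨a, hab⟩)) := by
    intro a b hab
    rw [hy]
    simp only [map_sub]
    rw [hFx' (g a) (g b) (fun h => (ne_of_lt hab) (hginj h))]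
    rw [ContinuousLinearMap.map_tsum _ (hSx b)]
    rw [tsum_eq_single (⟨a, hab⟩ : Set.Iio b) ?_]
    · rw [map_smul, hFx (g a), smul_eq_mul, mul_one, zero_sub]
    · intro a' ha'
      rw [map_smul, hFx' (g a) (g a') (fun h => ha' (Subtype.ext (hginj h).symm)), smul_zero]
  -- norm one
  have hnormy : ∀ b : W, ‖y b‖ = 1 := by
    intro b
    refine le_antisymm ?_ ?_
    · have key : y b = (1 - t b) • x (g b) +
          ∑' a : Set.Iio b, c (n b a) • (x (g b) - x (g a)) := by
        have hS1 : Summable (fun a : Set.Iio b => c (n b a) • x (g b)) :=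
          (hScn b).smul_const _
        have : (∑' a : Set.Iio b, c (n b a) • (x (g b) - x (g a)))
            = (∑' a : Set.Iio b, c (n b a) • x (g b))
              - ∑' a : Set.Iio b, c (n b a) • x (g a) := by
          rw [← Summable.tsum_sub hS1 (hSx b)]
          exact tsum_congr fun a => smul_sub _ _ _
        simp only [hy, ht]
        rw [this, Summable.tsum_smul_const (hScn b), sub_smul, one_smul]
        abel
      rw [key]
      have h1 : ‖(1 - t b) • x (g b)‖ = 1 - t b := by
        rw [norm_smul, hx, mul_one, Real.norm_eq_abs, abs_of_nonneg]
        linarith [htle b]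
      have hnorms : Summable (fun a : Set.Iio b => ‖c (n b a) • (x (g b) - x (g a))‖) := by
        refine Summable.of_nonneg_of_le (fun a => norm_nonneg _) (fun a => ?_) (hScn b)
        rw [norm_smul, Real.norm_eq_abs, abs_of_pos (hcpos _)]
        calc c (n b a) * ‖x (g b) - x (g a)‖ ≤ c (n b a) * 1 := by
              exact mul_le_mul_of_nonneg_left (hd _ (hgT b) _ (hgT a)) (hcpos _).le
          _ = c (n b a) := mul_one _
      have h2 : ‖∑' a : Set.Iio b, c (n b a) • (x (g b) - x (g a))‖ ≤ t b := by
        refine le_trans (norm_tsum_le_tsum_norm hnorms) ?_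
        refine Summable.tsum_le_tsum (fun a => ?_) hnorms (hScn b)
        rw [norm_smul, Real.norm_eq_abs, abs_of_pos (hcpos _)]
        calc c (n b a) * ‖x (g b) - x (g a)‖ ≤ c (n b a) * 1 :=
              mul_le_mul_of_nonneg_left (hd _ (hgT b) _ (hgT a)) (hcpos _).le
          _ = c (n b a) := mul_one _
      calc ‖(1 - t b) • x (g b) + ∑' a : Set.Iio b, c (n b a) • (x (g b) - x (g a))‖
          ≤ ‖(1 - t b) • x (g b)‖ + ‖∑' a : Set.Iio b, c (n b a) • (x (g b) - x (g a))‖ :=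
            norm_add_le _ _
        _ ≤ (1 - t b) + t b := by rw [h1]; exact add_le_add_right h2 _
        _ = 1 := by ring
    · have := (F (g b)).le_opNorm (y b)
      rw [hF, one_mul, hFy_self b] at this
      simpa using this
  -- separation
  have hsep : ∀ a b : W, a < b → 1 < ‖y a - y b‖ := by
    intro a b hab
    have hfab : F (g a) (y a - y b) = 1 + c (n b ⟨a, hab⟩) := by
      rw [map_sub, hFy_self a, hFy_other a b hab]
      ring
    have h1 : (1 : ℝ) + c (n b ⟨a, hab⟩) ≤ ‖y a - y b‖ := by
      have := (F (g a)).le_opNorm (y a - y b)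
      rw [hF, one_mul, hfab] at this
      calc (1 : ℝ) + c (n b ⟨a, hab⟩) ≤ ‖(1 : ℝ) + c (n b ⟨a, hab⟩)‖ := le_abs_self _
        _ ≤ ‖y a - y b‖ := this
    linarith [hcpos (n b ⟨a, hab⟩)]
  have hyinj : Function.Injective y := by
    intro a b hab
    by_contra h
    rcases lt_or_gt_of_ne h with h' | h'
    · have := hsep a b h'
      rw [hab, sub_self, norm_zero] at this
      linarith
    · have := hsep b a h'
      rw [hab, sub_self, norm_zero] at this
      linarith
  refine ⟨Set.range y, ?_, ?_, ?_⟩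
  · rintro z ⟨b, rfl⟩
    exact hnormy b
  · intro hcnt
    have : (y ⁻¹' Set.range y).Countable := hcnt.preimage hyinj
    rw [Set.preimage_range] at this
    have hW2 : Countable W := Set.countable_univ_iff.1 this
    have : Cardinal.mk W ≤ Cardinal.aleph0 := Cardinal.mk_le_aleph0_iff.2 hW2
    rw [hcard] at this
    exact absurd this (not_le.2 Cardinal.aleph0_lt_aleph_one)
  · rintro za ⟨a, rfl⟩ zb ⟨b, rfl⟩ hne
    have hab : a ≠ b := fun h => hne (by rw [h])
    rcases lt_or_gt_of_ne hab with h' | h'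
    · exact hsep a b h'
    · rw [norm_sub_rev]; exact hsep b a h'

theorem stmt5 {X : Type*} [NormedAddCommGroup X] [NormedSpace ℝ X] [CompleteSpace X]
    {I : Type*} [Uncountable I] (x : I → X) (F : I → X →L[ℝ] ℝ)
    (hx : ∀ i, ‖x i‖ = 1) (hF : ∀ i, ‖F i‖ = 1)
    (hFx : ∀ i, F i (x i) = 1) (hFx' : ∀ i j, i ≠ j → F i (x j) = 0)
    (Y : Set X) (hY : Y ⊆ {z : X | ‖z‖ = 1}) (hxY : ∀ i, x i ∈ Y)
    (hdich : Dichotomous Y) :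
    ∃ N : Set X, N ⊆ {z : X | ‖z‖ = 1} ∧ ¬N.Countable ∧
      ∀ a ∈ N, ∀ b ∈ N, a ≠ b → 1 < ‖a - b‖ := by
  classical
  have hYb : Bornology.IsBounded Y := by
    refine (Metric.isBounded_closedBall (x := (0 : X)) (r := 1)).subset fun z hz => ?_
    have := hY hz
    simp only [Set.mem_setOf_eq] at this
    simp [Metric.mem_closedBall, dist_zero_right, this.le]
  -- two distinct indices
  obtain ⟨i₀, j₀, hij⟩ := exists_pair_ne I
  have hdist : ∀ i j : I, i ≠ j → 1 ≤ ‖x i - x j‖ := by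
    intro i j h
    have h1 : F i (x i - x j) = 1 := by rw [map_sub, hFx, hFx' i j h, sub_zero]
    have := (F i).le_opNorm (x i - x j)
    rw [hF, one_mul, h1] at this
    simpa using this
  have hdiam : (1 : ℝ) ≤ Metric.diam Y := by
    have h1 : dist (x i₀) (x j₀) ≤ Metric.diam Y :=
      Metric.dist_le_diam_of_mem hYb (hxY i₀) (hxY j₀)
    have h2 := hdist i₀ j₀ hij
    rw [dist_eq_norm] at h1
    linarith
  rcases hdich 1 one_pos hdiam with ⟨N, hNY, hNc, hNsep⟩ | ⟨f, hfY, hfd⟩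
  · exact ⟨N, fun z hz => hY (hNY hz), hNc, hNsep⟩
  · -- find an uncountable fiber
    have hxinj : Function.Injective x := by
      intro i j h
      by_contra hne
      have := hdist i j hne
      rw [h, sub_self, norm_zero] at this
      linarith
    have hcover : (Set.univ : Set I) = ⋃ n, {i | x i ∈ f n} := by
      ext i
      simp only [Set.mem_univ, Set.mem_iUnion, Set.mem_setOf_eq, true_iff]
      have : x i ∈ ⋃ n, f n := by rw [hfY]; exact hxY i
      simpa using this
    have huncount : ¬(Set.univ : Set I).Countable := by
      rw [Set.countable_univ_iff]
      exact not_countable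
    obtain ⟨m, hm⟩ : ∃ m, ¬({i | x i ∈ f m} : Set I).Countable := by
      by_contra h
      push_neg at h
      exact huncount (hcover ▸ Set.countable_iUnion h)
    refine aux_construction x F hx hF hFx hFx' {i | x i ∈ f m} hm ?_
    intro i hi j hj
    have hfb : Bornology.IsBounded (f m) := by
      refine hYb.subset ?_
      rw [← hfY]
      exact Set.subset_iUnion f m
    have := Metric.dist_le_diam_of_mem hfb hi hj
    rw [dist_eq_norm] at this
    exact this.trans (hfd m)
end

section
/- Let M be a set with d : [M]² → ℝ₊. If M is uncountable, bounded, and almost dichotomous with k⁺(M) = σ(M) = s > 0, then for every ε > 0 the set M contains an uncountable subset N which is ε-approximately s-equilateral. -/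
/-- `M` admits an uncountable `(r+)`-separated subset (w.r.t. the distance `d`). -/
def USep {M : Type*} (d : M → M → ℝ) (r : ℝ) : Prop :=
  ∃ N : Set M, ¬N.Countable ∧ ∀ x ∈ N, ∀ y ∈ N, x ≠ y → r < d x y

/-- `M` is the union of countably many sets each of diameter at most `r`
(w.r.t. the distance `d`). -/
def CCover {M : Type*} (d : M → M → ℝ) (r : ℝ) : Prop :=
  ∃ f : ℕ → Set M, (⋃ n, f n) = Set.univ ∧
    ∀ n, ∀ x ∈ f n, ∀ y ∈ f n, x ≠ y → d x y ≤ r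

/-- The diameter of `M` w.r.t `d` : the supremum of the distances between
distinct points. -/
noncomputable def diamd {M : Type*} (d : M → M → ℝ) : ℝ :=
  sSup {t : ℝ | ∃ x y : M, x ≠ y ∧ d x y = t}

/-
Take `a > s - ε` with an uncountable `(a+)`-separated set `A`, and `b < s + ε` with a countable
cover of `M` by sets of diameter at most `b`. Some piece of the cover meets `A` uncountably, and on
that intersection all distances lie in `(a, b]`.
-/

/-- Since `sSup ∅ = 0` in `ℝ`, a positive supremum forces `S` to be nonempty. -/
lemma exists_gt_mem_of_sSup_eq_pos {S : Set ℝ} {s t : ℝ} (hS : sSup S = s) (hs : 0 < s)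
    (ht : t < s) : ∃ a ∈ S, t < a := by
  have hne : S.Nonempty := by
    by_contra h
    rw [Set.not_nonempty_iff_eq_empty.mp h, Real.sSup_empty] at hS
    exact hs.ne hS
  exact exists_lt_of_lt_csSup hne (hS ▸ ht)

lemma exists_lt_mem_of_sInf_eq_pos {S : Set ℝ} {s t : ℝ} (hS : sInf S = s) (hs : 0 < s)
    (ht : s < t) : ∃ b ∈ S, b < t := by
  have hne : S.Nonempty := by
    by_contra h
    rw [Set.not_nonempty_iff_eq_empty.mp h, Real.sInf_empty] at hS
    exact hs.ne hS
  exact exists_lt_of_csInf_lt hne (hS ▸ ht)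

lemma exists_not_countable_inter_of_iUnion_eq_univ {α : Type*} {A : Set α} (hA : ¬A.Countable)
    {f : ℕ → Set α} (hf : ⋃ n, f n = Set.univ) : ∃ n, ¬(A ∩ f n).Countable := by
  by_contra! h
  apply hA
  rw [← Set.inter_univ A, ← hf, Set.inter_iUnion]
  exact Set.countable_iUnion h

lemma USep.exists_not_countable_of_cCover {M : Type*} {d : M → M → ℝ} {a b : ℝ}
    (ha : USep d a) (hb : CCover d b) :
    ∃ N : Set M, ¬N.Countable ∧ ∀ x ∈ N, ∀ y ∈ N, x ≠ y → a < d x y ∧ d x y ≤ b := by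
  obtain ⟨A, hAc, hA⟩ := ha
  obtain ⟨f, hfU, hf⟩ := hb
  obtain ⟨n, hn⟩ := exists_not_countable_inter_of_iUnion_eq_univ hAc hfU
  exact ⟨A ∩ f n, hn, fun x hx y hy hxy => ⟨hA x hx.1 y hy.1 hxy, hf n x hx.2 y hy.2 hxy⟩⟩

theorem stmt6_general {M : Type*} (d : M → M → ℝ)
    (s : ℝ) (hs : 0 < s)
    (hk : sSup {r : ℝ | 0 ≤ r ∧ USep d r} = s)
    (hσ : sInf {r : ℝ | 0 ≤ r ∧ CCover d r} = s) :
    ∀ ε > (0 : ℝ), ∃ N : Set M, ¬N.Countable ∧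
      ∀ x ∈ N, ∀ y ∈ N, x ≠ y → s - ε < d x y ∧ d x y < s + ε := by
  intro ε hε
  obtain ⟨a, ⟨-, ha⟩, hsa⟩ := exists_gt_mem_of_sSup_eq_pos hk hs (sub_lt_self s hε)
  obtain ⟨b, ⟨-, hb⟩, hbs⟩ := exists_lt_mem_of_sInf_eq_pos hσ hs (lt_add_of_pos_right s hε)
  obtain ⟨N, hN, hdist⟩ := ha.exists_not_countable_of_cCover hb
  exact ⟨N, hN, fun x hx y hy hxy =>
    ⟨hsa.trans (hdist x hx y hy hxy).1, (hdist x hx y hy hxy).2.trans_lt hbs⟩⟩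

theorem stmt6 {M : Type*} (d : M → M → ℝ)
    (hsymm : ∀ x y : M, d x y = d y x)
    (hpos : ∀ x y : M, x ≠ y → 0 < d x y)
    (huncount : ¬(Set.univ : Set M).Countable)
    (hbdd : ∃ C : ℝ, ∀ x y : M, x ≠ y → d x y ≤ C)
    (halmost : ∃ r₀ : ℝ, ∀ r : ℝ, 0 < r → r ≤ diamd d → r ≠ r₀ → USep d r ∨ CCover d r)
    (s : ℝ) (hs : 0 < s)
    (hk : sSup {r : ℝ | 0 ≤ r ∧ USep d r} = s)
    (hσ : sInf {r : ℝ | 0 ≤ r ∧ CCover d r} = s) :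
    ∀ ε > (0 : ℝ), ∃ N : Set M, ¬N.Countable ∧
      ∀ x ∈ N, ∀ y ∈ N, x ≠ y → s - ε < d x y ∧ d x y < s + ε :=
  stmt6_general d s hs hk hσ
end

section
/- Suppose X is a nonseparable Banach space whose unit sphere S_X is almost dichotomous. Then for every ε > 0 the unit sphere S_X admits an uncountable ε-approximately 1-equilateral set. -/
open Metric Set TopologicalSpace Bornology
set_option linter.unusedSectionVars false

/-- `M` admits an uncountable `(s+)`-separated subset. -/
def SepSet {X : Type*} [NormedAddCommGroup X] (M : Set X) (s : ℝ) : Prop :=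
  ∃ N ⊆ M, ¬N.Countable ∧ ∀ x ∈ N, ∀ y ∈ N, x ≠ y → s < ‖x - y‖

section aux
variable {X : Type*} [NormedAddCommGroup X] [NormedSpace ℝ X]

lemma aux_two {α : Type*} {s : Set α} (hs : ¬ s.Countable) :
    ∃ x ∈ s, ∃ y ∈ s, x ≠ y := by
  by_contra h
  push_neg at h
  exact hs (Set.Subsingleton.countable (fun x hx y hy => h x hx y hy))

lemma aux_pigeon {α : Type*} {s : Set α} (hs : ¬ s.Countable) (f : ℕ → Set α)
    (hcov : s ⊆ ⋃ n, f n) : ∃ n, ¬ (s ∩ f n).Countable := by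
  by_contra h
  push_neg at h
  apply hs
  have he : s = ⋃ n, s ∩ f n := by
    apply Set.Subset.antisymm
    · intro x hx
      rcases Set.mem_iUnion.1 (hcov hx) with ⟨n, hn⟩
      exact Set.mem_iUnion.2 ⟨n, hx, hn⟩
    · exact Set.iUnion_subset fun n => Set.inter_subset_left
  rw [he]
  exact Set.countable_iUnion h

lemma aux_norm (u v : X) (hu : u ≠ 0) (hv : v ≠ 0) :
    ‖u - v‖ - |‖u‖ - ‖v‖| ≤ ‖v‖ * ‖‖u‖⁻¹ • u - ‖v‖⁻¹ • v‖ ∧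
    ‖v‖ * ‖‖u‖⁻¹ • u - ‖v‖⁻¹ • v‖ ≤ ‖u - v‖ + |‖u‖ - ‖v‖| := by
  have hα : (0:ℝ) < ‖u‖ := norm_pos_iff.2 hu
  have hβ : (0:ℝ) < ‖v‖ := norm_pos_iff.2 hv
  have key : ‖u‖⁻¹ • u - ‖v‖⁻¹ • v = ‖v‖⁻¹ • (u - v) + (‖u‖⁻¹ - ‖v‖⁻¹) • u := by
    rw [smul_sub, sub_smul]; abel
  have h1 : ‖v‖ * ‖‖v‖⁻¹ • (u - v)‖ = ‖u - v‖ := by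
    rw [norm_smul, Real.norm_eq_abs, abs_of_pos (by positivity)]
    field_simp
  have h2 : ‖v‖ * ‖(‖u‖⁻¹ - ‖v‖⁻¹) • u‖ = |‖u‖ - ‖v‖| := by
    rw [norm_smul, Real.norm_eq_abs]
    have e : ‖u‖⁻¹ - ‖v‖⁻¹ = (‖v‖ - ‖u‖) / (‖u‖ * ‖v‖) := by field_simp
    have e2 : |‖u‖⁻¹ - ‖v‖⁻¹| = |‖u‖ - ‖v‖| / (‖u‖ * ‖v‖) := by
      rw [e, abs_div, abs_of_pos (mul_pos hα hβ), abs_sub_comm]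
    rw [e2]
    field_simp
  have hup : ‖‖v‖⁻¹ • (u - v) + (‖u‖⁻¹ - ‖v‖⁻¹) • u‖ ≤
      ‖‖v‖⁻¹ • (u - v)‖ + ‖(‖u‖⁻¹ - ‖v‖⁻¹) • u‖ := norm_add_le _ _
  have hlo : ‖‖v‖⁻¹ • (u - v)‖ ≤
      ‖‖v‖⁻¹ • (u - v) + (‖u‖⁻¹ - ‖v‖⁻¹) • u‖ + ‖(‖u‖⁻¹ - ‖v‖⁻¹) • u‖ := by
    have := norm_sub_le (‖v‖⁻¹ • (u - v) + (‖u‖⁻¹ - ‖v‖⁻¹) • u) ((‖u‖⁻¹ - ‖v‖⁻¹) • u)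
    simpa using this
  rw [key]
  constructor
  · nlinarith [mul_le_mul_of_nonneg_left hlo hβ.le]
  · nlinarith [mul_le_mul_of_nonneg_left hup hβ.le]



lemma aux_sep_of_nonsep {A : Set X} (hA : ¬ IsSeparable A) :
    ∃ t : ℝ, 0 < t ∧ ∃ N ⊆ A, ¬ N.Countable ∧
      ∀ x ∈ N, ∀ y ∈ N, x ≠ y → t < ‖x - y‖ := by
  by_contra hcon
  have hcount : ∀ t : ℝ, 0 < t → ∀ N : Set X, N ⊆ A →
      (∀ x ∈ N, ∀ y ∈ N, x ≠ y → t < ‖x - y‖) → N.Countable := by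
    intro t ht N hNA hsep
    by_contra hN
    exact hcon ⟨t, ht, N, hNA, hN, hsep⟩
  have hmax : ∀ n : ℕ, ∃ m : Set X, Maximal
      (· ∈ {N : Set X | N ⊆ A ∧ ∀ x ∈ N, ∀ y ∈ N, x ≠ y → 1/((n:ℝ)+1) < ‖x - y‖}) m := by
    intro n
    apply zorn_subset
    intro c hcS hchain
    refine ⟨⋃₀ c, ⟨?_, ?_⟩, fun s hs => subset_sUnion_of_mem hs⟩
    · exact sUnion_subset fun s hs => (hcS hs).1
    · rintro x hx y hy hxy
      rcases hx with ⟨s₁, hs₁, hx⟩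
      rcases hy with ⟨s₂, hs₂, hy⟩
      rcases hchain.total hs₁ hs₂ with h | h
      · exact (hcS hs₂).2 x (h hx) y hy hxy
      · exact (hcS hs₁).2 x hx y (h hy) hxy
  choose M hM using hmax
  apply hA
  refine ⟨⋃ n, M n, Set.countable_iUnion (fun n =>
    hcount _ (by positivity) _ ((hM n).1.1) ((hM n).1.2)), ?_⟩
  intro x hx
  rw [Metric.mem_closure_iff]
  intro ε hε
  obtain ⟨n, hn⟩ := exists_nat_one_div_lt hε
  -- find y ∈ M n with ‖x - y‖ ≤ 1/(n+1)
  have hy : ∃ y ∈ M n, ‖x - y‖ ≤ 1/((n:ℝ)+1) := by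
    by_contra h
    push_neg at h
    have hxM : x ∉ M n := by
      intro hxM
      have := h x hxM
      simp at this
      linarith [this, one_div_pos.2 (show (0:ℝ) < (n:ℝ)+1 by positivity)]
    have hins : insert x (M n) ∈
        {N : Set X | N ⊆ A ∧ ∀ x ∈ N, ∀ y ∈ N, x ≠ y → 1/((n:ℝ)+1) < ‖x - y‖} := by
      constructor
      · exact insert_subset hx (hM n).1.1
      · rintro a (rfl | ha) b (rfl | hb) hab
        · exact absurd rfl hab
        · exact h b hb
        · rw [norm_sub_rev]; exact h a ha
        · exact (hM n).1.2 a ha b hb hab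
    exact hxM (((hM n).2 hins (subset_insert _ _)) (mem_insert x (M n)))
  obtain ⟨y, hyM, hyd⟩ := hy
  exact ⟨y, Set.mem_iUnion.2 ⟨n, hyM⟩, by rw [dist_eq_norm]; linarith⟩

lemma aux_sphere_nonsep (hnonsep : ¬ SeparableSpace X) :
    ¬ IsSeparable {x : X | ‖x‖ = 1} := by
  rintro ⟨c, hc, hsub⟩
  apply hnonsep
  refine ⟨⟨insert 0 (⋃ q : ℚ, (fun y => (q:ℝ) • y) '' c),
    ((Set.countable_iUnion (fun q => hc.image _)).insert 0), ?_⟩⟩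
  intro x
  rw [Metric.mem_closure_iff]
  intro ε hε
  by_cases hx : x = 0
  · exact ⟨0, Set.mem_insert _ _, by simp [hx, hε]⟩
  · have hnx : 0 < ‖x‖ := norm_pos_iff.2 hx
    have hzS : ‖x‖⁻¹ • x ∈ {x : X | ‖x‖ = 1} := by
      simp only [Set.mem_setOf_eq, norm_smul, Real.norm_eq_abs,
        abs_of_pos (inv_pos.2 hnx)]
      field_simp
    obtain ⟨q, hq⟩ := exists_rat_near ‖x‖ (show (0:ℝ) < min (ε/2) 1 by positivity)
    have hq2 : |‖x‖ - (q:ℝ)| < ε/2 := lt_of_lt_of_le hq (min_le_left _ _)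
    have hq1 : |‖x‖ - (q:ℝ)| < 1 := lt_of_lt_of_le hq (min_le_right _ _)
    have hqb : |(q:ℝ)| ≤ ‖x‖ + 1 := by
      have h1 := abs_sub_abs_le_abs_sub (q:ℝ) ‖x‖
      rw [abs_sub_comm] at h1
      have h2 : |‖x‖| = ‖x‖ := abs_of_pos hnx
      linarith
    have hεd : 0 < ε/(2*(‖x‖+1)) := by positivity
    obtain ⟨y, hyc, hyd⟩ := Metric.mem_closure_iff.1 (hsub hzS) _ hεd
    refine ⟨(q:ℝ) • y, Set.mem_insert_iff.2 (Or.inr (Set.mem_iUnion.2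
      ⟨q, Set.mem_image_of_mem _ hyc⟩)), ?_⟩
    have hxz : x = ‖x‖ • (‖x‖⁻¹ • x) := by
      rw [smul_smul]
      field_simp
      rw [one_smul]
    have hd1 : dist x ((q:ℝ) • (‖x‖⁻¹ • x)) < ε/2 := by
      rw [dist_eq_norm]
      calc ‖x - (q:ℝ) • (‖x‖⁻¹ • x)‖ = ‖(‖x‖ - (q:ℝ)) • (‖x‖⁻¹ • x)‖ := by
            rw [sub_smul]; nth_rewrite 1 [hxz]; rfl
        _ = |‖x‖ - (q:ℝ)| * ‖(‖x‖⁻¹ • x)‖ := by rw [norm_smul, Real.norm_eq_abs]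
        _ = |‖x‖ - (q:ℝ)| := by rw [hzS]; ring
        _ < ε/2 := hq2
    have hd2 : dist ((q:ℝ) • (‖x‖⁻¹ • x)) ((q:ℝ) • y) < ε/2 := by
      rw [dist_eq_norm, ← smul_sub, norm_smul, Real.norm_eq_abs]
      have hzy : ‖‖x‖⁻¹ • x - y‖ < ε/(2*(‖x‖+1)) := by
        rw [← dist_eq_norm]; exact hyd
      calc |(q:ℝ)| * ‖‖x‖⁻¹ • x - y‖ ≤ (‖x‖+1) * ‖‖x‖⁻¹ • x - y‖ :=
            mul_le_mul_of_nonneg_right hqb (norm_nonneg _)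
        _ < (‖x‖+1) * (ε/(2*(‖x‖+1))) := by
            apply mul_lt_mul_of_pos_left hzy (by positivity)
        _ = ε/2 := by field_simp
    calc dist x ((q:ℝ) • y) ≤ dist x ((q:ℝ) • (‖x‖⁻¹ • x)) +
          dist ((q:ℝ) • (‖x‖⁻¹ • x)) ((q:ℝ) • y) := dist_triangle _ _ _
      _ < ε := by linarith



lemma aux_bdd {f : ℕ → Set X} (hfU : (⋃ n, f n) = {x : X | ‖x‖ = 1}) (n : ℕ) :
    IsBounded (f n) := by
  apply (isBounded_closedBall (x := (0:X)) (r := 1)).subset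
  intro x hx
  have hxS : x ∈ {x : X | ‖x‖ = 1} := hfU ▸ Set.mem_iUnion.2 ⟨n, hx⟩
  simp only [Metric.mem_closedBall, dist_zero_right]
  exact le_of_eq hxS

/-- Pigeonhole an uncountable separated set into a countable cover of the sphere. -/
lemma aux_band {p q : ℝ} {f : ℕ → Set X} (hfU : (⋃ n, f n) = {x : X | ‖x‖ = 1})
    (hfd : ∀ n, Metric.diam (f n) ≤ q) (hsep : SepSet {x : X | ‖x‖ = 1} p) :
    ∃ N ⊆ {x : X | ‖x‖ = 1}, ¬N.Countable ∧
      ∀ x ∈ N, ∀ y ∈ N, x ≠ y → p < ‖x - y‖ ∧ ‖x - y‖ ≤ q := by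
  obtain ⟨N, hNS, hNc, hNsep⟩ := hsep
  obtain ⟨n, hn⟩ := aux_pigeon hNc f (hfU ▸ hNS)
  refine ⟨N ∩ f n, fun x hx => hNS hx.1, hn, ?_⟩
  intro x hx y hy hxy
  refine ⟨hNsep x hx.1 y hy.1 hxy, ?_⟩
  rw [← dist_eq_norm]
  exact le_trans (Metric.dist_le_diam_of_mem (aux_bdd hfU n) hx.2 hy.2) (hfd n)

/-- Normalization: an uncountable set on the sphere with distances in a narrow band
`(p, q]` with `q < 2p` yields one with distances in a band around `1`. -/
lemma aux_normalize {p q : ℝ} (hp : 0 < p) (hpq : q < 2*p)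
    {N : Set X} (hNS : N ⊆ {x : X | ‖x‖ = 1}) (hNc : ¬N.Countable)
    (hband : ∀ x ∈ N, ∀ y ∈ N, x ≠ y → p < ‖x - y‖ ∧ ‖x - y‖ ≤ q) :
    ∃ N' ⊆ {x : X | ‖x‖ = 1}, ¬N'.Countable ∧
      ∀ x ∈ N', ∀ y ∈ N', x ≠ y →
        (2*p - q)/q < ‖x - y‖ ∧ ‖x - y‖ < (2*q - p)/p := by
  obtain ⟨x₀, hx₀, w, hw, hx₀w⟩ := aux_two hNc
  have hq : p < q := by
    obtain ⟨h1, h2⟩ := hband x₀ hx₀ w hw hx₀w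
    linarith
  have hq0 : 0 < q := lt_trans hp hq
  set M := N \ {x₀} with hM
  have hMc : ¬ M.Countable := by
    intro h
    exact hNc (((h.insert x₀)).mono (by
      intro z hz
      by_cases hzx : z = x₀
      · exact hzx ▸ mem_insert _ _
      · exact mem_insert_of_mem _ ⟨hz, hzx⟩))
  -- facts about members of M
  have hmem : ∀ y ∈ M, p < ‖y - x₀‖ ∧ ‖y - x₀‖ ≤ q ∧ y - x₀ ≠ 0 := by
    intro y hy
    obtain ⟨h1, h2⟩ := hband y hy.1 x₀ hx₀ (by simpa using hy.2)
    exact ⟨h1, h2, fun h0 => by simp [h0] at h1; linarith⟩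
  set φ : X → X := fun y => ‖y - x₀‖⁻¹ • (y - x₀) with hφ
  have hφS : ∀ y ∈ M, φ y ∈ {x : X | ‖x‖ = 1} := by
    intro y hy
    obtain ⟨h1, h2, h3⟩ := hmem y hy
    have : (0:ℝ) < ‖y - x₀‖ := norm_pos_iff.2 h3
    simp only [Set.mem_setOf_eq, hφ, norm_smul, Real.norm_eq_abs,
      abs_of_pos (inv_pos.2 this)]
    field_simp
  have hkey : ∀ y ∈ M, ∀ z ∈ M, y ≠ z →
      (2*p - q)/q < ‖φ y - φ z‖ ∧ ‖φ y - φ z‖ < (2*q - p)/p := by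
    intro y hy z hz hyz
    obtain ⟨hα1, hα2, hα3⟩ := hmem y hy
    obtain ⟨hβ1, hβ2, hβ3⟩ := hmem z hz
    have hA1 : p < ‖y - z‖ := (hband y hy.1 z hz.1 hyz).1
    have hA2 : ‖y - z‖ ≤ q := (hband y hy.1 z hz.1 hyz).2
    have huv : (y - x₀) - (z - x₀) = y - z := by abel
    have hnn := aux_norm (y - x₀) (z - x₀) hα3 hβ3
    rw [huv] at hnn
    have hB : |‖y - x₀‖ - ‖z - x₀‖| < q - p := by
      rw [abs_sub_lt_iff]
      constructor <;> linarith
    have hD0 : (0:ℝ) ≤ ‖φ y - φ z‖ := norm_nonneg _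
    have hβq : ‖z - x₀‖ ≤ q := hβ2
    constructor
    · rw [div_lt_iff₀ hq0]
      nlinarith [hnn.1]
    · rw [lt_div_iff₀ hp]
      nlinarith [hnn.2]
  have hinj : Set.InjOn φ M := by
    intro y hy z hz hyz
    by_contra hne
    have := (hkey y hy z hz hne).1
    rw [hyz, sub_self, norm_zero] at this
    have h2pq : 0 < (2*p - q)/q := div_pos (by linarith) hq0
    linarith
  refine ⟨φ '' M, ?_, ?_, ?_⟩
  · rintro a ⟨y, hy, rfl⟩
    exact hφS y hy
  · intro h
    exact hMc ((Set.mapsTo_image φ M).countable_of_injOn hinj h)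
  · rintro a ⟨y, hy, rfl⟩ b ⟨z, hz, rfl⟩ hab
    exact hkey y hy z hz (fun h => hab (h ▸ rfl))
lemma aux_step {r t : ℝ} (hr0 : 0 < r) (hr1 : r < 1) (ht : 0 < t)
    {f : ℕ → Set X} (hfU : (⋃ n, f n) = {x : X | ‖x‖ = 1})
    (hfd : ∀ n, Metric.diam (f n) ≤ r)
    (hsep : SepSet {x : X | ‖x‖ = 1} t) :
    SepSet {x : X | ‖x‖ = 1} ((1+r)/(2*r) * t) := by
  obtain ⟨N, hNS, hNc, hNsep⟩ := hsep
  obtain ⟨n, hn⟩ := aux_pigeon hNc f (hfU ▸ hNS)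
  set M : Set X := N ∩ f n with hMdef
  obtain ⟨x₀, hx₀, w, hw, hx₀w⟩ := aux_two hn
  have hdle : ∀ y ∈ M, ∀ z ∈ M, ‖y - z‖ ≤ r := by
    intro y hy z hz
    rw [← dist_eq_norm]
    exact le_trans (Metric.dist_le_diam_of_mem (aux_bdd hfU n) hy.2 hz.2) (hfd n)
  have htr : t < r := by
    have h1 := hNsep x₀ hx₀.1 w hw.1 hx₀w
    have h2 := hdle x₀ hx₀ w hw
    linarith
  set δ : ℝ := t*(1-r)/2 with hδdef
  have hδ : 0 < δ := by
    rw [hδdef]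
    have h1r : 0 < 1 - r := by linarith
    positivity
  set M' : Set X := M \ {x₀} with hM'def
  have hM'c : ¬ M'.Countable := by
    intro h
    exact hn (((h.insert x₀)).mono (by
      intro z hz
      by_cases hzx : z = x₀
      · exact hzx ▸ mem_insert _ _
      · exact mem_insert_of_mem _ ⟨hz, hzx⟩))
  obtain ⟨k, hk⟩ := aux_pigeon hM'c (fun k => {z : X | ⌊‖z - x₀‖/δ⌋₊ = k})
    (fun y _ => Set.mem_iUnion.2 ⟨⌊‖y - x₀‖/δ⌋₊, rfl⟩)
  set M'' : Set X := M' ∩ {z : X | ⌊‖z - x₀‖/δ⌋₊ = k} with hM''def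
  have hmem : ∀ y ∈ M'', t < ‖y - x₀‖ ∧ ‖y - x₀‖ ≤ r ∧ y - x₀ ≠ 0 ∧
      (k:ℝ)*δ ≤ ‖y - x₀‖ ∧ ‖y - x₀‖ < ((k:ℝ)+1)*δ := by
    intro y hy
    have hyM : y ∈ M := hy.1.1
    have hyne : y ≠ x₀ := by simpa using hy.1.2
    have h1 : t < ‖y - x₀‖ := hNsep y hyM.1 x₀ hx₀.1 hyne
    have h2 : ‖y - x₀‖ ≤ r := hdle y hyM x₀ hx₀
    have h3 : y - x₀ ≠ 0 := fun h0 => by simp [h0] at h1; linarith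
    have hfl : ⌊‖y - x₀‖/δ⌋₊ = k := hy.2
    have hd0 : (0:ℝ) ≤ ‖y - x₀‖/δ := by positivity
    have h4 : (k:ℝ) ≤ ‖y - x₀‖/δ := by
      rw [← hfl]; exact Nat.floor_le hd0
    have h5 : ‖y - x₀‖/δ < (k:ℝ)+1 := by
      rw [← hfl]; exact Nat.lt_floor_add_one _
    exact ⟨h1, h2, h3, (le_div_iff₀ hδ).1 h4, (div_lt_iff₀ hδ).1 h5⟩
  set φ : X → X := fun y => ‖y - x₀‖⁻¹ • (y - x₀) with hφ
  have hφS : ∀ y ∈ M'', φ y ∈ {x : X | ‖x‖ = 1} := by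
    intro y hy
    obtain ⟨h1, h2, h3, -⟩ := hmem y hy
    have : (0:ℝ) < ‖y - x₀‖ := norm_pos_iff.2 h3
    simp only [Set.mem_setOf_eq, hφ, norm_smul, Real.norm_eq_abs,
      abs_of_pos (inv_pos.2 this)]
    field_simp
  have hκt : 0 < (1+r)/(2*r) * t := by positivity
  have hkey : ∀ y ∈ M'', ∀ z ∈ M'', y ≠ z →
      (1+r)/(2*r) * t < ‖φ y - φ z‖ := by
    intro y hy z hz hyz
    obtain ⟨hα1, hα2, hα3, hα4, hα5⟩ := hmem y hy
    obtain ⟨hβ1, hβ2, hβ3, hβ4, hβ5⟩ := hmem z hz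
    have hA1 : t < ‖y - z‖ := hNsep y hy.1.1.1 z hz.1.1.1 hyz
    have huv : (y - x₀) - (z - x₀) = y - z := by abel
    have hnn := (aux_norm (y - x₀) (z - x₀) hα3 hβ3).1
    rw [huv] at hnn
    have hB : |‖y - x₀‖ - ‖z - x₀‖| < δ := by
      rw [abs_sub_lt_iff]
      constructor <;> linarith
    have hD0 : (0:ℝ) ≤ ‖φ y - φ z‖ := norm_nonneg _
    -- ‖z-x₀‖ * D ≥ ‖y-z‖ - |...| > t - δ ; and ‖z-x₀‖ ≤ r
    have hstep1 : t - δ < ‖z - x₀‖ * ‖φ y - φ z‖ := by linarith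
    have hstep2 : ‖z - x₀‖ * ‖φ y - φ z‖ ≤ r * ‖φ y - φ z‖ :=
      mul_le_mul_of_nonneg_right hβ2 hD0
    have heq : r * ((1+r)/(2*r) * t) = t - δ := by
      rw [hδdef]; field_simp; ring
    have : r * ((1+r)/(2*r) * t) < r * ‖φ y - φ z‖ := by
      rw [heq]; linarith
    exact lt_of_mul_lt_mul_left this hr0.le
  have hinj : Set.InjOn φ M'' := by
    intro y hy z hz hyz
    by_contra hne
    have := hkey y hy z hz hne
    rw [hyz, sub_self, norm_zero] at this
    linarith
  refine ⟨φ '' M'', ?_, ?_, ?_⟩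
  · rintro a ⟨y, hy, rfl⟩
    exact hφS y hy
  · intro h
    exact hk ((Set.mapsTo_image φ M'').countable_of_injOn hinj h)
  · rintro a ⟨y, hy, rfl⟩ b ⟨z, hz, rfl⟩ hab
    exact hkey y hy z hz (fun h => hab (h ▸ rfl))

lemma aux_nocover (hnsS : ¬ IsSeparable {x : X | ‖x‖ = 1}) {r : ℝ}
    (hr0 : 0 < r) (hr1 : r < 1) :
    ¬ ∃ f : ℕ → Set X, (⋃ n, f n) = {x : X | ‖x‖ = 1} ∧
      ∀ n, Metric.diam (f n) ≤ r := by
  rintro ⟨f, hfU, hfd⟩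
  obtain ⟨t₀, ht₀, N, hNS, hNc, hNsep⟩ := aux_sep_of_nonsep hnsS
  set κ : ℝ := (1+r)/(2*r) with hκdef
  have hκ : 1 < κ := by
    rw [hκdef, lt_div_iff₀ (by positivity)]
    linarith
  have hκ0 : 0 < κ := lt_trans one_pos hκ
  have hstep : ∀ m : ℕ, SepSet {x : X | ‖x‖ = 1} (κ^m * t₀) := by
    intro m
    induction m with
    | zero => rw [pow_zero, one_mul]; exact ⟨N, hNS, hNc, hNsep⟩
    | succ m ih =>
        have := aux_step hr0 hr1 (by positivity : 0 < κ^m * t₀) hfU hfd ih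
        rw [← hκdef] at this
        have he : κ * (κ^m * t₀) = κ^(m+1) * t₀ := by ring
        rwa [he] at this
  obtain ⟨m, hm⟩ := pow_unbounded_of_one_lt (2/t₀) hκ
  obtain ⟨N', hN'S, hN'c, hN'sep⟩ := hstep m
  obtain ⟨x, hx, y, hy, hxy⟩ := aux_two hN'c
  have h1 : ‖x - y‖ ≤ 2 := by
    have hx1 : ‖x‖ = 1 := hN'S hx
    have hy1 : ‖y‖ = 1 := hN'S hy
    calc ‖x - y‖ ≤ ‖x‖ + ‖y‖ := norm_sub_le _ _
      _ = 2 := by rw [hx1, hy1]; norm_num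
  have h2 : 2 < κ^m * t₀ := by
    rw [div_lt_iff₀ ht₀] at hm
    linarith
  have h3 := hN'sep x hx y hy hxy
  linarith

end aux

/-- A subset `M` of a normed space is almost dichotomous if for all but at most one
`r` with `0 < r ≤ diam M`, either `M` admits an uncountable `(r+)`-separated subset,
or `M` is the union of countably many sets each of diameter at most `r`. -/
def AlmostDichotomous {X : Type*} [NormedAddCommGroup X] (M : Set X) : Prop :=
  ∃ r₀ : ℝ, ∀ r : ℝ, 0 < r → r ≤ Metric.diam M → r ≠ r₀ →
    (∃ N ⊆ M, ¬N.Countable ∧ ∀ x ∈ N, ∀ y ∈ N, x ≠ y → r < ‖x - y‖) ∨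
    (∃ f : ℕ → Set X, (⋃ n, f n) = M ∧ ∀ n, Metric.diam (f n) ≤ r)

/- STATEMENT 7: If `X` is a nonseparable Banach space whose unit sphere is almost
dichotomous, then for every `ε > 0` the unit sphere admits an uncountable
`ε`-approximately `1`-equilateral set. -/
theorem stmt7 {X : Type*} [NormedAddCommGroup X] [NormedSpace ℝ X] [CompleteSpace X]
    (hnonsep : ¬TopologicalSpace.SeparableSpace X)
    (hdich : AlmostDichotomous {x : X | ‖x‖ = 1}) :
    ∀ ε > (0 : ℝ), ∃ N ⊆ {x : X | ‖x‖ = 1}, ¬N.Countable ∧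
      ∀ x ∈ N, ∀ y ∈ N, x ≠ y → 1 - ε < ‖x - y‖ ∧ ‖x - y‖ < 1 + ε := by
  intro ε hε
  obtain ⟨r₀, hr₀⟩ := hdich
  have hnsS : ¬ IsSeparable {x : X | ‖x‖ = 1} := aux_sphere_nonsep hnonsep
  have hv : ∃ v : X, v ≠ 0 := by
    by_contra h
    push_neg at h
    exact hnonsep ⟨⟨{0}, countable_singleton 0,
      fun x => by rw [h x]; exact subset_closure rfl⟩⟩
  obtain ⟨v, hv0⟩ := hv
  have hnv : 0 < ‖v‖ := norm_pos_iff.2 hv0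
  have huS : ‖v‖⁻¹ • v ∈ {x : X | ‖x‖ = 1} := by
    simp only [Set.mem_setOf_eq, norm_smul, Real.norm_eq_abs, abs_of_pos (inv_pos.2 hnv)]
    field_simp
  have hdiam : 2 ≤ Metric.diam {x : X | ‖x‖ = 1} := by
    set u := ‖v‖⁻¹ • v with hu
    have hu1 : ‖u‖ = 1 := huS
    have hu2 : -u ∈ {x : X | ‖x‖ = 1} := by
      simp only [Set.mem_setOf_eq, norm_neg]; exact hu1
    have hbdd : IsBounded {x : X | ‖x‖ = 1} :=
      (isBounded_closedBall (x := (0:X)) (r := 1)).subset (fun x hx => by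
        simp only [Metric.mem_closedBall, dist_zero_right]; exact le_of_eq hx)
    have hd : dist u (-u) = 2 := by
      rw [dist_eq_norm, sub_neg_eq_add, ← two_smul ℝ u, norm_smul, hu1]
      norm_num
    calc (2:ℝ) = dist u (-u) := hd.symm
      _ ≤ Metric.diam {x : X | ‖x‖ = 1} := Metric.dist_le_diam_of_mem hbdd huS hu2
  have hP : ∀ s : ℝ, 0 < s → s < 1 → s ≠ r₀ → SepSet {x : X | ‖x‖ = 1} s := by
    intro s h0 h1 hne
    exact (hr₀ s h0 (by linarith) hne).resolve_right (aux_nocover hnsS h0 h1)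
  have pick : ∀ a b : ℝ, a < b → ∃ x, a < x ∧ x < b ∧ x ≠ r₀ := by
    intro a b hab
    rcases ne_or_eq ((a+b)/2) r₀ with h | h
    · exact ⟨(a+b)/2, by linarith, by linarith, h⟩
    · refine ⟨(a + (a+b)/2)/2, by linarith, by linarith, fun he => ?_⟩
      have := he.trans h.symm
      linarith
  set T : Set ℝ := {s : ℝ | 0 < s ∧ SepSet {x : X | ‖x‖ = 1} s} with hT
  have hT2 : ∀ s ∈ T, s ≤ 2 := by
    rintro s ⟨hs0, N, hNS, hNc, hsep⟩
    obtain ⟨x, hx, y, hy, hxy⟩ := aux_two hNc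
    have hx1 : ‖x‖ = 1 := hNS hx
    have hy1 : ‖y‖ = 1 := hNS hy
    have h1 : ‖x - y‖ ≤ 2 := by
      calc ‖x - y‖ ≤ ‖x‖ + ‖y‖ := norm_sub_le _ _
        _ = 2 := by rw [hx1, hy1]; norm_num
    have := hsep x hx y hy hxy
    linarith
  have hTne : T.Nonempty := by
    obtain ⟨x, hx1, hx2, hx3⟩ := pick (1/2) 1 (by norm_num)
    exact ⟨x, by linarith, hP x (by linarith) hx2 hx3⟩
  have hTbdd : BddAbove T := ⟨2, hT2⟩
  set σ : ℝ := sSup T with hσ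
  have hσ2 : σ ≤ 2 := csSup_le hTne hT2
  have hσ1 : 1 ≤ σ := by
    by_contra h
    push_neg at h
    obtain ⟨x, hx1, hx2, hx3⟩ := pick (max σ (1/2)) 1 (max_lt h (by norm_num))
    have hhalf : (1:ℝ)/2 < x := lt_of_le_of_lt (le_max_right σ (1/2)) hx1
    have hxT : x ∈ T := ⟨by linarith, hP x (by linarith) hx2 hx3⟩
    have h1 := le_csSup hTbdd hxT
    have h2 : σ < x := lt_of_le_of_lt (le_max_left σ (1/2)) hx1
    linarith
  set τ : ℝ := min ε 1 / 16 with hτdef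
  have hmin : 0 < min ε 1 := lt_min hε one_pos
  have hτ0 : 0 < τ := by rw [hτdef]; linarith
  have hτε : 16 * τ ≤ ε := by
    rw [hτdef]; have := min_le_left ε 1; linarith
  have hτ1 : 16 * τ ≤ 1 := by
    rw [hτdef]; have := min_le_right ε 1; linarith
  by_cases hcase : ∃ s' ∈ T, 2 - τ < s'
  · -- there are uncountable sets separated by almost 2; normalize differences
    obtain ⟨s', hs'T, hs'2⟩ := hcase
    obtain ⟨hs'0, N, hNS, hNc, hNsep⟩ := hs'T
    have hband : ∀ x ∈ N, ∀ y ∈ N, x ≠ y → s' < ‖x - y‖ ∧ ‖x - y‖ ≤ 2 := by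
      intro x hx y hy hxy
      refine ⟨hNsep x hx y hy hxy, ?_⟩
      have hx1 : ‖x‖ = 1 := hNS hx
      have hy1 : ‖y‖ = 1 := hNS hy
      calc ‖x - y‖ ≤ ‖x‖ + ‖y‖ := norm_sub_le _ _
        _ = 2 := by rw [hx1, hy1]; norm_num
    have hpq : (2:ℝ) < 2 * s' := by linarith
    obtain ⟨N', hN'S, hN'c, hN'key⟩ := aux_normalize hs'0 hpq hNS hNc hband
    refine ⟨N', hN'S, hN'c, ?_⟩
    intro x hx y hy hxy
    obtain ⟨hlo, hhi⟩ := hN'key x hx y hy hxy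
    constructor
    · refine lt_trans ?_ hlo
      rw [lt_div_iff₀ (by norm_num : (0:ℝ) < 2)]
      nlinarith
    · refine lt_trans hhi ?_
      rw [div_lt_iff₀ hs'0]
      nlinarith [mul_lt_mul_of_pos_left hs'2 hε,
        mul_le_mul_of_nonneg_left (show τ ≤ 1/16 by linarith) hε.le]
  · -- the supremum σ < 2 is approached from below and a cover exists just above it
    push_neg at hcase
    have hσle : σ ≤ 2 - τ := csSup_le hTne hcase
    obtain ⟨s, hs1, hs2, hs3⟩ := pick σ (min 2 (σ + τ))
      (lt_min (by linarith) (by linarith))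
    have hslt2 : s < 2 := lt_of_lt_of_le hs2 (min_le_left _ _)
    have hsltστ : s < σ + τ := lt_of_lt_of_le hs2 (min_le_right _ _)
    have hs0 : 0 < s := by linarith
    have hnot : ¬ (∃ N ⊆ {x : X | ‖x‖ = 1}, ¬N.Countable ∧
        ∀ x ∈ N, ∀ y ∈ N, x ≠ y → s < ‖x - y‖) := by
      intro h
      have hsT : s ∈ T := ⟨hs0, h⟩
      have := le_csSup hTbdd hsT
      linarith
    have hcov := (hr₀ s hs0 (by linarith) hs3).resolve_left hnot
    obtain ⟨f, hfU, hfd⟩ := hcov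
    obtain ⟨s', hs'T, hs'gt⟩ := exists_lt_of_lt_csSup hTne
      (show σ - τ < σ by linarith)
    have hs'σ : s' ≤ σ := le_csSup hTbdd hs'T
    obtain ⟨N, hNS, hNc, hband⟩ := aux_band hfU hfd hs'T.2
    have hp0 : 0 < s' := hs'T.1
    have hpq : s < 2 * s' := by linarith
    obtain ⟨N', hN'S, hN'c, hN'key⟩ := aux_normalize hp0 hpq hNS hNc hband
    refine ⟨N', hN'S, hN'c, ?_⟩
    intro x hx y hy hxy
    obtain ⟨hlo, hhi⟩ := hN'key x hx y hy hxy
    constructor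
    · refine lt_trans ?_ hlo
      rw [lt_div_iff₀ hs0]
      nlinarith [mul_lt_mul_of_pos_left hs1 hε,
        mul_le_mul_of_nonneg_left hσ1 hε.le]
    · refine lt_trans hhi ?_
      rw [div_lt_iff₀ hp0]
      nlinarith [mul_lt_mul_of_pos_left hs'gt hε,
        mul_le_mul_of_nonneg_left hσ1 hε.le,
        mul_le_mul_of_nonneg_left (show τ ≤ 1/16 by linarith) hε.le]
end

section
/- For a nonseparable Banach space X the following are equivalent: (1) X is hyperlateral; (2) for every s > 0 there is ε > 0 such that no uncountable s-separated set Y ⊆ X contains an uncountable ε-approximately equilateral subset; (3) the unit sphere S_X is hyperlateral; (4) for every r with 0 < r ≤ 2 there is ε > 0 such that there is no uncountable Y ⊆ S_X with r − ε < ‖y − y'‖ < r + ε for all distinct y, y' ∈ Y; (5) there is ε > 0 such that there is no uncountable Y ⊆ S_X with 1 − ε < ‖y − y'‖ < 1 + ε for all distinct y, y' ∈ Y. -/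
section

variable {X : Type*} [NormedAddCommGroup X]

/-- `N` is `s`-separated: all distances between distinct points are at least `s`. -/
def IsSep (N : Set X) (s : ℝ) : Prop :=
  ∀ x ∈ N, ∀ y ∈ N, x ≠ y → s ≤ ‖x - y‖

/-- `N` is `ε`-approximately `r`-equilateral: all distances between distinct points
lie strictly between `r - ε` and `r + ε`. -/
def ApproxEquilateral (N : Set X) (ε r : ℝ) : Prop :=
  ∀ x ∈ N, ∀ y ∈ N, x ≠ y → r - ε < ‖x - y‖ ∧ ‖x - y‖ < r + ε

/-- `M` is hyperlateral if for every uncountable separated `N ⊆ M` there is `ε > 0`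
such that `N` contains no uncountable `ε`-approximately equilateral subset. -/
def Hyperlateral (M : Set X) : Prop :=
  ∀ N ⊆ M, ¬N.Countable → (∃ s > (0 : ℝ), IsSep N s) →
    ∃ ε > (0 : ℝ), ¬∃ N' ⊆ N, ¬N'.Countable ∧ ∃ r > (0 : ℝ), ApproxEquilateral N' ε r

/-!
If `N` is `ε`-approximately `r`-equilateral with `3ε < r`, fix `x₀ ∈ N` and project the points
`y - x₀` (`y ∈ N`, `y ≠ x₀`) radially onto the unit sphere: since all of `‖y - x₀‖`, `‖y' - x₀‖`
and `‖y - y'‖` are within `ε` of `r`, the projections are `3ε / r`-approximately `1`-equilateral.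
Hence condition (5) controls approximately equilateral sets at every scale, which gives (2).

Conversely, if a hyperlateral set `M` contained, for every `n`, an uncountable
`1/(n+1)`-approximately `r`-equilateral set `Yₙ`, one could thin the `Yₙ` to uncountable
`Sₙ ⊆ Yₙ` whose union is still separated, by choosing points one at a time along `ω₁ × ω`, each
avoiding the countably many points near those already chosen; the union `⋃ Sₙ` contradicts
hyperlaterality of `M`.
-/

open Cardinal Set

theorem Set.InjOn.not_countable_image {α β : Type*} {f : α → β} {s : Set α} (hf : InjOn f s)
    (hs : ¬s.Countable) : ¬(f '' s).Countable :=
  fun h => hs ((mapsTo_image f s).countable_of_injOn hf h)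

section Transfinite

variable {α W : Type*}

theorem exists_forall_mem_diff_image_Iio [LinearOrder W] [WellFoundedLT W]
    (hW : ∀ a : W, (Iio a).Countable) (T : W → Set α) (F : Set α → Set α)
    (hTF : ∀ a P, P.Countable → (T a \ F P).Nonempty) :
    ∃ f : W → α, ∀ a, f a ∈ T a \ F (f '' Iio a) := by
  let pick : ∀ a, (∀ b < a, α) → α := fun a g =>
    (hTF a (range fun b : Iio a => g b b.2) (haveI := (hW a).to_subtype; countable_range _)).some
  let f : W → α := wellFounded_lt.fix pick
  refine ⟨f, fun a => ?_⟩
  rw [show f a = pick a fun b _ => f b from wellFounded_lt.fix_eq pick a, image_eq_range]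
  exact Nonempty.some_mem _

theorem Prod.Lex.countable_Iio {β : Type*} [LinearOrder W] [Preorder β] [Countable β]
    (hW : ∀ a : W, (Iio a).Countable) (x : W ×ₗ β) : (Iio x).Countable := by
  have hIic : (Iic (ofLex x).1).Countable := Iio_insert (a := (ofLex x).1) ▸ (hW _).insert _
  refine ((hIic.prod countable_univ).image toLex).mono fun y hy => ?_
  refine ⟨ofLex y, ⟨?_, mem_univ _⟩, rfl⟩
  rcases Prod.Lex.lt_iff.1 hy with h | ⟨h, -⟩
  exacts [h.le, h.le]

theorem countable_Iio_aleph_one_ord_toType (a : (ℵ₁ : Cardinal.{0}).ord.ToType) :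
    (Iio a).Countable := by
  rw [← le_aleph0_iff_set_countable, ← lt_aleph_one_iff]
  simpa using mk_Iio_lt a (by simp)

instance : Uncountable (ℵ₁ : Cardinal.{0}).ord.ToType := by
  rw [← aleph0_lt_mk_iff, mk_ord_toType]
  exact aleph0_lt_aleph_one

theorem Prod.Lex.not_countable_setOf_snd_eq {β : Type*} [Uncountable W] (b : β) :
    ¬{w : W ×ₗ β | (ofLex w).2 = b}.Countable := fun hc => by
  have hfib : (fun a => toLex (a, b)) ⁻¹' {w : W ×ₗ β | (ofLex w).2 = b} = Set.univ :=
    eq_univ_of_forall fun _ => rfl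
  exact not_countable_univ (hfib ▸ hc.preimage fun a a' h => congrArg Prod.fst (toLex.injective h))

theorem exists_uncountable_subsets_pairwise_not_rel {R : α → α → Prop} [Std.Symm R]
    (Y : ℕ → Set α) (hY : ∀ n, ¬(Y n).Countable) (hRY : ∀ n x, {y ∈ Y n | R x y}.Countable) :
    ∃ S : ℕ → Set α, (∀ n, S n ⊆ Y n) ∧ (∀ n, ¬(S n).Countable) ∧
      (⋃ n, S n).Pairwise fun x y => ¬R x y := by
  let F : Set α → Set α := fun P => P ∪ ⋃ p ∈ P, ⋃ n, {y ∈ Y n | R p y}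
  have hF : ∀ P, P.Countable → (F P).Countable := fun P hP =>
    hP.union (hP.biUnion fun p _ => countable_iUnion fun n => hRY n p)
  -- Along `ω₁ ×ₗ ℕ` every `Y n` is visited uncountably often, yet each stage has only countably
  -- many predecessors to avoid.
  obtain ⟨f, hf⟩ := exists_forall_mem_diff_image_Iio (W := (ℵ₁ : Cardinal.{0}).ord.ToType ×ₗ ℕ)
    (Prod.Lex.countable_Iio countable_Iio_aleph_one_ord_toType) (fun w => Y (ofLex w).2) F
    fun w P hP => sdiff_nonempty.2 fun h => hY _ ((hF P hP).mono h)
  have hlt : ∀ a b, b < a → f b ≠ f a ∧ ¬R (f b) (f a) := by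
    intro a b hba
    have hb : f b ∈ f '' Iio a := mem_image_of_mem f hba
    refine ⟨fun h => (hf a).2 (Or.inl (h ▸ hb)), fun h => (hf a).2 (Or.inr ?_)⟩
    exact mem_biUnion hb (mem_iUnion.2 ⟨_, (hf a).1, h⟩)
  have hne : ∀ a b, a ≠ b → f a ≠ f b ∧ ¬R (f a) (f b) := by
    intro a b hab
    rcases hab.lt_or_gt with h | h
    · exact hlt b a h
    · exact ⟨(hlt a b h).1.symm, fun hR => (hlt a b h).2 (symm hR)⟩
  have hfinj : Function.Injective f := fun a b h => by_contra fun hab => (hne a b hab).1 h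
  refine ⟨fun n => f '' {w | (ofLex w).2 = n}, fun n => ?_, fun n => ?_, ?_⟩
  · rintro _ ⟨w, rfl, rfl⟩
    exact (hf w).1
  · exact hfinj.injOn.not_countable_image (Prod.Lex.not_countable_setOf_snd_eq n)
  · rintro _ hx _ hy hxy
    obtain ⟨n, a, -, rfl⟩ := mem_iUnion.1 hx
    obtain ⟨m, b, -, rfl⟩ := mem_iUnion.1 hy
    exact (hne a b fun h => hxy (congrArg f h)).2

end Transfinite

section NormedGroup

variable {N M : Set X} {s s' ε ε' r : ℝ}

theorem IsSep.mono (h : IsSep N s) (hs : s' ≤ s) : IsSep N s' :=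
  fun x hx y hy hxy => hs.trans (h x hx y hy hxy)

namespace ApproxEquilateral

theorem mono (h : ApproxEquilateral N ε r) (hε : ε ≤ ε') : ApproxEquilateral N ε' r :=
  fun x hx y hy hxy => ⟨by linarith [(h x hx y hy hxy).1], by linarith [(h x hx y hy hxy).2]⟩

theorem subset (h : ApproxEquilateral N ε r) (hMN : M ⊆ N) : ApproxEquilateral M ε r :=
  fun x hx y hy => h x (hMN hx) y (hMN hy)

theorem isSep (h : ApproxEquilateral N ε r) : IsSep N (r - ε) :=
  fun x hx y hy hxy => (h x hx y hy hxy).1.le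

end ApproxEquilateral

theorem approxEquilateral_iff_abs_sub_lt :
    ApproxEquilateral N ε r ↔ ∀ x ∈ N, ∀ y ∈ N, x ≠ y → |‖x - y‖ - r| < ε := by
  refine forall₂_congr fun x _ => forall₃_congr fun y _ _ => ?_
  rw [abs_sub_lt_iff]
  constructor <;> rintro ⟨h₁, h₂⟩ <;> constructor <;> linarith

theorem exists_uncountable_subsets_isSep_iUnion (Y : ℕ → Set X) (hY : ∀ n, ¬(Y n).Countable)
    (hsep : ∀ n, IsSep (Y n) s) :
    ∃ S : ℕ → Set X, (∀ n, S n ⊆ Y n) ∧ (∀ n, ¬(S n).Countable) ∧ IsSep (⋃ n, S n) (s / 2) := by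
  have : Std.Symm fun x y : X => ‖x - y‖ < s / 2 := ⟨fun x y h => by rwa [norm_sub_rev]⟩
  obtain ⟨S, hSY, hS, hSsep⟩ := exists_uncountable_subsets_pairwise_not_rel
    (R := fun x y : X => ‖x - y‖ < s / 2) Y hY fun n x => by
    refine Subsingleton.countable fun a ha b hb => by_contra fun hab => ?_
    have := hsep n a ha.1 b hb.1 hab
    have := norm_sub_le_norm_sub_add_norm_sub a x b
    linarith [ha.2, hb.2, norm_sub_rev a x]
  exact ⟨S, hSY, hS, fun x hx y hy hxy => not_lt.1 (hSsep hx hy hxy)⟩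

theorem Hyperlateral.exists_pos_not_approxEquilateral (hM : Hyperlateral M) (hr : 0 < r) :
    ∃ ε > 0, ¬∃ Y ⊆ M, ¬Y.Countable ∧ ApproxEquilateral Y ε r := by
  by_contra! h
  choose Y hYM hY hYr using fun n : ℕ => h (min (r / 2) (1 / (n + 1))) (by positivity)
  have hYsep : ∀ n, IsSep (Y n) (r / 2) := fun n =>
    (hYr n).isSep.mono (by linarith [min_le_left (r / 2) (1 / (n + 1 : ℝ))])
  obtain ⟨S, hSY, hS, hSsep⟩ := exists_uncountable_subsets_isSep_iUnion Y hY hYsep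
  obtain ⟨ε, hε, hno⟩ := hM (⋃ n, S n) (iUnion_subset fun n => (hSY n).trans (hYM n))
    (fun hc => hS 0 (hc.mono (subset_iUnion S 0))) ⟨r / 2 / 2, by positivity, hSsep⟩
  obtain ⟨n, hn⟩ := exists_nat_one_div_lt hε
  exact hno ⟨S n, subset_iUnion S n, hS n, r, hr,
    ((hYr n).subset (hSY n)).mono ((min_le_right _ _).trans hn.le)⟩

end NormedGroup

section NormedSpace

variable [NormedSpace ℝ X] {ε r : ℝ}

theorem norm_inv_norm_smul_sub_inv_smul {u : X} (hu : u ≠ 0) (hr : 0 < r) :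
    ‖‖u‖⁻¹ • u - r⁻¹ • u‖ = |‖u‖ - r| / r := by
  have hu' : 0 < ‖u‖ := norm_pos_iff.2 hu
  rw [← sub_smul, norm_smul, Real.norm_eq_abs, inv_sub_inv hu'.ne' hr.ne', abs_div,
    abs_of_pos (mul_pos hu' hr), abs_sub_comm]
  field_simp

theorem abs_norm_inv_norm_smul_sub_sub_one_lt {u v : X} (hu : u ≠ 0) (hv : v ≠ 0) (hr : 0 < r)
    (hu' : |‖u‖ - r| < ε) (hv' : |‖v‖ - r| < ε) (huv : |‖u - v‖ - r| < ε) :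
    |‖‖u‖⁻¹ • u - ‖v‖⁻¹ • v‖ - 1| < 3 * ε / r := by
  have hscale : ‖r⁻¹ • u - r⁻¹ • v‖ - 1 = (‖u - v‖ - r) / r := by
    rw [← smul_sub, norm_smul, Real.norm_eq_abs, abs_of_pos (inv_pos.2 hr)]
    field_simp
  calc |‖‖u‖⁻¹ • u - ‖v‖⁻¹ • v‖ - 1|
      ≤ |‖‖u‖⁻¹ • u - ‖v‖⁻¹ • v‖ - ‖r⁻¹ • u - r⁻¹ • v‖| + |‖r⁻¹ • u - r⁻¹ • v‖ - 1| :=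
        abs_sub_le _ _ _
    _ ≤ ‖(‖u‖⁻¹ • u - r⁻¹ • u) - (‖v‖⁻¹ • v - r⁻¹ • v)‖ + |‖u - v‖ - r| / r := by
        rw [hscale, abs_div, abs_of_pos hr, sub_sub_sub_comm]
        gcongr
        exact abs_norm_sub_norm_le _ _
    _ ≤ |‖u‖ - r| / r + |‖v‖ - r| / r + |‖u - v‖ - r| / r := by
        rw [← norm_inv_norm_smul_sub_inv_smul hu hr, ← norm_inv_norm_smul_sub_inv_smul hv hr]
        gcongr
        exact norm_sub_le _ _
    _ < ε / r + ε / r + ε / r := by gcongr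
    _ = 3 * ε / r := by ring

theorem exists_sphere_approxEquilateral {N : Set X} (hN : ¬N.Countable) (hr : 0 < r)
    (hεr : 3 * ε < r) (h : ApproxEquilateral N ε r) :
    ∃ Y ⊆ {x : X | ‖x‖ = 1}, ¬Y.Countable ∧ ApproxEquilateral Y (3 * ε / r) 1 := by
  obtain ⟨x₀, hx₀⟩ : N.Nonempty := nonempty_iff_ne_empty.2 fun he => hN (he ▸ countable_empty)
  have hN₀ : ¬(N \ {x₀}).Countable := fun hc => hN (hc.of_sdiff (countable_singleton x₀))
  rw [approxEquilateral_iff_abs_sub_lt] at h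
  have hclose : ∀ y ∈ N \ {x₀}, |‖y - x₀‖ - r| < ε := fun y hy => h y hy.1 x₀ hx₀ hy.2
  have hne : ∀ y ∈ N \ {x₀}, y - x₀ ≠ 0 := fun y hy => sub_ne_zero.2 hy.2
  let g : X → X := fun y => ‖y - x₀‖⁻¹ • (y - x₀)
  have hg : ∀ y ∈ N \ {x₀}, ∀ y' ∈ N \ {x₀}, y ≠ y' → |‖g y - g y'‖ - 1| < 3 * ε / r :=
    fun y hy y' hy' hyy' => abs_norm_inv_norm_smul_sub_sub_one_lt (hne y hy) (hne y' hy') hr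
      (hclose y hy) (hclose y' hy') (by simpa using h y hy.1 y' hy'.1 hyy')
  have hginj : InjOn g (N \ {x₀}) := fun y hy y' hy' hgyy' => by_contra fun hyy' => by
    have := hg y hy y' hy' hyy'
    rw [hgyy', sub_self, norm_zero, zero_sub, abs_neg, abs_one, lt_div_iff₀ hr] at this
    linarith
  refine ⟨g '' (N \ {x₀}), ?_, hginj.not_countable_image hN₀,
    approxEquilateral_iff_abs_sub_lt.2 ?_⟩
  · rintro _ ⟨y, hy, rfl⟩
    exact norm_smul_inv_norm (𝕜 := ℝ) (hne y hy)
  · rintro _ ⟨y, hy, rfl⟩ _ ⟨y', hy', rfl⟩ hyy'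
    exact hg y hy y' hy' fun h => hyy' (congrArg g h)

theorem forall_exists_not_approxEquilateral_of_sphere
    (h : ∃ ε > (0 : ℝ), ¬∃ Y ⊆ {x : X | ‖x‖ = 1}, ¬Y.Countable ∧ ApproxEquilateral Y ε 1) :
    ∀ s > (0 : ℝ), ∃ ε > (0 : ℝ), ∀ Y : Set X, ¬Y.Countable → IsSep Y s →
      ¬∃ N' ⊆ Y, ¬N'.Countable ∧ ∃ r > (0 : ℝ), ApproxEquilateral N' ε r := by
  obtain ⟨ε₁, hε₁, h⟩ := h
  intro s hs
  have hm : 0 < min ε₁ 1 := lt_min hε₁ one_pos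
  refine ⟨s * min ε₁ 1 / 4, by positivity, ?_⟩
  rintro Y - hY ⟨N, hNY, hN, r, hr, hNr⟩
  obtain ⟨x, hx, y, hy, hxy⟩ := not_subsingleton_iff.1 (mt Subsingleton.countable hN)
  have hsr : s < r + s * min ε₁ 1 / 4 :=
    (hY x (hNY hx) y (hNY hy) hxy).trans_lt (hNr x hx y hy hxy).2
  have hsm : s * min ε₁ 1 ≤ s := mul_le_of_le_one_right hs.le (min_le_right ε₁ 1)
  have hsr' : 3 * s / 4 < r := by linarith
  have hεr : 3 * (s * min ε₁ 1 / 4) ≤ min ε₁ 1 * r := by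
    rw [show 3 * (s * min ε₁ 1 / 4) = min ε₁ 1 * (3 * s / 4) by ring]
    exact mul_le_mul_of_nonneg_left hsr'.le hm.le
  obtain ⟨Z, hZ, hZc, hZr⟩ := exists_sphere_approxEquilateral hN hr (by linarith) hNr
  refine h ⟨Z, hZ, hZc, hZr.mono ?_⟩
  rw [div_le_iff₀ hr]
  exact hεr.trans (mul_le_mul_of_nonneg_right (min_le_left ε₁ 1) hr.le)

end NormedSpace

theorem stmt8_general [NormedSpace ℝ X] :
    List.TFAE
      [ Hyperlateral (Set.univ : Set X),
        ∀ s > (0 : ℝ), ∃ ε > (0 : ℝ), ∀ Y : Set X, ¬Y.Countable → IsSep Y s →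
          ¬∃ N' ⊆ Y, ¬N'.Countable ∧ ∃ r > (0 : ℝ), ApproxEquilateral N' ε r,
        Hyperlateral {x : X | ‖x‖ = 1},
        ∀ r : ℝ, 0 < r → r ≤ 2 → ∃ ε > (0 : ℝ),
          ¬∃ Y ⊆ {x : X | ‖x‖ = 1}, ¬Y.Countable ∧ ApproxEquilateral Y ε r,
        ∃ ε > (0 : ℝ),
          ¬∃ Y ⊆ {x : X | ‖x‖ = 1}, ¬Y.Countable ∧ ApproxEquilateral Y ε 1 ] := by
  tfae_have 1 → 3 := fun h1 N _ => h1 N (subset_univ N)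
  tfae_have 3 → 4 := fun h3 _ hr _ => h3.exists_pos_not_approxEquilateral hr
  tfae_have 4 → 5 := fun h4 => h4 1 one_pos one_le_two
  tfae_have 5 → 2 := forall_exists_not_approxEquilateral_of_sphere
  tfae_have 2 → 1 := fun h2 N _ hN ⟨s, hs, hsep⟩ =>
    let ⟨ε, hε, h⟩ := h2 s hs
    ⟨ε, hε, h N hN hsep⟩
  tfae_finish

theorem stmt8 [NormedSpace ℝ X] [CompleteSpace X]
    (hnonsep : ¬TopologicalSpace.SeparableSpace X) :
    List.TFAE
      [ Hyperlateral (Set.univ : Set X),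
        ∀ s > (0 : ℝ), ∃ ε > (0 : ℝ), ∀ Y : Set X, ¬Y.Countable → IsSep Y s →
          ¬∃ N' ⊆ Y, ¬N'.Countable ∧ ∃ r > (0 : ℝ), ApproxEquilateral N' ε r,
        Hyperlateral {x : X | ‖x‖ = 1},
        ∀ r : ℝ, 0 < r → r ≤ 2 → ∃ ε > (0 : ℝ),
          ¬∃ Y ⊆ {x : X | ‖x‖ = 1}, ¬Y.Countable ∧ ApproxEquilateral Y ε r,
        ∃ ε > (0 : ℝ),
          ¬∃ Y ⊆ {x : X | ‖x‖ = 1}, ¬Y.Countable ∧ ApproxEquilateral Y ε 1 ] :=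
  stmt8_general

end
end

section
/- For every uncountable cardinal κ there is a coloring c : [κ]² → {0,1} such that there is no uncountable 1-monochromatic subset of κ, and κ is not the union of countably many 0-monochromatic subsets. -/
open Classical in
/-- A set in a well-ordered type on which a real-valued map is strictly increasing
is countable. -/
lemma countable_of_strictMonoOn_real {W : Type*} [LinearOrder W] [WellFoundedLT W]
    (h : W → ℝ) (B : Set W) (mono : ∀ a ∈ B, ∀ b ∈ B, a < b → h a < h b) :
    B.Countable := by
  classical
  set B' : Set W := {x ∈ B | ∃ z ∈ B, x < z} with hB'
  -- the "next element" function
  have hwf : WellFounded ((· < ·) : W → W → Prop) := wellFounded_lt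
  have hnext : ∀ x ∈ B', ∃ q : ℚ, h x < (q : ℝ) ∧
      ∀ z ∈ B, x < z → (q : ℝ) < h z := by
    intro x hx
    obtain ⟨hxB, hz⟩ := hx
    set S : Set W := {z | z ∈ B ∧ x < z} with hS
    have hSne : S.Nonempty := by obtain ⟨z, hzB, hxz⟩ := hz; exact ⟨z, hzB, hxz⟩
    set m := hwf.min S hSne with hm
    have hmS : m ∈ S := hwf.min_mem S hSne
    have hxm : h x < h m := mono x hxB m hmS.1 hmS.2
    obtain ⟨q, hq1, hq2⟩ := exists_rat_btwn hxm
    refine ⟨q, hq1, fun z hzB hxz => ?_⟩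
    have hmz : m ≤ z := not_lt.1 (hwf.not_lt_min S (x := z) ⟨hzB, hxz⟩)
    rcases eq_or_lt_of_le hmz with rfl | hlt
    · exact hq2
    · exact hq2.trans (mono m hmS.1 z hzB hlt)
  choose! q hq1 hq2 using hnext
  have hinj : Set.InjOn q B' := by
    intro x hx y hy hxy
    by_contra hne
    rcases Ne.lt_or_gt hne with hlt | hlt
    · have h1 : (q x : ℝ) < h y := hq2 x hx y hy.1 hlt
      have h2 : h y < (q y : ℝ) := hq1 y hy
      rw [hxy] at h1; exact absurd h1 (lt_asymm h2)
    · have h1 : (q y : ℝ) < h x := hq2 y hy x hx.1 hlt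
      have h2 : h x < (q x : ℝ) := hq1 x hx
      rw [← hxy] at h1; exact absurd h1 (lt_asymm h2)
  have hB'c : B'.Countable :=
    (Set.mapsTo_univ q B').countable_of_injOn hinj (Set.countable_univ)
  have hsub : B.Subsingleton ∨ True := Or.inr trivial
  have hdiff : (B \ B').Subsingleton := by
    intro x hx y hy
    by_contra hne
    rcases Ne.lt_or_gt hne with hlt | hlt
    · exact hx.2 ⟨hx.1, y, hy.1, hlt⟩
    · exact hy.2 ⟨hy.1, x, hx.1, hlt⟩
  have : B ⊆ B' ∪ (B \ B') := by
    intro x hx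
    by_cases hx' : x ∈ B'
    · exact Or.inl hx'
    · exact Or.inr ⟨hx, hx'⟩
  exact (hB'c.union hdiff.countable).mono this

lemma sierpinski_sym {W : Type*} [LinearOrder W] (h : W → ℝ)
    (hinj : Function.Injective h) {a b : W} (hab : a ≠ b) :
    ((a < b ↔ h a < h b) ↔ (b < a ↔ h b < h a)) := by
  have hne : h a ≠ h b := fun e => hab (hinj e)
  rcases lt_trichotomy a b with h1 | h1 | h1 <;>
    rcases lt_trichotomy (h a) (h b) with h2 | h2 | h2 <;>
      first
        | exact absurd h1 hab
        | exact absurd h2 hne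
        | simp_all [lt_asymm h1, lt_asymm h2, lt_irrefl]


theorem stmt9 (K : Type*) [Uncountable K] :
    ∃ c : K → K → Bool, (∀ x y : K, c x y = c y x) ∧
      (¬∃ A : Set K, ¬A.Countable ∧ ∀ x ∈ A, ∀ y ∈ A, x ≠ y → c x y = true) ∧
      (¬∃ f : ℕ → Set K, (⋃ n, f n) = Set.univ ∧
        ∀ n, ∀ x ∈ f n, ∀ y ∈ f n, x ≠ y → c x y = false) := by
  classical
  -- a copy of ω₁
  set W : Type := (Cardinal.aleph 1 : Cardinal).ord.ToType with hW
  have hmkW : (Cardinal.mk W) = Cardinal.aleph 1 := by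
    rw [hW, Cardinal.mk_toType, Cardinal.card_ord]
  have hWuncount : Uncountable W := by
    rw [← Cardinal.aleph0_lt_mk_iff, hmkW]
    exact Cardinal.aleph0_lt_aleph_one
  -- embedding into K
  have hgK : Nonempty (W ↪ K) := by
    rw [← Cardinal.lift_mk_le']
    rw [hmkW, Cardinal.lift_aleph, Ordinal.lift_one]
    rw [← Cardinal.succ_aleph0, Order.succ_le_iff, Cardinal.aleph0_lt_lift]
    exact Cardinal.aleph0_lt_mk_iff.2 inferInstance
  have hgR : Nonempty (W ↪ ℝ) := by
    rw [← Cardinal.le_def, hmkW, Cardinal.mk_real]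
    exact Cardinal.aleph_one_le_continuum
  obtain ⟨g⟩ := hgK
  obtain ⟨h⟩ := hgR
  haveI : Nonempty W := by
    by_contra hne
    exact (not_countable (α := W)) (Set.countable_univ_iff.1
      (Set.Subsingleton.countable (fun x _ _ _ => absurd ⟨x⟩ hne)))
  set gi : K → W := Function.invFun g with hgi_def
  have hgi : ∀ a : W, gi (g a) = a := Function.leftInverse_invFun g.injective
  set P : K → K → Prop := fun x y =>
    x ∈ Set.range ⇑g ∧ y ∈ Set.range ⇑g ∧ x ≠ y ∧
      (gi x < gi y ↔ h (gi x) < h (gi y)) with hP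
  refine ⟨fun x y => if P x y then true else false, ?_, ?_, ?_⟩
  · -- symmetry
    intro x y
    have : P x y ↔ P y x := by
      by_cases hx : x ∈ Set.range ⇑g
      · by_cases hy : y ∈ Set.range ⇑g
        · by_cases hxy : x = y
          · subst hxy; rfl
          · have hgixy : gi x ≠ gi y := by
              obtain ⟨a, rfl⟩ := hx; obtain ⟨b, rfl⟩ := hy
              rw [hgi, hgi]; exact fun e => hxy (by rw [e])
            have := sierpinski_sym h h.injective hgixy
            simp only [hP]
            simp only [this]
            tauto
        · simp only [hP]
          constructor
          · rintro ⟨-, h2, -, -⟩; exact absurd h2 hy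
          · rintro ⟨h1, -, -, -⟩; exact absurd h1 hy
      · simp only [hP]
        constructor
        · rintro ⟨h1, -, -, -⟩; exact absurd h1 hx
        · rintro ⟨-, h2, -, -⟩; exact absurd h2 hx
    simp only [this]
  · -- no uncountable 1-monochromatic set
    rintro ⟨A, hAc, hA⟩
    have hA2 : ∀ x ∈ A, x ∈ Set.range ⇑g := by
      intro x hx
      have hnotsub : ¬ A.Subsingleton := fun hs => hAc hs.countable
      obtain ⟨y, hy, hxy⟩ : ∃ y ∈ A, y ≠ x := by
        by_contra hc
        push_neg at hc
        exact hnotsub fun u hu v hv => by rw [hc u hu, hc v hv]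
      have := hA x hx y hy (Ne.symm hxy)
      by_contra hxr
      simp only [if_neg (fun hp : P x y => hxr hp.1)] at this
      exact Bool.false_ne_true this
    set B : Set W := {a : W | g a ∈ A} with hB
    have hBA : g '' B = A := by
      apply Set.Subset.antisymm
      · rintro _ ⟨a, ha, rfl⟩; exact ha
      · intro x hx
        obtain ⟨a, rfl⟩ := hA2 x hx
        exact ⟨a, hx, rfl⟩
    have hBc : ¬ B.Countable := fun hc => hAc (hBA ▸ hc.image g)
    apply hBc
    apply countable_of_strictMonoOn_real h B
    intro a ha b hb hab
    have hne : g a ≠ g b := fun e => (ne_of_lt hab) (g.injective e)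
    have := hA (g a) ha (g b) hb hne
    have hp : P (g a) (g b) := by
      by_contra hp
      simp only [if_neg hp] at this
      exact Bool.false_ne_true this
    have := hp.2.2.2
    rw [hgi, hgi] at this
    exact this.1 hab
  · -- K is not a countable union of 0-monochromatic sets
    rintro ⟨f, hcov, hf⟩
    have : ∀ n, {a : W | g a ∈ f n}.Countable := by
      intro n
      apply countable_of_strictMonoOn_real (fun a => -(h a)) _
      intro a ha b hb hab
      have hne : g a ≠ g b := fun e => (ne_of_lt hab) (g.injective e)
      have hfalse := hf n (g a) ha (g b) hb hne
      have hnp : ¬ P (g a) (g b) := by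
        intro hp
        simp only [if_pos hp] at hfalse
        simp at hfalse
      have hiff : ¬ (a < b ↔ h a < h b) := by
        intro hiff
        exact hnp ⟨⟨a, rfl⟩, ⟨b, rfl⟩, hne, by rw [hgi, hgi]; exact hiff⟩
      have h1 : ¬ h a < h b := fun hlt => hiff ⟨fun _ => hlt, fun _ => hab⟩
      have h2 : h a ≠ h b := fun e => (ne_of_lt hab) (h.injective e)
      have := lt_of_le_of_ne (not_lt.1 h1) (Ne.symm h2)
      simpa using this
    have : (Set.univ : Set W).Countable := by
      have huniv : (⋃ n, {a : W | g a ∈ f n}) = Set.univ := by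
        apply Set.eq_univ_of_forall
        intro a
        have : g a ∈ ⋃ n, f n := by rw [hcov]; trivial
        obtain ⟨_, ⟨n, rfl⟩, hn⟩ := this
        exact Set.mem_iUnion.2 ⟨n, hn⟩
      rw [← huniv]
      exact Set.countable_iUnion this
    exact (not_countable (α := W)) (Set.countable_univ_iff.1 this)
end

section
/- There exists a Banach space X and a 1-separated set Y contained in the unit sphere S_X, of cardinality 2^ω, such that the distance between any two distinct points of Y is either 1 or 2, and for every uncountable subset Z ⊆ Y there are two distinct points of Z at distance 1 and two distinct points of Z at distance 2. -/
/-!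
Sierpiński's colouring: compare the usual order of `ℝ` with a well-order `≺` of `ℝ`. A set of
reals that is well-ordered by `<` or by `>` is countable, so every uncountable set of reals
contains a pair on which `<` and `≺` agree and a pair on which they disagree.

Any graph `G` on `V` embeds into `ℓ^∞(V ⊕ darts of G)`: the vertex `v` has coordinate `1` at
`v`, `1` at the darts leaving `v` and `-1` at the darts entering `v`. The images lie on the unit
sphere, adjacent vertices are at distance `2` and other distinct vertices at distance `1`.
Applied to the graph of disagreeing pairs this gives the required set.
-/

open Set

theorem Set.IsWF.countable {α : Type*} [LinearOrder α] [TopologicalSpace α] [OrderTopology α]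
    [SecondCountableTopology α] {s : Set α} (hs : s.IsWF) : s.Countable := by
  have hgap : {x ∈ s | ∃ z, x < z ∧ ∀ y ∈ s, x < y → z ≤ y}.Countable := by
    simpa using countable_image_lt_image_Ioi_within s id
  have hmax : {x ∈ s | ∀ y ∈ s, ¬x < y}.Subsingleton := fun a ha b hb =>
    le_antisymm (not_lt.1 (hb.2 a ha.1)) (not_lt.1 (ha.2 b hb.1))
  refine (hgap.union hmax.countable).mono fun x hx => ?_
  by_cases hup : {y ∈ s | x < y}.Nonempty
  · have hwf : {y ∈ s | x < y}.IsWF := hs.mono fun _ hy => hy.1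
    exact Or.inl ⟨hx, hwf.min hup, (hwf.min_mem hup).2,
      fun y hy hxy => hwf.min_le hup ⟨hy, hxy⟩⟩
  · exact Or.inr ⟨hx, fun y hy hxy => hup ⟨y, hy, hxy⟩⟩

theorem Set.WellFoundedOn.countable_of_gt {α : Type*} [LinearOrder α] [TopologicalSpace α]
    [OrderTopology α] [SecondCountableTopology α] {s : Set α} (hs : s.WellFoundedOn (· > ·)) :
    s.Countable :=
  Set.IsWF.countable (α := αᵒᵈ) hs

section Sierpinski

variable {α : Type*} [LinearOrder α] [TopologicalSpace α] [OrderTopology α]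
  [SecondCountableTopology α] (r : α → α → Prop) [IsWellOrder α r] {s : Set α}

theorem exists_lt_and_rel_of_not_countable (hs : ¬s.Countable) :
    ∃ a ∈ s, ∃ b ∈ s, a < b ∧ r a b := by
  by_contra! h
  refine hs (Set.WellFoundedOn.countable_of_gt ?_)
  refine Set.WellFoundedOn.mono' (fun a ha b hb (hba : b < a) => ?_)
    (IsWellFounded.wf (r := r)).wellFoundedOn
  exact (trichotomous_of r a b).resolve_right (not_or.2 ⟨hba.ne', h b hb a ha hba⟩)

theorem exists_lt_and_rel_swap_of_not_countable (hs : ¬s.Countable) :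
    ∃ a ∈ s, ∃ b ∈ s, a < b ∧ r b a := by
  by_contra! h
  refine hs (Set.IsWF.countable ?_)
  refine Set.WellFoundedOn.mono' (fun a ha b hb (hab : a < b) => ?_)
    (IsWellFounded.wf (r := r)).wellFoundedOn
  exact (trichotomous_of r a b).resolve_right (not_or.2 ⟨hab.ne, h a ha b hb hab⟩)

def sierpinskiGraph : SimpleGraph α :=
  SimpleGraph.fromRel fun a b => a < b ∧ r b a

theorem exists_sierpinskiGraph_adj_of_not_countable (hs : ¬s.Countable) :
    ∃ a ∈ s, ∃ b ∈ s, (sierpinskiGraph r).Adj a b := by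
  obtain ⟨a, ha, b, hb, hab, hba⟩ := exists_lt_and_rel_swap_of_not_countable r hs
  exact ⟨a, ha, b, hb, (SimpleGraph.fromRel_adj _ a b).2 ⟨hab.ne, Or.inl ⟨hab, hba⟩⟩⟩

theorem exists_ne_not_sierpinskiGraph_adj_of_not_countable (hs : ¬s.Countable) :
    ∃ a ∈ s, ∃ b ∈ s, a ≠ b ∧ ¬(sierpinskiGraph r).Adj a b := by
  obtain ⟨a, ha, b, hb, hab, hrab⟩ := exists_lt_and_rel_of_not_countable r hs
  refine ⟨a, ha, b, hb, hab.ne, fun hadj => ?_⟩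
  rcases ((SimpleGraph.fromRel_adj _ a b).1 hadj).2 with ⟨-, hrba⟩ | ⟨hba, -⟩
  · exact asymm_of r hrab hrba
  · exact lt_asymm hab hba

end Sierpinski

theorem lp.norm_eq_of_forall_le_of_exists_eq {ι : Type*} {E : ι → Type*}
    [∀ i, NormedAddCommGroup (E i)] {f : lp E ⊤} {C : ℝ} (hle : ∀ i, ‖f i‖ ≤ C)
    (heq : ∃ i, ‖f i‖ = C) : ‖f‖ = C := by
  obtain ⟨i, hi⟩ := heq
  exact le_antisymm (lp.norm_le_of_forall_le (hi ▸ norm_nonneg _) hle)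
    (hi ▸ lp.norm_apply_le_norm ENNReal.top_ne_zero f i)

namespace SimpleGraph

variable {V : Type*} (G : SimpleGraph V)

open Classical in
noncomputable def linftyCoord (v : V) : V ⊕ G.Dart → ℝ
  | .inl w => if w = v then 1 else 0
  | .inr d => if d.fst = v then 1 else if d.snd = v then -1 else 0

theorem abs_linftyCoord_le_one (v : V) (i : V ⊕ G.Dart) : |G.linftyCoord v i| ≤ 1 := by
  rcases i with w | d <;> simp only [linftyCoord] <;> split_ifs <;> norm_num

noncomputable def linftyPoint (v : V) : lp (fun _ : V ⊕ G.Dart => ℝ) ⊤ :=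
  ⟨G.linftyCoord v, memℓp_infty ⟨1, by
    rintro _ ⟨i, rfl⟩
    exact G.abs_linftyCoord_le_one v i⟩⟩

theorem linftyPoint_sub_apply (v w : V) (i : V ⊕ G.Dart) :
    (G.linftyPoint v - G.linftyPoint w) i = G.linftyCoord v i - G.linftyCoord w i := rfl

theorem norm_linftyPoint (v : V) : ‖G.linftyPoint v‖ = 1 :=
  lp.norm_eq_of_forall_le_of_exists_eq (G.abs_linftyCoord_le_one v)
    ⟨.inl v, by simp [linftyPoint, linftyCoord]⟩

theorem norm_linftyPoint_sub_of_adj {v w : V} (h : G.Adj v w) :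
    ‖G.linftyPoint v - G.linftyPoint w‖ = 2 := by
  refine lp.norm_eq_of_forall_le_of_exists_eq (fun i => ?_) ⟨.inr ⟨(v, w), h⟩, ?_⟩
  · rw [linftyPoint_sub_apply, Real.norm_eq_abs]
    linarith [abs_sub (G.linftyCoord v i) (G.linftyCoord w i),
      G.abs_linftyCoord_le_one v i, G.abs_linftyCoord_le_one w i]
  · norm_num [linftyPoint_sub_apply, linftyCoord, h.ne]

theorem norm_linftyPoint_sub_of_not_adj {v w : V} (hne : v ≠ w) (h : ¬G.Adj v w) :
    ‖G.linftyPoint v - G.linftyPoint w‖ = 1 := by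
  refine lp.norm_eq_of_forall_le_of_exists_eq (fun i => ?_) ⟨.inl v, ?_⟩
  · rw [linftyPoint_sub_apply, Real.norm_eq_abs]
    -- a difference of `2` only occurs at a dart from `v` to `w` or from `w` to `v`
    rcases i with u | ⟨⟨a, b⟩, hab⟩ <;> simp only [linftyCoord] <;> split_ifs <;> norm_num
    all_goals subst_vars
    all_goals simp_all [G.adj_comm]
  · simp [linftyPoint_sub_apply, linftyCoord, hne]

theorem norm_linftyPoint_sub_eq_one_or_two {v w : V} (hne : v ≠ w) :
    ‖G.linftyPoint v - G.linftyPoint w‖ = 1 ∨ ‖G.linftyPoint v - G.linftyPoint w‖ = 2 :=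
  (em (G.Adj v w)).symm.imp (G.norm_linftyPoint_sub_of_not_adj hne)
    G.norm_linftyPoint_sub_of_adj

theorem linftyPoint_injective : Function.Injective G.linftyPoint := fun v w h => by
  by_contra hne
  rcases G.norm_linftyPoint_sub_eq_one_or_two hne with h' | h' <;> simp [h] at h'

end SimpleGraph

theorem stmt10 :
    ∃ (X : Type) (_ : NormedAddCommGroup X) (_ : NormedSpace ℝ X) (_ : CompleteSpace X)
      (Y : Set X),
      Y ⊆ {x : X | ‖x‖ = 1} ∧
      Cardinal.mk Y = Cardinal.continuum ∧
      (∀ x ∈ Y, ∀ y ∈ Y, x ≠ y → 1 ≤ ‖x - y‖) ∧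
      (∀ x ∈ Y, ∀ y ∈ Y, x ≠ y → ‖x - y‖ = 1 ∨ ‖x - y‖ = 2) ∧
      (∀ Z ⊆ Y, ¬Z.Countable →
        (∃ a ∈ Z, ∃ b ∈ Z, a ≠ b ∧ ‖a - b‖ = 1) ∧
        (∃ a ∈ Z, ∃ b ∈ Z, a ≠ b ∧ ‖a - b‖ = 2)) := by
  set G := sierpinskiGraph (WellOrderingRel (α := ℝ))
  have hinj := G.linftyPoint_injective
  refine ⟨_, inferInstance, inferInstance, inferInstance, range G.linftyPoint,
    ?_, ?_, ?_, ?_, ?_⟩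
  · rintro _ ⟨r, rfl⟩
    exact G.norm_linftyPoint r
  · rw [Cardinal.mk_range_eq _ hinj, Cardinal.mk_real]
  · rintro _ ⟨r, rfl⟩ _ ⟨s, rfl⟩ hne
    rcases G.norm_linftyPoint_sub_eq_one_or_two (hinj.ne_iff.1 hne) with h | h <;> linarith
  · rintro _ ⟨r, rfl⟩ _ ⟨s, rfl⟩ hne
    exact G.norm_linftyPoint_sub_eq_one_or_two (hinj.ne_iff.1 hne)
  · intro Z hZ hZc
    have hpre : ¬(G.linftyPoint ⁻¹' Z).Countable := fun h =>
      hZc (image_preimage_eq_of_subset hZ ▸ h.image _)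
    obtain ⟨a, ha, b, hb, hab, hnadj⟩ :=
      exists_ne_not_sierpinskiGraph_adj_of_not_countable WellOrderingRel hpre
    obtain ⟨c, hc, d, hd, hadj⟩ :=
      exists_sierpinskiGraph_adj_of_not_countable WellOrderingRel hpre
    exact ⟨⟨_, ha, _, hb, hinj.ne hab, G.norm_linftyPoint_sub_of_not_adj hab hnadj⟩,
      ⟨_, hc, _, hd, hinj.ne hadj.ne, G.norm_linftyPoint_sub_of_adj hadj⟩⟩
end

section
/- Suppose X ⊆ ℓ∞ is a Banach space (a linear subspace of ℓ∞ that is complete in the supremum norm) and Y ⊆ X is analytic as a subset of ℝ^ℕ with its product topology. Then Y is dichotomous with respect to the distance d(y,y') = ‖y − y'‖∞. In particular, if X itself is analytic in ℝ^ℕ, then the unit sphere S_X is dichotomous. -/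
open scoped ENNReal

/-- `ℓ∞`: the Banach space of bounded real sequences with the sup norm. -/
abbrev Linfty : Type := lp (fun _ : ℕ => ℝ) ∞

/-!
Apply Feng's open-colouring dichotomy for analytic sets to the graph on `ℝ^ℕ` joining two
sequences when some coordinate differs by more than `r`: its adjacency is open in the product
topology, on `ℓ∞` its cliques are the `(r+)`-separated sets and its independent sets have
diameter at most `r`.

For an open graph and a continuous map `g` from a Polish space, discard every open set whose image
is covered by countably many independent sets; by second countability the discarded part is
itself such a countable union. If some point survives, each of its neighbourhoods contains two
surviving points with adjacent images, and openness of the graph yields two small open sets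
around them all of whose cross pairs are adjacent. Iterating gives a Cantor scheme whose
branches map to an uncountable clique.

The unit sphere of `X` is the trace of `X` on the Borel set `{a | ⨆ n, ‖a n‖ₑ = 1}`.
-/

open Set Filter Topology Metric PiNat CantorScheme

namespace SimpleGraph

variable {V : Type*} (G : SimpleGraph V)

def IsSigmaIndepSet (s : Set V) : Prop :=
  ∃ 𝒞 : Set (Set V), 𝒞.Countable ∧ (∀ c ∈ 𝒞, G.IsIndepSet c) ∧ s ⊆ ⋃₀ 𝒞

variable {G}

lemma IsSigmaIndepSet.mono {s t : Set V} (ht : G.IsSigmaIndepSet t) (hst : s ⊆ t) :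
    G.IsSigmaIndepSet s :=
  let ⟨𝒞, h𝒞, hind, hcov⟩ := ht
  ⟨𝒞, h𝒞, hind, hst.trans hcov⟩

lemma IsIndepSet.isSigmaIndepSet {s : Set V} (hs : G.IsIndepSet s) : G.IsSigmaIndepSet s :=
  ⟨{s}, countable_singleton s, by simpa using hs, by simp⟩

lemma IsSigmaIndepSet.union {s t : Set V} (hs : G.IsSigmaIndepSet s)
    (ht : G.IsSigmaIndepSet t) : G.IsSigmaIndepSet (s ∪ t) :=
  let ⟨𝒞, h𝒞, hind𝒞, hcov𝒞⟩ := hs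
  let ⟨𝒟, h𝒟, hind𝒟, hcov𝒟⟩ := ht
  ⟨𝒞 ∪ 𝒟, h𝒞.union h𝒟, fun c hc => hc.elim (hind𝒞 c) (hind𝒟 c),
    sUnion_union 𝒞 𝒟 ▸ union_subset_union hcov𝒞 hcov𝒟⟩

lemma isSigmaIndepSet_sUnion {S : Set (Set V)} (hS : S.Countable)
    (h : ∀ s ∈ S, G.IsSigmaIndepSet s) : G.IsSigmaIndepSet (⋃₀ S) := by
  choose! 𝒞 h𝒞 hind hcov using h
  refine ⟨⋃ s ∈ S, 𝒞 s, hS.biUnion h𝒞, ?_, ?_⟩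
  · simp only [mem_iUnion]
    rintro c ⟨s, hs, hc⟩
    exact hind s hs c hc
  · exact sUnion_subset fun s hs => (hcov s hs).trans (sUnion_mono (subset_biUnion_of_mem hs))

lemma IsSigmaIndepSet.exists_iUnion_eq {s : Set V} (hs : G.IsSigmaIndepSet s) :
    ∃ F : ℕ → Set V, ⋃ n, F n = s ∧ ∀ n, G.IsIndepSet (F n) := by
  obtain ⟨𝒞, h𝒞, hind, hcov⟩ := hs
  obtain ⟨f, hf⟩ := (h𝒞.insert ∅).exists_eq_range (insert_nonempty _ _)
  refine ⟨fun n => f n ∩ s, ?_, fun n => ?_⟩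
  · rw [← iUnion_inter, ← sUnion_range, ← hf, sUnion_insert, empty_union]
    exact inter_eq_right.2 hcov
  · rcases (hf ▸ mem_range_self n : f n ∈ insert ∅ 𝒞) with h | h
    · simp [h, IsIndepSet]
    · exact (hind _ h).mono inter_subset_left

section Kernel

variable {P : Type*} [TopologicalSpace P] (G) (g : P → V)

def sigmaIndepKernel : Set P :=
  {x | ∀ U ∈ 𝓝 x, ¬ G.IsSigmaIndepSet (g '' U)}

lemma isSigmaIndepSet_image_compl_sigmaIndepKernel [SecondCountableTopology P] :
    G.IsSigmaIndepSet (g '' (G.sigmaIndepKernel g)ᶜ) := by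
  let S := {U : Set P | IsOpen U ∧ G.IsSigmaIndepSet (g '' U)}
  obtain ⟨T, hTc, hTS, hTU⟩ := TopologicalSpace.isOpen_sUnion_countable S fun U hU => hU.1
  have hcompl : (G.sigmaIndepKernel g)ᶜ ⊆ ⋃₀ S := by
    intro x hx
    simp only [sigmaIndepKernel, mem_compl_iff, mem_ofPred_eq, not_forall, not_not] at hx
    obtain ⟨U, hU, hUind⟩ := hx
    obtain ⟨W, hWU, hWo, hxW⟩ := mem_nhds_iff.1 hU
    exact ⟨W, ⟨hWo, hUind.mono (image_mono hWU)⟩, hxW⟩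
  refine IsSigmaIndepSet.mono ?_ (image_mono (hcompl.trans hTU.ge))
  rw [image_sUnion]
  exact isSigmaIndepSet_sUnion (hTc.image _) (forall_mem_image.2 fun U hU => (hTS hU).2)

lemma exists_adj_of_mem_sigmaIndepKernel [SecondCountableTopology P] {x : P}
    (hx : x ∈ G.sigmaIndepKernel g) {U : Set P} (hU : U ∈ 𝓝 x) :
    ∃ y ∈ G.sigmaIndepKernel g ∩ U, ∃ z ∈ G.sigmaIndepKernel g ∩ U, G.Adj (g y) (g z) := by
  by_contra! h
  have hind : G.IsIndepSet (g '' (G.sigmaIndepKernel g ∩ U)) := by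
    rintro _ ⟨y, hy, rfl⟩ _ ⟨z, hz, rfl⟩ -
    exact h y hy z hz
  have hsplit : U ⊆ (G.sigmaIndepKernel g ∩ U) ∪ (G.sigmaIndepKernel g)ᶜ := fun y hy => by
    by_cases hyK : y ∈ G.sigmaIndepKernel g
    exacts [Or.inl ⟨hyK, hy⟩, Or.inr hyK]
  refine hx U hU ((hind.isSigmaIndepSet.union
    (G.isSigmaIndepSet_image_compl_sigmaIndepKernel g)).mono ?_)
  exact image_union _ _ _ ▸ image_mono hsplit

end Kernel

end SimpleGraph

lemma exists_isOpen_mem_closure_subset_ediam_le {P : Type*} [PseudoEMetricSpace P] {x : P}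
    {s : Set P} (hs : s ∈ 𝓝 x) {ε : ℝ≥0∞} (hε : 0 < ε) :
    ∃ t, IsOpen t ∧ x ∈ t ∧ closure t ⊆ s ∧ ediam t ≤ ε := by
  obtain ⟨δ, hδ, hδs⟩ := nhds_basis_closedEBall.mem_iff.1 hs
  set ρ := min δ (ε / 2)
  have hρ : 0 < ρ := lt_min hδ (ENNReal.half_pos hε.ne')
  refine ⟨eball x ρ, isOpen_eball, mem_eball_self hρ, ?_, ?_⟩
  · exact (closure_minimal eball_subset_closedEBall isClosed_closedEBall).trans
      ((closedEBall_subset_closedEBall (min_le_left _ _)).trans hδs)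
  · calc ediam (eball x ρ) ≤ 2 * ρ := ediam_eball_le
      _ ≤ 2 * (ε / 2) := by gcongr; exact min_le_right _ _
      _ = ε := ENNReal.mul_div_cancel two_ne_zero ENNReal.ofNat_ne_top

namespace CantorScheme

variable {P : Type*} [PseudoMetricSpace P] [CompleteSpace P]

theorem exists_pairwise_of_forall_mem_cons {A : List Bool → Set P} (hanti : ClosureAntitone A)
    (hdiam : VanishingDiam A) (hne : ∀ l, (A l).Nonempty) {R : P → P → Prop}
    (hR : ∀ u v, R u v → R v u)
    (hsplit : ∀ l, ∀ u ∈ A (false :: l), ∀ v ∈ A (true :: l), R u v) :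
    ∃ f : (ℕ → Bool) → P, Pairwise fun α β => R (f α) (f β) := by
  have hdom : ∀ α, α ∈ (inducedMap A).1 := by simp [hanti.map_of_vanishingDiam hdiam hne]
  refine ⟨fun α => (inducedMap A).2 ⟨α, hdom α⟩, fun α β hαβ => ?_⟩
  have hres : res β (firstDiff α β) = res α (firstDiff α β) :=
    res_eq_res.2 fun m hm => (apply_eq_of_lt_firstDiff hm).symm
  have hα : (inducedMap A).2 ⟨α, hdom α⟩ ∈ A (α (firstDiff α β) :: res α (firstDiff α β)) :=
    res_succ α _ ▸ map_mem ⟨α, hdom α⟩ _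
  have hβ : (inducedMap A).2 ⟨β, hdom β⟩ ∈ A (β (firstDiff α β) :: res α (firstDiff α β)) :=
    hres ▸ res_succ β _ ▸ map_mem ⟨β, hdom β⟩ _
  have hab := apply_firstDiff_ne hαβ
  generalize α (firstDiff α β) = a at hα hab
  generalize β (firstDiff α β) = b at hβ hab
  cases a <;> cases b
  exacts [absurd rfl hab, hsplit _ _ hα _ hβ, hR _ _ (hsplit _ _ hβ _ hα), absurd rfl hab]

theorem exists_pairwise_of_forall_split {Good : Set P → Prop} {s : Set P} (hs : Good s)
    (hne : ∀ U, Good U → U.Nonempty) {R : P → P → Prop} (hR : ∀ u v, R u v → R v u)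
    (hsplit : ∀ U, Good U → ∀ ε > 0, ∃ W : Bool → Set P,
      (∀ b, Good (W b) ∧ closure (W b) ⊆ U ∧ ediam (W b) ≤ ε) ∧
      ∀ u ∈ W false, ∀ v ∈ W true, R u v) :
    ∃ f : (ℕ → Bool) → P, Pairwise fun α β => R (f α) (f β) := by
  obtain ⟨ε, -, hε, hε0⟩ := exists_seq_strictAnti_tendsto' (zero_lt_one' ℝ≥0∞)
  choose! W hW hWR using hsplit
  let A : List Bool → Set P := fun l =>
    List.recOn (motive := fun _ => Set P) l s fun b l A => W A (ε l.length) b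
  have hA : ∀ l, Good (A l) := by
    intro l
    induction l with
    | nil => exact hs
    | cons b l ih => exact (hW _ ih _ (hε l.length).1 b).1
  refine exists_pairwise_of_forall_mem_cons (A := A)
    (fun l b => (hW _ (hA l) _ (hε l.length).1 b).2.1) (fun x => ?_) (fun l => hne _ (hA l)) hR
    (fun l => hWR _ (hA l) _ (hε l.length).1)
  refine (tendsto_add_atTop_iff_nat 1).1 (tendsto_of_tendsto_of_tendsto_of_le_of_le
    tendsto_const_nhds hε0 (fun _ => zero_le) fun n => ?_)
  rw [res_succ]
  simpa [A, res_length] using (hW _ (hA (res x n)) _ (hε n).1 (x n)).2.2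

end CantorScheme

namespace SimpleGraph

variable {V : Type*} [TopologicalSpace V] {G : SimpleGraph V} {P : Type*}

lemma exists_split_of_nonempty_inter_sigmaIndepKernel [PseudoEMetricSpace P]
    [SecondCountableTopology P] (hG : IsOpen {p : V × V | G.Adj p.1 p.2}) {g : P → V}
    (hg : Continuous g) {U : Set P} (hU : IsOpen U) (hUK : (U ∩ G.sigmaIndepKernel g).Nonempty)
    {ε : ℝ≥0∞} (hε : 0 < ε) :
    ∃ W : Bool → Set P,
      (∀ b, (IsOpen (W b) ∧ (W b ∩ G.sigmaIndepKernel g).Nonempty) ∧ closure (W b) ⊆ U ∧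
        Metric.ediam (W b) ≤ ε) ∧
      ∀ u ∈ W false, ∀ v ∈ W true, G.Adj (g u) (g v) := by
  obtain ⟨x, hxU, hxK⟩ := hUK
  obtain ⟨y, ⟨hyK, hyU⟩, z, ⟨hzK, hzU⟩, hyz⟩ :=
    G.exists_adj_of_mem_sigmaIndepKernel g hxK (hU.mem_nhds hxU)
  obtain ⟨N₀, hN₀, N₁, hN₁, hN⟩ :=
    mem_nhds_prod_iff.1 ((hG.preimage (hg.prodMap hg)).mem_nhds hyz)
  obtain ⟨W₀, hW₀, hyW₀, hW₀c, hW₀d⟩ :=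
    exists_isOpen_mem_closure_subset_ediam_le (inter_mem hN₀ (hU.mem_nhds hyU)) hε
  obtain ⟨W₁, hW₁, hzW₁, hW₁c, hW₁d⟩ :=
    exists_isOpen_mem_closure_subset_ediam_le (inter_mem hN₁ (hU.mem_nhds hzU)) hε
  refine ⟨fun b => bif b then W₁ else W₀, fun b => ?_,
    fun u hu v hv => hN (mk_mem_prod (hW₀c (subset_closure hu)).1 (hW₁c (subset_closure hv)).1)⟩
  cases b
  exacts [⟨⟨hW₀, y, hyW₀, hyK⟩, hW₀c.trans inter_subset_right, hW₀d⟩,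
    ⟨⟨hW₁, z, hzW₁, hzK⟩, hW₁c.trans inter_subset_right, hW₁d⟩]

theorem exists_pairwise_adj_or_isSigmaIndepSet_range [PseudoMetricSpace P] [CompleteSpace P]
    [SecondCountableTopology P] (hG : IsOpen {p : V × V | G.Adj p.1 p.2}) {g : P → V}
    (hg : Continuous g) :
    (∃ f : (ℕ → Bool) → P, Pairwise fun α β => G.Adj (g (f α)) (g (f β))) ∨
      G.IsSigmaIndepSet (range g) := by
  rcases (G.sigmaIndepKernel g).eq_empty_or_nonempty with hK | hK
  · right
    simpa [hK] using G.isSigmaIndepSet_image_compl_sigmaIndepKernel g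
  · left
    exact CantorScheme.exists_pairwise_of_forall_split
      (Good := fun U => IsOpen U ∧ (U ∩ G.sigmaIndepKernel g).Nonempty)
      (R := fun u v => G.Adj (g u) (g v))
      ⟨isOpen_univ, by simpa using hK⟩ (fun U hU => hU.2.mono inter_subset_left)
      (fun _ _ h => h.symm)
      (fun U hU ε hε => exists_split_of_nonempty_inter_sigmaIndepKernel hG hg hU.1 hU.2 hε)

end SimpleGraph

namespace MeasureTheory

variable {V : Type*} [TopologicalSpace V]

theorem AnalyticSet.exists_isClique_or_isSigmaIndepSet {G : SimpleGraph V}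
    (hG : IsOpen {p : V × V | G.Adj p.1 p.2}) {s : Set V} (hs : AnalyticSet s) :
    (∃ N ⊆ s, ¬N.Countable ∧ G.IsClique N) ∨ G.IsSigmaIndepSet s := by
  obtain ⟨P, _, _, g, hg, rfl⟩ := analyticSet_iff_exists_polishSpace_range.1 hs
  let := TopologicalSpace.upgradeIsCompletelyMetrizable P
  refine (SimpleGraph.exists_pairwise_adj_or_isSigmaIndepSet_range hG hg).imp_left ?_
  rintro ⟨f, hf⟩
  have hinj : Function.Injective (g ∘ f) := fun α β h =>
    not_not.1 fun hne => (hf hne).ne h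
  have : Uncountable (ℕ → Bool) :=
    Cardinal.aleph0_lt_mk_iff.mp (by simpa using Cardinal.cantor Cardinal.aleph0)
  refine ⟨range (g ∘ f), range_comp_subset_range f g, fun hc => ?_, ?_⟩
  · have := hc.to_subtype
    exact not_countable (rangeFactorization_injective.2 hinj).countable
  · rintro _ ⟨α, rfl⟩ _ ⟨β, rfl⟩ hne
    exact hf (ne_of_apply_ne _ hne)

theorem AnalyticSet.inter [T2Space V] {s t : Set V} (hs : AnalyticSet s) (ht : AnalyticSet t) :
    AnalyticSet (s ∩ t) := by
  rw [inter_eq_iInter]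
  exact AnalyticSet.iInter fun b => by cases b <;> assumption

end MeasureTheory

section CoordFar

variable (ι : Type*) {r : ℝ}

def coordFarGraph (hr : 0 ≤ r) : SimpleGraph (ι → ℝ) where
  Adj a b := ∃ i, r < |a i - b i|
  symm := ⟨fun a b ⟨i, hi⟩ => ⟨i, abs_sub_comm (a i) (b i) ▸ hi⟩⟩
  loopless := ⟨fun a ⟨i, hi⟩ => by simp only [sub_self, abs_zero] at hi; linarith⟩

lemma isOpen_coordFarGraph_adj (hr : 0 ≤ r) :
    IsOpen {p : (ι → ℝ) × (ι → ℝ) | (coordFarGraph ι hr).Adj p.1 p.2} := by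
  simp only [coordFarGraph, ofPred_exists]
  exact isOpen_iUnion fun i => isOpen_lt continuous_const (by fun_prop)

end CoordFar

theorem dichotomous_of_analyticSet_image_coe {Y : Set Linfty}
    (hY : MeasureTheory.AnalyticSet ((fun y : Linfty => (fun n : ℕ => y n)) '' Y)) :
    Dichotomous Y := by
  intro r hr _
  set c : Linfty → ℕ → ℝ := fun y n => y n
  have hc : Function.Injective c := fun _ _ h => lp.ext h
  rcases hY.exists_isClique_or_isSigmaIndepSet (isOpen_coordFarGraph_adj ℕ hr.le) with
    ⟨N, hNY, hN, hclique⟩ | hσ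
  · refine Or.inl ⟨Y ∩ c ⁻¹' N, inter_subset_left, fun hcount => hN ?_, fun x hx y hy hxy => ?_⟩
    · rw [← inter_eq_right.2 hNY, ← image_inter_preimage]
      exact hcount.image c
    · obtain ⟨n, hn⟩ := hclique hx.2 hy.2 (hc.ne hxy)
      exact hn.trans_le (lp.norm_apply_le_norm ENNReal.top_ne_zero (x - y) n)
  · obtain ⟨F, hFY, hF⟩ := hσ.exists_iUnion_eq
    refine Or.inr ⟨fun n => Y ∩ c ⁻¹' F n, ?_, fun n => ?_⟩
    · rw [← inter_iUnion, ← preimage_iUnion, hFY]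
      exact inter_eq_left.2 (subset_preimage_image c Y)
    refine diam_le_of_forall_dist_le hr.le fun x hx y hy => ?_
    rcases eq_or_ne x y with rfl | hxy
    · simpa using hr.le
    have hnear := hF n hx.2 hy.2 (hc.ne hxy)
    simp only [coordFarGraph, not_exists, not_lt] at hnear
    exact dist_eq_norm x y ▸ lp.norm_le_of_forall_le hr.le hnear

lemma lp.enorm_eq_iSup {α : Type*} {E : α → Type*} [∀ i, NormedAddCommGroup (E i)]
    (x : lp E ∞) : ‖x‖ₑ = ⨆ i, ‖x i‖ₑ := by
  have hbdd : BddAbove (range fun i => ‖x i‖₊) :=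
    ⟨‖x‖₊, forall_mem_range.2 fun i => lp.norm_apply_le_norm ENNReal.top_ne_zero x i⟩
  have hnnnorm : ‖x‖₊ = ⨆ i, ‖x i‖₊ :=
    NNReal.eq (by rw [coe_nnnorm, lp.norm_eq_ciSup, NNReal.coe_iSup]; rfl)
  rw [enorm_eq_nnnorm, hnnnorm, ENNReal.coe_iSup hbdd]
  rfl

lemma analyticSet_image_coe_setOf_norm_eq_one {Y : Set Linfty}
    (hY : MeasureTheory.AnalyticSet ((fun y : Linfty => (fun n : ℕ => y n)) '' Y)) :
    MeasureTheory.AnalyticSet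
      ((fun y : Linfty => (fun n : ℕ => y n)) '' {x : Linfty | x ∈ Y ∧ ‖x‖ = 1}) := by
  have hnorm : ∀ x : Linfty, ‖x‖ = 1 ↔ ⨆ n, ‖x n‖ₑ = 1 := fun x => by
    rw [← lp.enorm_eq_iSup, ← ofReal_norm, ENNReal.ofReal_eq_one]
  have himage : (fun y : Linfty => (fun n : ℕ => y n)) '' {x : Linfty | x ∈ Y ∧ ‖x‖ = 1} =
      (fun y : Linfty => (fun n : ℕ => y n)) '' Y ∩ {a : ℕ → ℝ | ⨆ n, ‖a n‖ₑ = 1} := by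
    simp only [hnorm, ← image_inter_preimage]
    rfl
  rw [himage]
  exact hY.inter ((Measurable.iSup fun n => (measurable_pi_apply n).enorm)
    (measurableSet_singleton 1)).analyticSet

theorem stmt12_general (X : Submodule ℝ Linfty) :
    (∀ Y : Set Linfty, Y ⊆ (X : Set Linfty) →
        MeasureTheory.AnalyticSet ((fun y : Linfty => (fun n : ℕ => y n)) '' Y) →
        Dichotomous Y) ∧
    (MeasureTheory.AnalyticSet
        ((fun y : Linfty => (fun n : ℕ => y n)) '' (X : Set Linfty)) →
      Dichotomous {x : Linfty | x ∈ X ∧ ‖x‖ = 1}) :=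
  ⟨fun _ _ hY => dichotomous_of_analyticSet_image_coe hY,
    fun hX => dichotomous_of_analyticSet_image_coe (analyticSet_image_coe_setOf_norm_eq_one hX)⟩

theorem stmt12 (X : Submodule ℝ Linfty) (hX : IsClosed (X : Set Linfty)) :
    (∀ Y : Set Linfty, Y ⊆ (X : Set Linfty) →
        MeasureTheory.AnalyticSet ((fun y : Linfty => (fun n : ℕ => y n)) '' Y) →
        Dichotomous Y) ∧
    (MeasureTheory.AnalyticSet
        ((fun y : Linfty => (fun n : ℕ => y n)) '' (X : Set Linfty)) →
      Dichotomous {x : Linfty | x ∈ X ∧ ‖x‖ = 1}) :=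
  stmt12_general X
end

section
/- Let 1 < p < ∞, let ε > 0, and let Γ be a set of cardinality 2^ω. Then the unit sphere of ℓ_p(Γ) is the union of countably many sets each of diameter at most 2^{1/p} + ε. -/
open scoped ENNReal

namespace Stmt13Aux

variable {Γ : Type} {p : ℝ≥0∞} [Fact (1 ≤ p)]

open Classical in
/-- Restriction of an `lp` element to a set of coordinates. -/
noncomputable def rst (hp : 0 < p.toReal) (x : lp (fun _ : Γ => ℝ) p) (s : Set Γ) :
    lp (fun _ : Γ => ℝ) p :=
  ⟨fun γ => if γ ∈ s then x γ else 0, by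
    apply memℓp_gen
    refine Summable.of_nonneg_of_le (fun γ => by positivity) (fun γ => ?_)
      ((lp.memℓp x).summable hp)
    by_cases h : γ ∈ s
    · rw [if_pos h]
    · rw [if_neg h, norm_zero, Real.zero_rpow hp.ne']
      positivity⟩

open Classical in
@[simp] lemma rst_apply (hp : 0 < p.toReal) (x : lp (fun _ : Γ => ℝ) p) (s : Set Γ) (γ : Γ) :
    rst hp x s γ = if γ ∈ s then x γ else 0 := rfl

end Stmt13Aux

open Stmt13Aux

/- STATEMENT 13: Let `1 < p < ∞`, `ε > 0` and let `Γ` be a set of cardinality `2^ω`.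
Then the unit sphere of `ℓ_p(Γ)` is the union of countably many sets each of diameter
at most `2^(1/p) + ε`. -/
set_option maxHeartbeats 2000000 in
theorem stmt13 (p : ℝ≥0∞) [Fact (1 ≤ p)] (hp1 : 1 < p) (hptop : p ≠ ∞)
    (Γ : Type) (hΓ : Cardinal.mk Γ = Cardinal.continuum)
    (ε : ℝ) (hε : 0 < ε) :
    ∃ f : ℕ → Set (lp (fun _ : Γ => ℝ) p),
      (⋃ n, f n) = {x : lp (fun _ : Γ => ℝ) p | ‖x‖ = 1} ∧
      ∀ n, Metric.diam (f n) ≤ (2 : ℝ) ^ (1 / p.toReal) + ε := by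
  classical
  set q := p.toReal with hqdef
  have hq1 : 1 < q := by
    rw [hqdef, ← ENNReal.toReal_one]
    exact (ENNReal.toReal_lt_toReal (by simp) hptop).mpr hp1
  have hq0 : 0 < q := by linarith
  -- an injection of `Γ` into the branches of the binary tree
  obtain ⟨e⟩ : Nonempty (Γ ≃ (ℕ → Bool)) := by
    rw [← Cardinal.eq, hΓ]
    simp [Cardinal.mk_arrow]
  set ι : Γ → ℕ → Bool := ⇑e with hι
  have ιinj : Function.Injective ι := e.injective
  set η := ε / 4 with hηdef
  have hη : 0 < η := by positivity
  set E := lp (fun _ : Γ => ℝ) p with hE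
  -- prefixes
  set pre : (n : ℕ) → Γ → (Fin n → Bool) := fun n γ i => ι γ i with hpre
  -- the countable code type
  set C := Σ n : ℕ, ((Fin n → Bool) → Option ℚ) with hC
  set K : C → ℕ := fun c => (Finset.univ.filter (fun t => (c.2 t).isSome)).card with hK
  set P : C → Set E := fun c =>
    {x | ‖x‖ = 1 ∧ ∃ F : Finset Γ,
      (∑' γ, ‖rst hq0 x (↑F)ᶜ γ‖ ^ q) ≤ η ^ q ∧
      (∀ γ ∈ F, ∀ γ' ∈ F, pre c.1 γ = pre c.1 γ' → γ = γ') ∧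
      (∀ γ ∈ F, ∃ r : ℚ, c.2 (pre c.1 γ) = some r ∧ |x γ - (r : ℝ)| ≤ η / (K c + 1))} with hP
  haveI : Countable C := by infer_instance
  obtain ⟨g, hg⟩ := exists_surjective_nat C
  refine ⟨fun n => P (g n), ?_, ?_⟩
  · ext x
    simp only [Set.mem_iUnion, Set.mem_setOf_eq, hP]
    constructor
    · rintro ⟨n, hx, -⟩
      exact hx
    · intro hx1
      -- find the finite set `F` carrying all but `η` of the mass of `x`
      obtain ⟨F, hF⟩ : ∃ F : Finset Γ, (∑' γ : {γ' // γ' ∉ F}, ‖x ↑γ‖ ^ q) ≤ η ^ q := by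
        have h := (tendsto_tsum_compl_atTop_zero (fun γ : Γ => ‖x γ‖ ^ q)).eventually_lt_const
          (show (0 : ℝ) < η ^ q by positivity)
        obtain ⟨F, hF⟩ := h.exists
        exact ⟨F, hF.le⟩
      have htail : (∑' γ, ‖rst hq0 x (↑F)ᶜ γ‖ ^ q) ≤ η ^ q := by
        have h1 : (∑' γ, ‖rst hq0 x (↑F)ᶜ γ‖ ^ q)
            = ∑' γ, Set.indicator ((↑F : Set Γ)ᶜ) (fun γ => ‖x γ‖ ^ q) γ := by
          refine tsum_congr fun γ => ?_
          by_cases h : γ ∈ ((↑F : Set Γ)ᶜ)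
          · rw [Set.indicator_of_mem h, rst_apply, if_pos h]
          · rw [Set.indicator_of_notMem h, rst_apply, if_neg h, norm_zero,
              Real.zero_rpow hq0.ne']
        have h2 : (∑' γ : ((↑F : Set Γ)ᶜ : Set Γ), ‖x ↑γ‖ ^ q)
            = ∑' γ, Set.indicator ((↑F : Set Γ)ᶜ) (fun γ => ‖x γ‖ ^ q) γ :=
          tsum_subtype ((↑F : Set Γ)ᶜ) (fun γ => ‖x γ‖ ^ q)
        have h3 : (∑' γ : {γ' // γ' ∉ F}, ‖x ↑γ‖ ^ q)
            = ∑' γ : ((↑F : Set Γ)ᶜ : Set Γ), ‖x ↑γ‖ ^ q :=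
          (Equiv.subtypeEquivRight (fun γ => by simp)).tsum_eq
            (fun γ : ((↑F : Set Γ)ᶜ : Set Γ) => ‖x ↑γ‖ ^ q)
        rw [h1, ← h2, ← h3]
        exact hF
      -- find a level `n` separating the elements of `F`
      obtain ⟨n, hn⟩ : ∃ n, ∀ γ ∈ F, ∀ γ' ∈ F, pre n γ = pre n γ' → γ = γ' := by
        set D : Γ → Γ → ℕ :=
          fun a b => if h : ι a = ι b then 0 else Nat.find (Function.ne_iff.mp h) with hD
        refine ⟨(F.sup fun a => F.sup fun b => D a b) + 1, fun γ hγ γ' hγ' hpq => ?_⟩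
        by_contra hne
        have hιne : ι γ ≠ ι γ' := fun h => hne (ιinj h)
        have hspec : ι γ (D γ γ') ≠ ι γ' (D γ γ') := by
          rw [hD]
          simp only [dif_neg hιne]
          exact Nat.find_spec (Function.ne_iff.mp hιne)
        have hle : D γ γ' ≤ F.sup fun a => F.sup fun b => D a b :=
          le_trans (Finset.le_sup (f := fun b => D γ b) hγ')
            (Finset.le_sup (f := fun a => F.sup fun b => D a b) hγ)
        exact hspec (congrFun hpq ⟨D γ γ', Nat.lt_succ_of_le hle⟩)
      -- choose rational approximations and build the code
      have hprec : (0 : ℝ) < η / (F.card + 1) := by positivity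
      have hra' : ∀ γ : Γ, |x γ - ((exists_rat_near (x γ) hprec).choose : ℝ)| < η / (F.card + 1) :=
        fun γ => (exists_rat_near (x γ) hprec).choose_spec
      set ra : Γ → ℚ := fun γ => (exists_rat_near (x γ) hprec).choose with hrad
      set c : C := ⟨n, fun t => if h : ∃ γ ∈ F, pre n γ = t then some (ra h.choose) else none⟩
        with hc
      have hKc : K c ≤ F.card := by
        rw [hK]
        refine le_trans (Finset.card_le_card ?_) (Finset.card_image_le (s := F) (f := pre n))
        intro t ht
        simp only [Finset.mem_filter, Finset.mem_univ, true_and, hc] at ht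
        by_cases h : ∃ γ ∈ F, pre n γ = t
        · obtain ⟨γ, hγF, hγt⟩ := h
          exact Finset.mem_image.mpr ⟨γ, hγF, hγt⟩
        · change ((if h : ∃ γ ∈ F, pre n γ = t then some (ra h.choose) else none : Option ℚ)).isSome = true at ht
          rw [dif_neg h] at ht
          simp at ht
      obtain ⟨m, hm⟩ := hg c
      refine ⟨m, ?_⟩
      rw [hm, hc]
      refine ⟨hx1, F, htail, fun γ hγ γ' hγ' h => hn γ hγ γ' hγ' h, fun γ hγ => ?_⟩
      have hex : ∃ γ' ∈ F, pre n γ' = pre n γ := ⟨γ, hγ, rfl⟩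
      have hchoose : hex.choose = γ :=
        hn _ hex.choose_spec.1 γ hγ hex.choose_spec.2
      refine ⟨ra γ, ?_, ?_⟩
      · show (if h : ∃ γ' ∈ F, pre n γ' = pre n γ then some (ra h.choose) else none)
          = some (ra γ)
        rw [dif_pos hex, hchoose]
      · refine le_trans (hra' γ).le ?_
        have h1 : ((K c : ℝ) + 1) ≤ (F.card : ℝ) + 1 :=
          by have := (Nat.cast_le (α := ℝ)).mpr hKc; linarith
        rw [div_le_div_iff₀ (add_pos_of_nonneg_of_pos (Nat.cast_nonneg _) one_pos)
          (add_pos_of_nonneg_of_pos (Nat.cast_nonneg _) one_pos)]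
        exact mul_le_mul_of_nonneg_left h1 hη.le
  · intro n
    have h2 : (0 : ℝ) ≤ (2 : ℝ) ^ (1 / q) + ε := by positivity
    refine Metric.diam_le_of_forall_dist_le h2 fun x hx y hy => ?_
    simp only [hP, Set.mem_setOf_eq] at hx hy
    obtain ⟨hx1, F, hxt, hxinj, hxval⟩ := hx
    obtain ⟨hy1, G, hyt, hyinj, hyval⟩ := hy
    set nc := (g n).1 with hnc
    set Kn := K (g n) with hKn
    -- pointwise bound on the common support
    have hFG : ∀ γ ∈ F ∩ G, |x γ - y γ| ≤ 2 * η / (Kn + 1) := by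
      intro γ hγ
      obtain ⟨hγF, hγG⟩ := Finset.mem_inter.mp hγ
      obtain ⟨r, hcr, hxr⟩ := hxval γ hγF
      obtain ⟨r', hcr', hyr⟩ := hyval γ hγG
      have hrr : r = r' := by
        rw [hcr] at hcr'
        exact Option.some_inj.mp hcr'
      subst hrr
      calc |x γ - y γ| = |(x γ - (r : ℝ)) + ((r : ℝ) - y γ)| := by ring_nf
        _ ≤ |x γ - (r : ℝ)| + |(r : ℝ) - y γ| := abs_add_le _ _
        _ = |x γ - (r : ℝ)| + |y γ - (r : ℝ)| := by rw [abs_sub_comm ((r : ℝ)) (y γ)]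
        _ ≤ η / (Kn + 1) + η / (Kn + 1) := add_le_add hxr hyr
        _ = 2 * η / (Kn + 1) := by ring
    -- cardinality bound for the common support
    have hcardFG : ((F ∩ G).card : ℝ) ≤ (Kn : ℝ) := by
      have hcard : (F ∩ G).card ≤ Kn := by
        rw [hKn, hK]
        refine Finset.card_le_card_of_injOn (pre nc) ?_ ?_
        · intro γ hγ
          simp only [Finset.mem_coe, Finset.mem_filter, Finset.mem_univ, true_and]
          obtain ⟨r, hcr, -⟩ := hxval γ (Finset.mem_inter.mp hγ).1
          rw [hcr]
          rfl
        · intro a ha b hb hab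
          exact hxinj a (Finset.mem_inter.mp ha).1 b (Finset.mem_inter.mp hb).1 hab
      exact_mod_cast hcard
    set a := rst hq0 (x - y) ↑(F ∩ G) with hadef
    set m := rst hq0 x ↑(F \ G) - rst hq0 y ↑(G \ F) with hmdef
    set u := rst hq0 x (↑F)ᶜ with hudef
    set v := rst hq0 y (↑G)ᶜ with hvdef
    -- the decomposition
    have hdec : x - y = a + m + (u - v) := by
      refine lp.ext ?_
      funext γ
      have := lp.coeFn_sub x y
      simp only [hadef, hmdef, hudef, hvdef, lp.coeFn_add, lp.coeFn_sub, Pi.add_apply,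
        Pi.sub_apply, rst_apply, Finset.coe_inter, Finset.coe_sdiff, Set.mem_inter_iff,
        Set.mem_diff, Finset.mem_coe, Set.mem_compl_iff]
      by_cases hF : γ ∈ F <;> by_cases hG : γ ∈ G <;>
        simp [hF, hG, lp.coeFn_sub x y, Pi.sub_apply] <;> ring
    -- norm estimates
    have hnormu : ‖u‖ ≤ η := lp.norm_le_of_tsum_le hq0 hη.le hxt
    have hnormv : ‖v‖ ≤ η := lp.norm_le_of_tsum_le hq0 hη.le hyt
    have hnorma : ‖a‖ ≤ 2 * η := by
      refine lp.norm_le_of_tsum_le hq0 (by positivity) ?_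
      have hvanish : ∀ γ ∉ F ∩ G, ‖a γ‖ ^ q = 0 := by
        intro γ hγ
        rw [hadef, rst_apply, if_neg (by simpa using hγ), norm_zero, Real.zero_rpow hq0.ne']
      rw [tsum_eq_sum hvanish]
      have hterm : ∀ γ ∈ F ∩ G, ‖a γ‖ ^ q ≤ (2 * η / (Kn + 1)) ^ q := by
        intro γ hγ
        rw [hadef, rst_apply, if_pos (by simpa using hγ)]
        refine Real.rpow_le_rpow (norm_nonneg _) ?_ hq0.le
        have hsub : (x - y) γ = x γ - y γ := by rw [lp.coeFn_sub]; rfl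
        rw [hsub, Real.norm_eq_abs]
        exact hFG γ hγ
      have hKB : (0 : ℝ) < ((Kn : ℝ) + 1) ^ q :=
        Real.rpow_pos_of_pos (add_pos_of_nonneg_of_pos (Nat.cast_nonneg _) one_pos) q
      have hKle : (Kn : ℝ) ≤ ((Kn : ℝ) + 1) ^ q := by
        have h1 : ((Kn : ℝ) + 1) ^ (1 : ℝ) ≤ ((Kn : ℝ) + 1) ^ q :=
          Real.rpow_le_rpow_of_exponent_le (by linarith [Nat.cast_nonneg (α := ℝ) Kn]) hq1.le
        rw [Real.rpow_one] at h1
        linarith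
      calc (∑ γ ∈ F ∩ G, ‖a γ‖ ^ q) ≤ ∑ _γ ∈ F ∩ G, (2 * η / (Kn + 1)) ^ q :=
            Finset.sum_le_sum hterm
        _ = ((F ∩ G).card : ℝ) * (2 * η / (Kn + 1)) ^ q := by
            rw [Finset.sum_const, nsmul_eq_mul]
        _ ≤ (Kn : ℝ) * (2 * η / (Kn + 1)) ^ q :=
            mul_le_mul_of_nonneg_right hcardFG
                (Real.rpow_nonneg (div_nonneg (by linarith) (by linarith [Nat.cast_nonneg (α := ℝ) Kn])) _)
        _ = (Kn : ℝ) * ((2 * η) ^ q / ((Kn : ℝ) + 1) ^ q) := by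
            rw [Real.div_rpow (by linarith) (by linarith [Nat.cast_nonneg (α := ℝ) Kn])]
        _ ≤ (2 * η) ^ q := by
            rw [mul_div_assoc', div_le_iff₀ hKB]
            have h2η : (0 : ℝ) ≤ (2 * η) ^ q := by positivity
            nlinarith [mul_le_mul_of_nonneg_right hKle h2η]
    have hnormm : ‖m‖ ≤ (2 : ℝ) ^ (1 / q) := by
      refine lp.norm_le_of_tsum_le hq0 (by positivity) ?_
      have hCq : ((2 : ℝ) ^ (1 / q)) ^ q = 2 := by
        rw [← Real.rpow_mul (by norm_num : (0 : ℝ) ≤ 2), one_div,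
          inv_mul_cancel₀ hq0.ne', Real.rpow_one]
      rw [hCq]
      have hpt : ∀ γ, ‖m γ‖ ^ q ≤ ‖x γ‖ ^ q + ‖y γ‖ ^ q := by
        intro γ
        have hmγ : m γ = rst hq0 x ↑(F \ G) γ - rst hq0 y ↑(G \ F) γ := by
          rw [hmdef, lp.coeFn_sub, Pi.sub_apply]
        have hxq : (0 : ℝ) ≤ ‖x γ‖ ^ q := by positivity
        have hyq : (0 : ℝ) ≤ ‖y γ‖ ^ q := by positivity
        by_cases h1 : γ ∈ F \ G <;> by_cases h2 : γ ∈ G \ F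
        · exfalso
          exact (Finset.mem_sdiff.mp h2).2 (Finset.mem_sdiff.mp h1).1
        · rw [hmγ, rst_apply, rst_apply, if_pos (Finset.mem_coe.mpr h1),
            if_neg (fun hc => h2 (Finset.mem_coe.mp hc)), sub_zero]
          linarith
        · rw [hmγ, rst_apply, rst_apply, if_neg (fun hc => h1 (Finset.mem_coe.mp hc)),
            if_pos (Finset.mem_coe.mpr h2), zero_sub, norm_neg]
          linarith
        · rw [hmγ, rst_apply, rst_apply, if_neg (fun hc => h1 (Finset.mem_coe.mp hc)),
            if_neg (fun hc => h2 (Finset.mem_coe.mp hc)), sub_zero, norm_zero,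
            Real.zero_rpow hq0.ne']
          positivity
      have hsx : Summable fun γ => ‖x γ‖ ^ q := (lp.memℓp x).summable hq0
      have hsy : Summable fun γ => ‖y γ‖ ^ q := (lp.memℓp y).summable hq0
      calc (∑' γ, ‖m γ‖ ^ q) ≤ ∑' γ, (‖x γ‖ ^ q + ‖y γ‖ ^ q) :=
            Summable.tsum_le_tsum hpt ((lp.memℓp m).summable hq0) (hsx.add hsy)
        _ = (∑' γ, ‖x γ‖ ^ q) + ∑' γ, ‖y γ‖ ^ q := Summable.tsum_add hsx hsy
        _ = 2 := by
            rw [← lp.norm_rpow_eq_tsum hq0 x, ← lp.norm_rpow_eq_tsum hq0 y, hx1, hy1,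
              Real.one_rpow]
            norm_num
    rw [dist_eq_norm, hdec]
    calc ‖a + m + (u - v)‖ ≤ ‖a + m‖ + ‖u - v‖ := norm_add_le _ _
      _ ≤ ‖a‖ + ‖m‖ + (‖u‖ + ‖v‖) := add_le_add (norm_add_le _ _) (norm_sub_le _ _)
      _ ≤ 2 * η + (2 : ℝ) ^ (1 / q) + (η + η) :=
          add_le_add (add_le_add hnorma hnormm) (add_le_add hnormu hnormv)
      _ = (2 : ℝ) ^ (1 / q) + ε := by
          rw [hηdef]
          ring
end

section
/- Let 1 < p < ∞ and let Γ be a set of cardinality ℵ₁. Then there is no uncountable (2^{1/p}+)-separated set in the unit sphere of ℓ_p(Γ); that is, every uncountable subset of the unit sphere contains two distinct points x, y with ‖x − y‖_p ≤ 2^{1/p}. -/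
open scoped ENNReal

section Aux

open Filter Real

/-- Binomial-type bound. -/
lemma aux_pow_le (n : ℕ) : ∀ u : ℝ, 0 ≤ u → u ≤ 1 → (1 + u) ^ n ≤ 1 + ((2 : ℝ) ^ n - 1) * u := by
  induction n with
  | zero => intro u h0 h1; simp
  | succ n ih =>
      intro u h0 h1
      have h2 : (1 + u) ^ (n + 1) = (1 + u) ^ n * (1 + u) := by ring
      have h3 := ih u h0 h1
      have hpos : (0:ℝ) < 1 + u := by linarith
      have h2n : (1:ℝ) ≤ 2 ^ n := one_le_pow₀ (by norm_num)
      have h4 : (1 + u) ^ (n + 1) ≤ (1 + ((2:ℝ) ^ n - 1) * u) * (1 + u) := by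
        rw [h2]; exact mul_le_mul_of_nonneg_right h3 hpos.le
      have h5 : (0:ℝ) ≤ ((2:ℝ) ^ n - 1) * (u - u * u) := by
        have hu : 0 ≤ u - u * u := by nlinarith [mul_nonneg h0 (sub_nonneg.mpr h1)]
        exact mul_nonneg (by linarith) hu
      have h6 : (2:ℝ) ^ (n + 1) = 2 * 2 ^ n := by rw [pow_succ]; ring
      nlinarith

/-- rpow version via the ceiling. -/
lemma aux_rpow_le (q u : ℝ) (hq : 0 < q) (h0 : 0 ≤ u) (h1 : u ≤ 1) :
    (1 + u) ^ q ≤ 1 + (2 : ℝ) ^ (Nat.ceil q) * u := by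
  have h11 : (1:ℝ) ≤ 1 + u := by linarith
  calc (1 + u) ^ q ≤ (1 + u) ^ ((Nat.ceil q : ℕ) : ℝ) :=
        Real.rpow_le_rpow_of_exponent_le h11 (Nat.le_ceil q)
    _ = (1 + u) ^ (Nat.ceil q : ℕ) := Real.rpow_natCast _ _
    _ ≤ 1 + ((2:ℝ) ^ (Nat.ceil q) - 1) * u := aux_pow_le _ u h0 h1
    _ ≤ 1 + (2:ℝ) ^ (Nat.ceil q) * u := by nlinarith

/-- Monotone rpow increment bound. -/
lemma rpow_diff_le (q : ℝ) (hq0 : 0 < q) (a d : ℝ) (ha : 0 < a) (hd : 0 ≤ d) (hda : d ≤ a) :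
    (a + d) ^ q - a ^ q ≤ (2:ℝ) ^ (Nat.ceil q) * (d / a) * a ^ q := by
  have hu0 : 0 ≤ d / a := div_nonneg hd ha.le
  have hu1 : d / a ≤ 1 := (div_le_one ha).mpr hda
  have haq : 0 ≤ a ^ q := Real.rpow_nonneg ha.le q
  have hsplit : a + d = a * (1 + d / a) := by field_simp
  have h1 : (a + d) ^ q = a ^ q * (1 + d / a) ^ q := by
    rw [hsplit, Real.mul_rpow ha.le (by linarith)]
  have h3 := aux_rpow_le q (d / a) hq0 hu0 hu1
  have h4 : a ^ q * (1 + d / a) ^ q ≤ a ^ q * (1 + (2:ℝ) ^ (Nat.ceil q) * (d / a)) :=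
    mul_le_mul_of_nonneg_left h3 haq
  rw [h1]
  nlinarith

set_option maxHeartbeats 1000000 in
/-- The key scalar inequality for the Brezis–Lieb argument. -/
lemma scalar_ineq (q : ℝ) (hq : 1 ≤ q) {δ : ℝ} (hδ0 : 0 < δ) (hδ1 : δ ≤ 1) :
    ∃ C : ℝ, 0 < C ∧ ∀ s t : ℝ,
      abs (|s + t| ^ q - |s| ^ q - |t| ^ q) ≤ δ * |s| ^ q + C * |t| ^ q := by
  have hq0 : (0:ℝ) < q := lt_of_lt_of_le one_pos hq
  obtain ⟨K, hKdef⟩ : ∃ K : ℝ, K = (2:ℝ) ^ (Nat.ceil q) := ⟨_, rfl⟩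
  have hK1 : (1:ℝ) ≤ K := by rw [hKdef]; exact one_le_pow₀ (by norm_num)
  have hK0 : (0:ℝ) < K := lt_of_lt_of_le one_pos hK1
  obtain ⟨ε, hεdef⟩ : ∃ ε : ℝ, ε = δ / (4 * K) := ⟨_, rfl⟩
  have hε0 : 0 < ε := by rw [hεdef]; positivity
  have hεhalf : ε ≤ 1 / 2 := by
    rw [hεdef, div_le_iff₀ (by positivity)]
    nlinarith
  have hKε4 : K * ε = δ / 4 := by rw [hεdef]; field_simp
  obtain ⟨C, hCdef⟩ : ∃ C : ℝ, C = (1 + 1/ε) ^ q + (1/ε) ^ q + 1 := ⟨_, rfl⟩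
  have hC1 : (1:ℝ) ≤ C := by
    rw [hCdef]
    have h1 : (0:ℝ) ≤ (1 + 1/ε) ^ q := Real.rpow_nonneg (by positivity) q
    have h2 : (0:ℝ) ≤ (1/ε) ^ q := Real.rpow_nonneg (by positivity) q
    linarith
  have hC0 : (0:ℝ) < C := lt_of_lt_of_le one_pos hC1
  refine ⟨C, hC0, fun s t => ?_⟩
  obtain ⟨a, hadef⟩ : ∃ a : ℝ, a = |s| := ⟨_, rfl⟩
  obtain ⟨b, hbdef⟩ : ∃ b : ℝ, b = |t| := ⟨_, rfl⟩
  rw [← hadef, ← hbdef]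
  have ha : 0 ≤ a := hadef ▸ abs_nonneg s
  have hb : 0 ≤ b := hbdef ▸ abs_nonneg t
  have haq : 0 ≤ a ^ q := Real.rpow_nonneg ha q
  have hbq : 0 ≤ b ^ q := Real.rpow_nonneg hb q
  have hst : |s + t| ≤ a + b := by rw [hadef, hbdef]; exact abs_add_le s t
  have hst2 : a - b ≤ |s + t| := by
    have h := abs_add_le (s + t) (-t)
    simp only [add_neg_cancel_right, abs_neg] at h
    rw [hadef, hbdef]; linarith
  have hstq0 : 0 ≤ |s + t| ^ q := Real.rpow_nonneg (abs_nonneg _) q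
  by_cases hcase : b ≤ ε * a
  · -- small-t case
    rcases eq_or_lt_of_le ha with hA | hA
    · -- a = 0, then b = 0
      have haz : a = 0 := hA.symm
      have hbz : b = 0 := le_antisymm (by rw [haz] at hcase; simpa using hcase) hb
      have hs0 : s = 0 := by rw [hadef] at haz; exact abs_eq_zero.mp haz
      have ht0 : t = 0 := by rw [hbdef] at hbz; exact abs_eq_zero.mp hbz
      rw [haz, hbz, hs0, ht0]
      simp [Real.zero_rpow hq0.ne']
    · have ha0 : 0 < a := hA
      -- upper bound
      have hub : |s + t| ^ q - a ^ q ≤ (δ/4) * a ^ q := by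
        have h1 : |s + t| ^ q ≤ (a + b) ^ q :=
          Real.rpow_le_rpow (abs_nonneg _) hst hq0.le
        have h2 : (a + b) ^ q - a ^ q ≤ K * (b / a) * a ^ q := by
          have := rpow_diff_le q hq0 a b ha0 hb (by nlinarith)
          rw [← hKdef] at this
          exact this
        have h3 : K * (b / a) * a ^ q ≤ K * ε * a ^ q := by
          have hba : b / a ≤ ε := (div_le_iff₀ ha0).mpr (by linarith)
          have := mul_le_mul_of_nonneg_left hba hK0.le
          exact mul_le_mul_of_nonneg_right this haq
        rw [hKε4] at h3
        linarith
      -- lower bound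
      have hab2 : b ≤ a - b := by nlinarith
      have hcpos : 0 < a - b := by nlinarith
      have hlb : a ^ q - |s + t| ^ q ≤ (δ/2) * a ^ q := by
        have h1 : a ^ q - (a - b) ^ q ≤ K * (b / (a - b)) * (a - b) ^ q := by
          have := rpow_diff_le q hq0 (a - b) b hcpos hb hab2
          rw [← hKdef] at this
          have heq : a - b + b = a := by ring
          rw [heq] at this
          linarith
        have h2 : K * (b / (a - b)) * (a - b) ^ q ≤ K * (2 * ε) * a ^ q := by
          have hcb : b / (a - b) ≤ 2 * ε := by
            rw [div_le_iff₀ hcpos]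
            nlinarith
          have hcq : (a - b) ^ q ≤ a ^ q :=
            Real.rpow_le_rpow hcpos.le (by linarith) hq0.le
          have hcq0 : 0 ≤ (a - b) ^ q := Real.rpow_nonneg hcpos.le q
          have e1 : K * (b / (a - b)) * (a - b) ^ q ≤ K * (2 * ε) * (a - b) ^ q := by
            have := mul_le_mul_of_nonneg_left hcb hK0.le
            exact mul_le_mul_of_nonneg_right this hcq0
          have e2 : K * (2 * ε) * (a - b) ^ q ≤ K * (2 * ε) * a ^ q := by
            have hKε0 : 0 ≤ K * (2 * ε) := by positivity
            exact mul_le_mul_of_nonneg_left hcq hKε0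
          linarith
        have h3 : K * (2 * ε) * a ^ q = (δ/2) * a ^ q := by
          have : K * (2 * ε) = δ / 2 := by rw [hεdef]; field_simp; ring
          rw [this]
        have h4 : (a - b) ^ q ≤ |s + t| ^ q :=
          Real.rpow_le_rpow hcpos.le hst2 hq0.le
        linarith
      -- combine
      have hbqC : b ^ q ≤ C * b ^ q := le_mul_of_one_le_left hbq hC1
      have hub' : |s + t| ^ q - a ^ q ≤ δ * a ^ q := by
        have : (δ/4) * a ^ q ≤ δ * a ^ q :=
          mul_le_mul_of_nonneg_right (by linarith) haq
        linarith
      have hlb' : a ^ q - |s + t| ^ q ≤ δ * a ^ q := by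
        have : (δ/2) * a ^ q ≤ δ * a ^ q :=
          mul_le_mul_of_nonneg_right (by linarith) haq
        linarith
      have hCb0 : 0 ≤ C * b ^ q := mul_nonneg hC0.le hbq
      rw [abs_le]
      constructor
      · linarith
      · linarith
  · -- big-t case : ε * a < b
    push_neg at hcase
    have hb0 : 0 < b := lt_of_le_of_lt (mul_nonneg hε0.le ha) hcase
    have haεb : a ≤ (1/ε) * b := by
      have h4 : (1/ε) * (ε * a) ≤ (1/ε) * b :=
        mul_le_mul_of_nonneg_left hcase.le (by positivity)
      have h5 : (1/ε) * (ε * a) = a := by field_simp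
      linarith
    have h1 : a ^ q ≤ (1/ε) ^ q * b ^ q := by
      calc a ^ q ≤ ((1/ε) * b) ^ q := Real.rpow_le_rpow ha haεb hq0.le
        _ = (1/ε) ^ q * b ^ q := Real.mul_rpow (by positivity) hb
    have h2 : |s + t| ^ q ≤ (1 + 1/ε) ^ q * b ^ q := by
      have hsab : |s + t| ≤ (1 + 1/ε) * b := by
        calc |s + t| ≤ a + b := hst
          _ ≤ (1/ε) * b + b := by linarith
          _ = (1 + 1/ε) * b := by ring
      calc |s + t| ^ q ≤ ((1 + 1/ε) * b) ^ q :=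
            Real.rpow_le_rpow (abs_nonneg _) hsab hq0.le
        _ = (1 + 1/ε) ^ q * b ^ q := Real.mul_rpow (by positivity) hb
    have hδA : 0 ≤ δ * a ^ q := mul_nonneg hδ0.le haq
    rw [hCdef, abs_le]
    constructor
    · linarith
    · linarith

/-- `|x+y|^q ≤ 2^q * (|x|^q + |y|^q)`. -/
lemma abs_add_rpow_le (q : ℝ) (hq0 : 0 < q) (x y : ℝ) :
    |x + y| ^ q ≤ (2:ℝ) ^ q * (|x| ^ q + |y| ^ q) := by
  rcases le_total |x| |y| with h | h
  · have h1 : |x + y| ≤ 2 * |y| := by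
      calc |x + y| ≤ |x| + |y| := abs_add_le _ _
        _ ≤ 2 * |y| := by linarith
    calc |x + y| ^ q ≤ (2 * |y|) ^ q := Real.rpow_le_rpow (abs_nonneg _) h1 hq0.le
      _ = 2 ^ q * |y| ^ q := Real.mul_rpow (by norm_num) (abs_nonneg _)
      _ ≤ 2 ^ q * (|x| ^ q + |y| ^ q) := by
          have := Real.rpow_nonneg (abs_nonneg x) q
          have h2q : (0:ℝ) ≤ 2 ^ q := Real.rpow_nonneg (by norm_num) q
          nlinarith
  · have h1 : |x + y| ≤ 2 * |x| := by
      calc |x + y| ≤ |x| + |y| := abs_add_le _ _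
        _ ≤ 2 * |x| := by linarith
    calc |x + y| ^ q ≤ (2 * |x|) ^ q := Real.rpow_le_rpow (abs_nonneg _) h1 hq0.le
      _ = 2 ^ q * |x| ^ q := Real.mul_rpow (by norm_num) (abs_nonneg _)
      _ ≤ 2 ^ q * (|x| ^ q + |y| ^ q) := by
          have := Real.rpow_nonneg (abs_nonneg y) q
          have h2q : (0:ℝ) ≤ 2 ^ q := Real.rpow_nonneg (by norm_num) q
          nlinarith

/-- Brezis–Lieb type lemma along a filter. -/
lemma BLsum {Γ : Type*} {ι : Type*} {l : Filter ι} {q M : ℝ} (hq : 1 ≤ q) (hM : 0 ≤ M)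
    (f : ι → Γ → ℝ) (g : Γ → ℝ)
    (hf : ∀ n, Summable fun γ => |f n γ| ^ q)
    (hfM : ∀ n, (∑' γ, |f n γ| ^ q) ≤ M)
    (hg : Summable fun γ => |g γ| ^ q)
    (h0 : ∀ γ, Filter.Tendsto (fun n => f n γ) l (nhds 0)) :
    Filter.Tendsto (fun n => (∑' γ, |f n γ + g γ| ^ q) - (∑' γ, |f n γ| ^ q)) l
      (nhds (∑' γ, |g γ| ^ q)) := by
  have hq0 : (0:ℝ) < q := lt_of_lt_of_le one_pos hq
  -- summability facts
  have habs : ∀ (h : Γ → ℝ), (fun γ => |h γ| ^ q) = fun γ => |h γ| ^ q := fun _ => rfl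
  have hfg : ∀ n, Summable fun γ => |f n γ + g γ| ^ q := by
    intro n
    refine Summable.of_nonneg_of_le (fun γ => Real.rpow_nonneg (abs_nonneg _) q)
      (fun γ => abs_add_rpow_le q hq0 (f n γ) (g γ)) ?_
    exact (((hf n).add hg).mul_left ((2:ℝ) ^ q))
  set φ : ι → Γ → ℝ := fun n γ => |f n γ + g γ| ^ q - |f n γ| ^ q - |g γ| ^ q with hφdef
  have hφsum : ∀ n, Summable fun γ => φ n γ := by
    intro n
    exact ((hfg n).sub (hf n)).sub hg
  have hφabs : ∀ n, Summable fun γ => |φ n γ| := fun n => (hφsum n).abs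
  -- rewrite target
  have heq : ∀ n, (∑' γ, |f n γ + g γ| ^ q) - (∑' γ, |f n γ| ^ q)
      = (∑' γ, φ n γ) + (∑' γ, |g γ| ^ q) := by
    intro n
    rw [hφdef]
    rw [Summable.tsum_sub ((hfg n).sub (hf n)) hg, Summable.tsum_sub (hfg n) (hf n)]
    ring
  simp only [heq]
  have main : Filter.Tendsto (fun n => ∑' γ, φ n γ) l (nhds 0) := by
    rw [Metric.tendsto_nhds]
    intro δ hδ
    -- choose parameters
    set δ₁ : ℝ := min ((δ/4) / (M + 1)) 1 with hδ₁def
    have hδ₁0 : 0 < δ₁ := lt_min (by positivity) one_pos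
    have hδ₁1 : δ₁ ≤ 1 := min_le_right _ _
    have hδ₁M : δ₁ * M ≤ δ / 4 := by
      have h1 : δ₁ ≤ (δ/4) / (M + 1) := min_le_left _ _
      have h2 : δ₁ * M ≤ ((δ/4) / (M + 1)) * M := mul_le_mul_of_nonneg_right h1 hM
      have h3 : ((δ/4) / (M + 1)) * M ≤ δ/4 := by
        rw [div_mul_eq_mul_div, div_le_iff₀ (by positivity)]
        nlinarith
      linarith
    obtain ⟨C, hC0, hC⟩ := scalar_ineq q hq hδ₁0 hδ₁1
    -- choose finite set F with small tail of g
    have hgtail : ∃ F : Finset Γ, (∑' γ : ↥((F : Set Γ)ᶜ), |g γ.1| ^ q) ≤ δ / (4 * C) := by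
      have hhs := hg.hasSum
      have hlt : (∑' γ, |g γ| ^ q) - δ / (4 * C) < ∑' γ, |g γ| ^ q := by
        have : 0 < δ / (4 * C) := by positivity
        linarith
      have hev : ∀ᶠ F in (Filter.atTop : Filter (Finset Γ)),
          (∑' γ, |g γ| ^ q) - δ / (4 * C) < ∑ γ ∈ F, |g γ| ^ q :=
        hhs.eventually (eventually_gt_nhds hlt)
      obtain ⟨F, hF⟩ := hev.exists
      refine ⟨F, ?_⟩
      have hcompl := Summable.sum_add_tsum_compl (s := F) hg
      linarith
    obtain ⟨F, hF⟩ := hgtail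
    -- finite part tends to zero
    have hcont : ∀ γ : Γ, Filter.Tendsto (fun n => |φ n γ|) l (nhds 0) := by
      intro γ
      have hψ : Continuous fun t : ℝ => |t + g γ| ^ q - |t| ^ q - |g γ| ^ q := by
        have habsq : Continuous fun t : ℝ => |t| ^ q := by
          rw [continuous_iff_continuousAt]
          intro t
          exact (Real.continuousAt_rpow_const _ _ (Or.inr hq0.le)).comp
            continuous_abs.continuousAt
        have h1 : Continuous fun t : ℝ => |t + g γ| ^ q :=
          habsq.comp (continuous_id.add continuous_const)
        exact (h1.sub habsq).sub continuous_const
      have h2 : Filter.Tendsto (fun n => |f n γ + g γ| ^ q - |f n γ| ^ q - |g γ| ^ q) l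
          (nhds (|(0:ℝ) + g γ| ^ q - |(0:ℝ)| ^ q - |g γ| ^ q)) :=
        (hψ.tendsto 0).comp (h0 γ)
      have h3 : |(0:ℝ) + g γ| ^ q - |(0:ℝ)| ^ q - |g γ| ^ q = 0 := by
        simp [Real.zero_rpow hq0.ne']
      rw [h3] at h2
      have h4 := (continuous_abs.tendsto 0).comp h2
      rw [abs_zero] at h4
      exact h4
    have hfin : Filter.Tendsto (fun n => ∑ γ ∈ F, |φ n γ|) l (nhds 0) := by
      have := tendsto_finset_sum F (fun γ _ => hcont γ)
      simpa using this
    have hfinev : ∀ᶠ n in l, ∑ γ ∈ F, |φ n γ| < δ / 4 :=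
      hfin.eventually_lt_const (by positivity)
    refine hfinev.mono fun n hn => ?_
    -- pointwise bound off F
    have hbound : ∀ γ : Γ, |φ n γ| ≤ δ₁ * |f n γ| ^ q + C * |g γ| ^ q := fun γ =>
      hC (f n γ) (g γ)
    have hbsum : Summable fun γ => δ₁ * |f n γ| ^ q + C * |g γ| ^ q :=
      ((hf n).mul_left δ₁).add (hg.mul_left C)
    -- tail of |f n| is at most M
    have hftail : (∑' γ : ↥((F : Set Γ)ᶜ), |f n γ.1| ^ q) ≤ M := by
      have hcompl := Summable.sum_add_tsum_compl (s := F) (hf n)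
      have hFnn : 0 ≤ ∑ γ ∈ F, |f n γ| ^ q :=
        Finset.sum_nonneg fun γ _ => Real.rpow_nonneg (abs_nonneg _) q
      linarith [hfM n]
    have htail : (∑' γ : ↥((F : Set Γ)ᶜ), |φ n γ.1|) ≤ δ₁ * M + C * (δ / (4 * C)) := by
      have h1 : (∑' γ : ↥((F : Set Γ)ᶜ), |φ n γ.1|) ≤
          ∑' γ : ↥((F : Set Γ)ᶜ), (δ₁ * |f n γ.1| ^ q + C * |g γ.1| ^ q) := by
        have hs1 : Summable (fun γ : ↥((F : Set Γ)ᶜ) => |φ n γ.1|) := (hφabs n).subtype _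
        have hs2 : Summable (fun γ : ↥((F : Set Γ)ᶜ) => δ₁ * |f n γ.1| ^ q + C * |g γ.1| ^ q) :=
          hbsum.subtype _
        exact Summable.tsum_le_tsum (fun γ => hbound γ.1) hs1 hs2
      have h2 : (∑' γ : ↥((F : Set Γ)ᶜ), (δ₁ * |f n γ.1| ^ q + C * |g γ.1| ^ q))
          = δ₁ * (∑' γ : ↥((F : Set Γ)ᶜ), |f n γ.1| ^ q)
            + C * (∑' γ : ↥((F : Set Γ)ᶜ), |g γ.1| ^ q) := by
        have h2a : Summable (fun γ : ↥((F : Set Γ)ᶜ) => δ₁ * |f n γ.1| ^ q) :=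
          ((hf n).subtype _).mul_left δ₁
        have h2b : Summable (fun γ : ↥((F : Set Γ)ᶜ) => C * |g γ.1| ^ q) :=
          (hg.subtype _).mul_left C
        rw [Summable.tsum_add h2a h2b, tsum_mul_left, tsum_mul_left]
      have h3 : δ₁ * (∑' γ : ↥((F : Set Γ)ᶜ), |f n γ.1| ^ q) ≤ δ₁ * M :=
        mul_le_mul_of_nonneg_left hftail hδ₁0.le
      have h4 : C * (∑' γ : ↥((F : Set Γ)ᶜ), |g γ.1| ^ q) ≤ C * (δ / (4 * C)) :=
        mul_le_mul_of_nonneg_left hF hC0.le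
      calc (∑' γ : ↥((F : Set Γ)ᶜ), |φ n γ.1|) ≤ _ := h1
        _ = _ := h2
        _ ≤ δ₁ * M + C * (δ / (4 * C)) := by linarith
    have hCδ : C * (δ / (4 * C)) = δ / 4 := by field_simp
    -- put together
    have habs_tsum : |∑' γ, φ n γ| ≤ ∑' γ, |φ n γ| := by
      have := norm_tsum_le_tsum_norm (f := fun γ => φ n γ) (by simpa using hφabs n)
      simpa [Real.norm_eq_abs] using this
    have hsplit : (∑' γ, |φ n γ|) = (∑ γ ∈ F, |φ n γ|) + ∑' γ : ↥((F : Set Γ)ᶜ), |φ n γ.1| :=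
      (Summable.sum_add_tsum_compl (s := F) (hφabs n)).symm
    rw [Real.dist_eq, sub_zero]
    calc |∑' γ, φ n γ| ≤ ∑' γ, |φ n γ| := habs_tsum
      _ = (∑ γ ∈ F, |φ n γ|) + ∑' γ : ↥((F : Set Γ)ᶜ), |φ n γ.1| := hsplit
      _ < δ / 4 + (δ₁ * M + C * (δ / (4 * C))) := by
          have := htail
          linarith [hn]
      _ ≤ δ / 4 + (δ / 4 + δ / 4) := by rw [hCδ]; linarith
      _ < δ := by linarith
  have := main.add_const (∑' γ, |g γ| ^ q)
  simpa using this

end Aux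

/- STATEMENT 15: Let `1 < p < ∞` and let `Γ` be a set of cardinality `ℵ₁`.  Then there
is no uncountable `(2^(1/p)+)`-separated set in the unit sphere of `ℓ_p(Γ)`: every
uncountable subset of the unit sphere contains two distinct points `x, y` with
`‖x - y‖ ≤ 2^(1/p)`. -/
theorem stmt15 (p : ℝ≥0∞) [Fact (1 ≤ p)] (hp1 : 1 < p) (hptop : p ≠ ∞)
    (Γ : Type) (hΓ : Cardinal.mk Γ = Cardinal.aleph 1) :
    ∀ Y : Set (lp (fun _ : Γ => ℝ) p), Y ⊆ {x : lp (fun _ : Γ => ℝ) p | ‖x‖ = 1} →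
      ¬Y.Countable →
      ∃ x ∈ Y, ∃ y ∈ Y, x ≠ y ∧ ‖x - y‖ ≤ (2 : ℝ) ^ (1 / p.toReal) := by
  intro Y hYs hYunc
  by_contra hcon
  push_neg at hcon
  set q : ℝ := p.toReal with hqdef
  have hq1 : 1 < q := by
    have := ENNReal.toReal_strict_mono hptop hp1
    simpa using this
  have hq0 : (0:ℝ) < q := by linarith
  -- coordinate summability for lp elements
  have hsumm : ∀ v : lp (fun _ : Γ => ℝ) p, Summable fun γ => |v γ| ^ q := by
    intro v
    have := (lp.memℓp v).summable hq0
    simpa [Real.norm_eq_abs] using this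
  have hnorm : ∀ v : lp (fun _ : Γ => ℝ) p, ‖v‖ ^ q = ∑' γ, |v γ| ^ q := by
    intro v
    have := lp.norm_rpow_eq_tsum hq0 v
    simpa [Real.norm_eq_abs] using this
  -- pairwise separation in power form
  have hpair : ∀ x ∈ Y, ∀ y ∈ Y, x ≠ y → 2 < ‖x - y‖ ^ q := by
    intro x hx y hy hxy
    have h := hcon x hx y hy hxy
    have h2 : ((2:ℝ) ^ (1/q)) ^ q < ‖x - y‖ ^ q :=
      Real.rpow_lt_rpow (Real.rpow_nonneg (by norm_num) _) h hq0
    rwa [← Real.rpow_mul (by norm_num : (0:ℝ) ≤ 2), one_div_mul_cancel hq0.ne',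
      Real.rpow_one] at h2
  -- the key finiteness claim
  have key : ∀ y₀ ∈ Y, ∀ ε : ℝ, 0 < ε →
      {x : lp (fun _ : Γ => ℝ) p | x ∈ Y ∧ 2 + ε ≤ ‖x - y₀‖ ^ q}.Finite := by
    intro y₀ hy₀ ε hε
    by_contra hinf
    set B := {x : lp (fun _ : Γ => ℝ) p | x ∈ Y ∧ 2 + ε ≤ ‖x - y₀‖ ^ q} with hBdef
    have hBinf : B.Infinite := hinf
    obtain e := hBinf.natEmbedding
    set x : ℕ → lp (fun _ : Γ => ℝ) p := fun n => (e n : lp (fun _ : Γ => ℝ) p) with hxdef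
    have hxB : ∀ n, x n ∈ B := fun n => (e n).2
    have hxY : ∀ n, x n ∈ Y := fun n => (hxB n).1
    have hxsep : ∀ n, 2 + ε ≤ ‖x n - y₀‖ ^ q := fun n => (hxB n).2
    have hxinj : Function.Injective x := Subtype.coe_injective.comp e.injective
    have hx1 : ∀ n, ‖x n‖ = 1 := fun n => hYs (hxY n)
    -- the ultrafilter
    set U : Ultrafilter ℕ := Filter.hyperfilter ℕ with hUdef
    have hcof : ∀ s : Set ℕ, s ∈ (Filter.cofinite : Filter ℕ) → s ∈ (U : Filter ℕ) := fun s hs => Filter.hyperfilter_le_cofinite hs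
    -- coordinatewise limits
    have hcoord : ∀ γ : Γ, ∃ zγ : ℝ, Filter.Tendsto (fun n => x n γ) (U : Filter ℕ) (nhds zγ) := by
      intro γ
      have hmem : ∀ n, x n γ ∈ Set.Icc (-1 : ℝ) 1 := by
        intro n
        have h1 : ‖x n γ‖ ≤ ‖x n‖ := lp.norm_apply_le_norm (by
          intro h0
          rw [h0] at hp1
          exact (not_lt_of_gt hp1) (by norm_num)) (x n) γ
        rw [hx1 n, Real.norm_eq_abs] at h1
        constructor <;> [linarith [neg_abs_le (x n γ)]; linarith [le_abs_self (x n γ)]]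
      have hBmem : Set.Icc (-1:ℝ) 1 ∈ (U.map fun n => x n γ) := by
        rw [Ultrafilter.mem_map]
        exact Filter.univ_mem' hmem
      obtain ⟨zγ, _, hz⟩ := isCompact_Icc.ultrafilter_le_nhds' (U.map fun n => x n γ) hBmem
      refine ⟨zγ, ?_⟩
      rw [Filter.Tendsto, ← Ultrafilter.coe_map]
      exact hz
    choose z₀ hz₀ using hcoord
    -- z is in lp
    have hzmem : Memℓp z₀ p := by
      apply memℓp_gen' (C := 1)
      intro F
      have hev : Filter.Tendsto (fun n => ∑ γ ∈ F, |x n γ| ^ q) (U : Filter ℕ)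
          (nhds (∑ γ ∈ F, |z₀ γ| ^ q)) := by
        apply tendsto_finset_sum
        intro γ _
        have habsq : Continuous fun t : ℝ => |t| ^ q := by
          rw [continuous_iff_continuousAt]
          intro t
          exact (Real.continuousAt_rpow_const _ _ (Or.inr hq0.le)).comp
            continuous_abs.continuousAt
        exact (habsq.tendsto _).comp (hz₀ γ)
      have hle : ∀ n, ∑ γ ∈ F, |x n γ| ^ q ≤ 1 := by
        intro n
        have := lp.sum_rpow_le_norm_rpow hq0 (x n) F
        rw [hx1 n, Real.one_rpow] at this
        simpa [Real.norm_eq_abs] using this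
      have := le_of_tendsto hev (Filter.Eventually.of_forall hle)
      simpa [Real.norm_eq_abs] using this
    set z : lp (fun _ : Γ => ℝ) p := ⟨z₀, hzmem⟩ with hzdef
    have hzcoe : ∀ γ, z γ = z₀ γ := fun γ => rfl
    -- Brezis-Lieb applications
    have hBL : ∀ w : lp (fun _ : Γ => ℝ) p,
        Filter.Tendsto (fun n => ‖x n - w‖ ^ q - ‖x n - z‖ ^ q) (U : Filter ℕ)
          (nhds (‖z - w‖ ^ q)) := by
      intro w
      have hmain := BLsum (l := (U : Filter ℕ)) (q := q) (M := (1 + ‖z‖) ^ q)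
        hq1.le (Real.rpow_nonneg (by positivity) q)
        (fun n γ => x n γ - z γ) (fun γ => z γ - w γ)
        (fun n => by simpa [Real.norm_eq_abs, lp.coeFn_sub, Pi.sub_apply] using hsumm (x n - z))
        (fun n => by
          have h1 : (∑' γ, |x n γ - z γ| ^ q) = ‖x n - z‖ ^ q := by
            rw [hnorm (x n - z)]
            apply tsum_congr
            intro γ
            rw [lp.coeFn_sub]
            rfl
          rw [h1]
          have h2 : ‖x n - z‖ ≤ 1 + ‖z‖ := by
            calc ‖x n - z‖ ≤ ‖x n‖ + ‖z‖ := norm_sub_le _ _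
              _ = 1 + ‖z‖ := by rw [hx1 n]
          exact Real.rpow_le_rpow (norm_nonneg _) h2 hq0.le)
        (by simpa [Real.norm_eq_abs, lp.coeFn_sub, Pi.sub_apply] using hsumm (z - w))
        (fun γ => by
          have := (hz₀ γ).sub_const (z γ)
          simpa [hzcoe, sub_self] using this)
      have hrw1 : ∀ n, (∑' γ, |(x n γ - z γ) + (z γ - w γ)| ^ q) = ‖x n - w‖ ^ q := by
        intro n
        rw [hnorm (x n - w)]
        apply tsum_congr
        intro γ
        rw [lp.coeFn_sub]
        simp only [Pi.sub_apply]
        ring_nf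
      have hrw2 : ∀ n, (∑' γ, |x n γ - z γ| ^ q) = ‖x n - z‖ ^ q := by
        intro n
        rw [hnorm (x n - z)]
        apply tsum_congr
        intro γ
        rw [lp.coeFn_sub]
        rfl
      have hrw3 : (∑' γ, |z γ - w γ| ^ q) = ‖z - w‖ ^ q := by
        rw [hnorm (z - w)]
        apply tsum_congr
        intro γ
        rw [lp.coeFn_sub]
        rfl
      simp only [hrw1, hrw2, hrw3] at hmain
      exact hmain
    -- limit of ‖x n - z‖^q
    have hc : Filter.Tendsto (fun n => ‖x n - z‖ ^ q) (U : Filter ℕ) (nhds (1 - ‖z‖ ^ q)) := by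
      have h0 := hBL 0
      have h1 : ∀ n, ‖x n - (0 : lp (fun _ : Γ => ℝ) p)‖ ^ q - ‖x n - z‖ ^ q
          = 1 - ‖x n - z‖ ^ q := by
        intro n
        rw [sub_zero, hx1 n, Real.one_rpow]
      have h2 : ‖z - (0 : lp (fun _ : Γ => ℝ) p)‖ ^ q = ‖z‖ ^ q := by rw [sub_zero]
      simp only [h1, h2] at h0
      have h3 := h0.const_sub 1
      simpa using h3
    set c : ℝ := 1 - ‖z‖ ^ q with hcdef
    -- full limits
    have hBLfull : ∀ w : lp (fun _ : Γ => ℝ) p,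
        Filter.Tendsto (fun n => ‖x n - w‖ ^ q) (U : Filter ℕ) (nhds (‖z - w‖ ^ q + c)) := by
      intro w
      have := (hBL w).add hc
      simpa using this
    -- each x m satisfies 2 - c ≤ ‖x m - z‖^q
    have h5 : ∀ m, 2 ≤ ‖z - x m‖ ^ q + c := by
      intro m
      have hev : ∀ᶠ n in (U : Filter ℕ), 2 ≤ ‖x n - x m‖ ^ q := by
        have hne : {n : ℕ | n ≠ m} ∈ (U : Filter ℕ) := by
          apply hcof
          rw [Filter.mem_cofinite]
          convert Set.finite_singleton m using 1
          ext k; simp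
        refine Filter.mem_of_superset hne ?_
        intro n hn
        exact le_of_lt (hpair (x n) (hxY n) (x m) (hxY m) (fun hh => hn (hxinj hh)))
      exact ge_of_tendsto (hBLfull (x m)) hev
    -- conclude z = 0, c = 1
    have h6 : 2 - c ≤ c := by
      have hev : ∀ᶠ m in (U : Filter ℕ), 2 - c ≤ ‖x m - z‖ ^ q := by
        apply Filter.Eventually.of_forall
        intro m
        have := h5 m
        rw [norm_sub_rev] at this
        linarith
      exact ge_of_tendsto hc hev
    have hzq0 : ‖z‖ ^ q ≤ 0 := by rw [hcdef] at h6; linarith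
    have hzq0' : 0 ≤ ‖z‖ ^ q := Real.rpow_nonneg (norm_nonneg _) q
    have hznorm : ‖z‖ = 0 := by
      by_contra hzz
      have hzpos : 0 < ‖z‖ := lt_of_le_of_ne (norm_nonneg _) (Ne.symm hzz)
      have := Real.rpow_pos_of_pos hzpos q
      linarith
    have hzzero : z = (0 : lp (fun _ : Γ => ℝ) p) := norm_eq_zero.mp hznorm
    have hc1 : c = 1 := by
      rw [hcdef, hznorm, Real.zero_rpow hq0.ne']
      ring
    -- final contradiction with y₀
    have h7 : Filter.Tendsto (fun n => ‖x n - y₀‖ ^ q) (U : Filter ℕ) (nhds 2) := by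
      have := hBLfull y₀
      rw [hzzero, hc1] at this
      have hy1 : ‖(0 : lp (fun _ : Γ => ℝ) p) - y₀‖ = 1 := by
        rw [zero_sub, norm_neg]
        exact hYs hy₀
      rw [hy1, Real.one_rpow] at this
      norm_num at this
      exact this
    have h8 : 2 + ε ≤ 2 :=
      ge_of_tendsto h7 (Filter.Eventually.of_forall hxsep)
    linarith
  -- Y is countable: contradiction
  apply hYunc
  rcases Set.eq_empty_or_nonempty Y with hYe | ⟨y₀, hy₀⟩
  · rw [hYe]; exact Set.countable_empty
  have hsub : Y ⊆ insert y₀ (⋃ n : ℕ, {x : lp (fun _ : Γ => ℝ) p |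
      x ∈ Y ∧ 2 + 1/(n+1 : ℝ) ≤ ‖x - y₀‖ ^ q}) := by
    intro x hx
    rcases eq_or_ne x y₀ with hxy | hxy
    · exact hxy ▸ Set.mem_insert _ _
    · have h2 := hpair x hx y₀ hy₀ hxy
      obtain ⟨n, hn⟩ := exists_nat_one_div_lt (show (0:ℝ) < ‖x - y₀‖ ^ q - 2 by linarith)
      apply Set.mem_insert_of_mem
      apply Set.mem_iUnion.mpr
      exact ⟨n, hx, by push_cast at hn ⊢; linarith⟩
  refine Set.Countable.mono hsub ?_
  apply Set.Countable.insert
  apply Set.countable_iUnion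
  intro n
  exact (key y₀ hy₀ (1/(n+1:ℝ)) (by positivity)).countable
end

section
/- Let Γ be a set of cardinality 2^ω. For every ε > 0 the unit sphere of c₀(Γ) is the union of countably many sets each of diameter at most 1 + ε. Consequently, for every uncountable cardinal κ ≤ 2^ω the unit sphere of c₀(κ) is dichotomous. -/
open scoped ENNReal

/-- `c₀(Γ)`, realized as the set of those bounded functions `x ∈ ℓ∞(Γ)` such that
`{γ : ε ≤ |x γ|}` is finite for every `ε > 0` (the norm is the sup norm of `ℓ∞(Γ)`). -/
def c0Set (Γ : Type) : Set (lp (fun _ : Γ => ℝ) ∞) :=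
  {x | ∀ ε : ℝ, 0 < ε → {γ : Γ | ε ≤ |x γ|}.Finite}

/-- The unit sphere of `c₀(Γ)`. -/
def c0Sphere (Γ : Type) : Set (lp (fun _ : Γ => ℝ) ∞) :=
  {x | x ∈ c0Set Γ ∧ ‖x‖ = 1}

/-!
Fix `δ > 0`. A point `x` of the unit ball of `c₀(Γ)` has only finitely many coordinates with
`|x γ| ≥ δ`; if `Γ ↪ ℝ`, some map `γ ↦ ⌊(m + 1) e γ⌋ : Γ → ℤ` separates them, and recording `m`
together with rational `δ`-approximations of these coordinates, indexed by their integer labels,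
gives a countable code. Two points with the same code differ by at most `2δ` where both are large
and by at most `1 + δ` elsewhere, so each code class has diameter at most `1 + 2δ`.

If `Γ` is uncountable, embed `ω₁` into `Γ` and take `x_α = e_α - ∑_{β < α} w_{αβ} e_β`
with positive weights `w_{αβ} = (n_α β + 1)⁻¹` for an injection `n_α` of the countable set `[0, α)`
into `ℕ`; then `x_α ∈ c₀` and `‖x_α - x_β‖ ≥ 1 + w_{αβ} > 1` for `β < α`. So the sphere admits an
uncountable `(r+)`-separated set for `r ≤ 1` and a countable cover by sets of diameter `r` for `r > 1`.
-/

open Set Filter Metric Function Cardinal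

theorem eventually_floor_mul_ne {a b : ℝ} (h : a ≠ b) :
    ∀ᶠ m : ℕ in atTop, ⌊((m : ℝ) + 1) * a⌋ ≠ ⌊((m : ℝ) + 1) * b⌋ := by
  have hab : 0 < |a - b| := abs_pos.mpr (sub_ne_zero.mpr h)
  have hgrow : Tendsto (fun m : ℕ => ((m : ℝ) + 1) * |a - b|) atTop atTop :=
    (tendsto_natCast_atTop_atTop.atTop_add tendsto_const_nhds).atTop_mul_const hab
  filter_upwards [hgrow.eventually_ge_atTop 1] with m hm hfloor
  have hlt := Int.abs_sub_lt_one_of_floor_eq_floor hfloor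
  rw [← mul_sub, abs_mul, abs_of_pos (by positivity : (0 : ℝ) < m + 1)] at hlt
  linarith

theorem exists_injOn_floor_mul {s : Set ℝ} (hs : s.Finite) :
    ∃ m : ℕ, InjOn (fun t => ⌊((m : ℝ) + 1) * t⌋) s := by
  have hpairs : ∀ᶠ m : ℕ in atTop, ∀ p ∈ s ×ˢ s, p.1 ≠ p.2 →
      ⌊((m : ℝ) + 1) * p.1⌋ ≠ ⌊((m : ℝ) + 1) * p.2⌋ :=
    (eventually_all_finite (hs.prod hs)).mpr fun p _ => by
      by_cases h : p.1 = p.2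
      · exact Eventually.of_forall fun _ hne => absurd h hne
      · filter_upwards [eventually_floor_mul_ne h] with m hm _ using hm
  obtain ⟨m, hm⟩ := hpairs.exists
  exact ⟨m, fun a ha b hb hfloor => by_contra fun hne => hm (a, b) ⟨ha, hb⟩ hne hfloor⟩

theorem abs_sub_le_one_add_two_mul {a b q δ : ℝ} (ha : |a| ≤ 1) (hb : |b| ≤ 1)
    (hqa : δ ≤ |a| → |a - q| ≤ δ) (hqb : δ ≤ |b| → |b - q| ≤ δ) : |a - b| ≤ 1 + 2 * δ := by
  have hab := abs_sub a b
  by_cases hA : δ ≤ |a|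
  · by_cases hB : δ ≤ |b|
    · have := abs_sub_le a q b
      rw [abs_sub_comm q b] at this
      linarith [hqa hA, hqb hB]
    · linarith [not_le.mp hB, abs_nonneg b]
  · linarith [not_le.mp hA, abs_nonneg a]

theorem abs_apply_le_one_of_norm_le_one {Γ : Type} {x : lp (fun _ : Γ => ℝ) ∞} (hx : ‖x‖ ≤ 1) (γ : Γ) :
    |x γ| ≤ 1 :=
  (lp.norm_apply_le_norm ENNReal.top_ne_zero x γ).trans hx

theorem exists_iUnion_eq_diam_le_of_forall_finite_injOn {Γ : Type} (κ : ℕ → Γ → ℤ)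
    (hκ : ∀ F : Set Γ, F.Finite → ∃ m, InjOn (κ m) F) {M : Set (lp (fun _ : Γ => ℝ) ∞)}
    (hM : M ⊆ c0Set Γ ∩ closedBall 0 1) {ε : ℝ} (hε : 0 < ε) :
    ∃ f : ℕ → Set (lp (fun _ : Γ => ℝ) ∞), ⋃ n, f n = M ∧ ∀ n, diam (f n) ≤ 1 + ε := by
  set δ := ε / 2
  let cell : ℕ × (ℤ →₀ ℚ) → Set (lp (fun _ : Γ => ℝ) ∞) := fun c =>
    M ∩ {x | ∀ γ, δ ≤ |x γ| → |x γ - c.2 (κ c.1 γ)| ≤ δ}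
  have hcover : ⋃ c, cell c = M := by
    refine (iUnion_subset fun c => inter_subset_left).antisymm fun x hx => ?_
    have hF : {γ | δ ≤ |x γ|}.Finite := (hM hx).1 δ (by positivity)
    obtain ⟨m, hm⟩ := hκ _ hF
    choose q hq using fun γ => exists_rat_near (x γ) (by positivity : 0 < δ)
    let g : ℤ →₀ ℚ := Finsupp.indicator (hF.image (κ m)).toFinset
      fun k hk => q ((hF.image (κ m)).mem_toFinset.mp hk).choose
    refine mem_iUnion.mpr ⟨(m, g), hx, fun γ hγ => ?_⟩
    have hk : κ m γ ∈ (hF.image (κ m)).toFinset :=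
      (hF.image (κ m)).mem_toFinset.mpr (mem_image_of_mem _ hγ)
    obtain ⟨hγ', hκγ'⟩ := ((hF.image (κ m)).mem_toFinset.mp hk).choose_spec
    have hg : g (κ m γ) = q γ := by
      rw [Finsupp.indicator_of_mem hk, hm hγ' hγ hκγ']
    simpa only [hg] using (hq γ).le
  have hdiam : ∀ c, diam (cell c) ≤ 1 + ε := fun c => by
    refine diam_le_of_forall_dist_le (by positivity) fun x hx y hy => ?_
    rw [dist_eq_norm]
    refine lp.norm_le_of_forall_le (by positivity) fun γ => ?_
    have hx1 := abs_apply_le_one_of_norm_le_one (mem_closedBall_zero_iff.mp (hM hx.1).2) γ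
    have hy1 := abs_apply_le_one_of_norm_le_one (mem_closedBall_zero_iff.mp (hM hy.1).2) γ
    rw [lp.coeFn_sub, Pi.sub_apply, Real.norm_eq_abs]
    exact (abs_sub_le_one_add_two_mul hx1 hy1 (hx.2 γ) (hy.2 γ)).trans_eq (by ring)
  obtain ⟨e, he⟩ := exists_surjective_nat (ℕ × (ℤ →₀ ℚ))
  exact ⟨fun n => cell (e n), by rw [he.iUnion_comp cell]; exact hcover, fun n => hdiam (e n)⟩

theorem exists_iUnion_eq_diam_le_of_mk_le_continuum {Γ : Type} (hΓ : #Γ ≤ 𝔠)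
    {M : Set (lp (fun _ : Γ => ℝ) ∞)} (hM : M ⊆ c0Set Γ ∩ closedBall 0 1) {ε : ℝ} (hε : 0 < ε) :
    ∃ f : ℕ → Set (lp (fun _ : Γ => ℝ) ∞), ⋃ n, f n = M ∧ ∀ n, diam (f n) ≤ 1 + ε := by
  obtain ⟨e⟩ := (le_def Γ ℝ).mp (mk_real ▸ hΓ)
  refine exists_iUnion_eq_diam_le_of_forall_finite_injOn (fun m γ => ⌊((m : ℝ) + 1) * e γ⌋)
    (fun F hF => ?_) hM hε
  obtain ⟨m, hm⟩ := exists_injOn_floor_mul (hF.image e)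
  exact ⟨m, hm.comp e.injective.injOn (mapsTo_image e F)⟩

theorem c0Sphere_subset_closedBall (Γ : Type) : c0Sphere Γ ⊆ c0Set Γ ∩ closedBall 0 1 :=
  fun _ hx => ⟨hx.1, mem_closedBall_zero_iff.mpr hx.2.le⟩

section SeparatedFamily

variable {A Γ : Type} (ι : A → Γ)

theorem abs_extend_le {u : A → ℝ} {C : ℝ} (hC : 0 ≤ C) (hu : ∀ a, |u a| ≤ C) (γ : Γ) :
    |extend ι u 0 γ| ≤ C := by
  classical
  by_cases h : ∃ a, ι a = γ
  · rw [extend_def, dif_pos h]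
    exact hu _
  · rwa [extend_apply' _ _ _ h, Pi.zero_apply, abs_zero]

theorem setOf_le_abs_extend_subset {u : A → ℝ} {ε : ℝ} (hε : 0 < ε) :
    {γ | ε ≤ |extend ι u 0 γ|} ⊆ ι '' {a | ε ≤ |u a|} := by
  classical
  intro γ hγ
  by_cases h : ∃ a, ι a = γ
  · rw [mem_ofPred_eq, extend_def, dif_pos h] at hγ
    exact ⟨h.choose, hγ, h.choose_spec⟩
  · rw [mem_ofPred_eq, extend_apply' _ _ _ h, Pi.zero_apply, abs_zero] at hγ
    exact absurd hγ (not_le.mpr hε)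

variable [LinearOrder A] (n : A → A → ℕ)

noncomputable def separatedProfile (a b : A) : ℝ :=
  if b < a then -((n a b : ℝ) + 1)⁻¹ else if b = a then 1 else 0

theorem separatedProfile_self (a : A) : separatedProfile n a a = 1 := by
  simp [separatedProfile]

theorem separatedProfile_of_lt {a b : A} (h : b < a) :
    separatedProfile n a b = -((n a b : ℝ) + 1)⁻¹ :=
  if_pos h

theorem abs_separatedProfile_le_one (a b : A) : |separatedProfile n a b| ≤ 1 := by
  unfold separatedProfile
  split_ifs
  · rw [abs_neg, abs_inv, abs_of_pos (by positivity)]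
    exact inv_le_one_of_one_le₀ (by simp)
  · simp
  · simp

theorem finite_setOf_le_abs_separatedProfile {a : A} (hn : InjOn (n a) (Iio a)) {ε : ℝ}
    (hε : 0 < ε) : {b | ε ≤ |separatedProfile n a b|}.Finite := by
  have hsub : {b | ε ≤ |separatedProfile n a b|} ⊆ insert a (Iio a ∩ n a ⁻¹' Iic ⌊ε⁻¹⌋₊) := by
    intro b hb
    rcases lt_trichotomy b a with h | rfl | h
    · rw [mem_ofPred_eq, separatedProfile_of_lt n h, abs_neg, abs_inv, abs_of_pos (by positivity),
        le_inv_comm₀ hε (by positivity)] at hb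
      exact Or.inr ⟨h, Nat.le_floor (by linarith)⟩
    · exact mem_insert _ _
    · simp [separatedProfile, h.not_gt, h.ne'] at hb
      linarith
  have hfin : (n a '' (Iio a ∩ n a ⁻¹' Iic ⌊ε⁻¹⌋₊)).Finite :=
    (finite_Iic _).subset ((image_mono inter_subset_right).trans (image_preimage_subset _ _))
  exact ((hfin.of_finite_image (hn.mono inter_subset_left)).insert a).subset hsub

noncomputable def separatedVector (a : A) : lp (fun _ : Γ => ℝ) ∞ :=
  ⟨extend ι (separatedProfile n a) 0, memℓp_infty ⟨1, by
    rintro _ ⟨γ, rfl⟩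
    exact abs_extend_le ι zero_le_one (abs_separatedProfile_le_one n a) γ⟩⟩

variable {ι}

theorem separatedVector_apply (hι : Injective ι) (a b : A) :
    separatedVector ι n a (ι b) = separatedProfile n a b :=
  hι.extend_apply _ _ _

theorem separatedVector_mem_c0Sphere (hι : Injective ι) {a : A} (hn : InjOn (n a) (Iio a)) :
    separatedVector ι n a ∈ c0Sphere Γ := by
  refine ⟨fun ε hε => ?_, le_antisymm ?_ ?_⟩
  · exact ((finite_setOf_le_abs_separatedProfile n hn hε).image ι).subset
      (setOf_le_abs_extend_subset ι hε)
  · exact lp.norm_le_of_forall_le zero_le_one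
      (abs_extend_le ι zero_le_one (abs_separatedProfile_le_one n a))
  · simpa [separatedVector_apply n hι, separatedProfile_self] using
      lp.norm_apply_le_norm ENNReal.top_ne_zero (separatedVector ι n a) (ι a)

theorem one_lt_norm_sub_separatedVector (hι : Injective ι) {a b : A} (h : b < a) :
    1 < ‖separatedVector ι n a - separatedVector ι n b‖ := by
  have hcoord := lp.norm_apply_le_norm ENNReal.top_ne_zero
    (separatedVector ι n a - separatedVector ι n b) (ι b)
  rw [lp.coeFn_sub, Pi.sub_apply, separatedVector_apply n hι, separatedVector_apply n hι,
    separatedProfile_of_lt n h, separatedProfile_self, Real.norm_eq_abs, ← neg_add', abs_neg,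
    abs_of_pos (by positivity)] at hcoord
  have : 0 < ((n a b : ℝ) + 1)⁻¹ := by positivity
  linarith

end SeparatedFamily

theorem exists_uncountable_linearOrder_countable_Iio_injective (Γ : Type) [Uncountable Γ] :
    ∃ (A : Type) (_ : LinearOrder A), Uncountable A ∧ (∀ a : A, (Iio a).Countable) ∧
      ∃ ι : A → Γ, Injective ι := by
  refine ⟨(ℵ₁).ord.ToType, inferInstance, ?_, fun a => ?_, ?_⟩
  · rw [← aleph0_lt_mk_iff, mk_ord_toType]
    exact aleph0_lt_aleph_one
  · rw [← le_aleph0_iff_set_countable, ← lt_aleph_one_iff]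
    simpa using mk_Iio_lt a
  · obtain ⟨ι⟩ := (le_def _ Γ).mp (by rw [mk_ord_toType, aleph_one_le_iff]; exact aleph0_lt_mk)
    exact ⟨ι, ι.injective⟩

theorem exists_uncountable_separated_subset_c0Sphere (Γ : Type) [Uncountable Γ] :
    ∃ N ⊆ c0Sphere Γ, ¬N.Countable ∧ ∀ x ∈ N, ∀ y ∈ N, x ≠ y → 1 < ‖x - y‖ := by
  obtain ⟨A, _, hA, hIio, ι, hι⟩ := exists_uncountable_linearOrder_countable_Iio_injective Γ
  choose n hn using fun a => countable_iff_exists_injOn.mp (hIio a)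
  set V := separatedVector ι n
  have hsep : ∀ a b, a ≠ b → 1 < ‖V a - V b‖ := fun a b hab => by
    rcases hab.lt_or_gt with h | h
    · rw [norm_sub_rev]
      exact one_lt_norm_sub_separatedVector n hι h
    · exact one_lt_norm_sub_separatedVector n hι h
  have hV : Injective V := fun a b h => by_contra fun hab => (hsep a b hab).not_ge (by simp [h])
  refine ⟨range V, range_subset_iff.mpr fun a => separatedVector_mem_c0Sphere n hι (hn a),
    fun hc => not_countable_univ ((mapsTo_range V univ).countable_of_injOn hV.injOn hc), ?_⟩
  rintro _ ⟨a, rfl⟩ _ ⟨b, rfl⟩ hab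
  exact hsep a b fun h => hab (congrArg V h)

theorem stmt16 :
    (∀ Γ : Type, Cardinal.mk Γ = Cardinal.continuum → ∀ ε : ℝ, 0 < ε →
      ∃ f : ℕ → Set (lp (fun _ : Γ => ℝ) ∞),
        (⋃ n, f n) = c0Sphere Γ ∧ ∀ n, Metric.diam (f n) ≤ 1 + ε) ∧
    (∀ Γ' : Type, ¬Countable Γ' → Cardinal.mk Γ' ≤ Cardinal.continuum →
      Dichotomous (c0Sphere Γ')) := by
  refine ⟨fun Γ hΓ ε hε => exists_iUnion_eq_diam_le_of_mk_le_continuum hΓ.le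
    (c0Sphere_subset_closedBall Γ) hε, fun Γ hΓ hle r _ _ => ?_⟩
  rcases le_or_gt r 1 with hr1 | hr1
  · have : Uncountable Γ := not_countable_iff.mp hΓ
    obtain ⟨N, hN, hNc, hsep⟩ := exists_uncountable_separated_subset_c0Sphere Γ
    exact Or.inl ⟨N, hN, hNc, fun x hx y hy hxy => hr1.trans_lt (hsep x hx y hy hxy)⟩
  · obtain ⟨f, hf, hdiam⟩ := exists_iUnion_eq_diam_le_of_mk_le_continuum hle
      (c0Sphere_subset_closedBall Γ) (sub_pos.mpr hr1)
    exact Or.inr ⟨f, hf, fun n => (hdiam n).trans_eq (add_sub_cancel 1 r)⟩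
end

section
/- Suppose K is a locally compact, Hausdorff, nonmetrizable topological space. Then either K admits a nonmetrizable compact subspace, or the Banach space C₀(K) admits an uncountable equilateral set. -/
/-!
If every compact subset of `K` is metrizable, then `K` cannot be σ-compact: otherwise it is
covered by the interiors of countably many compact metrizable sets, hence second countable,
hence metrizable. By Zorn's lemma there is a maximal set of compactly supported `[0, 1]`-valued
functions at mutual distance `1`. If it were countable, the union of the supports would be
σ-compact, so it would miss a point `x`; an Urysohn bump at `x` is then at distance `1` from
every member (it is `1` at `x`, where they all vanish), contradicting maximality.
-/

open scoped ZeroAtInfty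
open Set TopologicalSpace

theorem secondCountableTopology_of_forall_isCompact_metrizableSpace {X : Type*}
    [TopologicalSpace X] [WeaklyLocallyCompactSpace X] [SigmaCompactSpace X]
    (h : ∀ S : Set X, IsCompact S → MetrizableSpace S) : SecondCountableTopology X := by
  let W := CompactExhaustion.choice X
  have (n : ℕ) : SecondCountableTopology (interior (W (n + 1))) := by
    have := h _ (W.isCompact (n + 1))
    have := isCompact_iff_compactSpace.mp (W.isCompact (n + 1))
    exact (Topology.IsEmbedding.inclusion interior_subset).secondCountableTopology
  refine secondCountableTopology_of_countable_cover (U := fun n ↦ interior (W (n + 1)))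
    (fun _ ↦ isOpen_interior) (eq_univ_of_forall fun x ↦ ?_)
  exact mem_iUnion.mpr ⟨_, W.subset_interior_succ _ (W.mem_find x)⟩

section Bumps

variable {K : Type*} [TopologicalSpace K]

theorem ZeroAtInftyContinuousMap.norm_sub_eq_one_of_mem_Icc {f g : C₀(K, ℝ)}
    (hf : ∀ t, f t ∈ Icc (0 : ℝ) 1) (hg : ∀ t, g t ∈ Icc (0 : ℝ) 1) {x : K}
    (hfx : f x = 1) (hgx : g x = 0) : ‖f - g‖ = 1 := by
  rw [← dist_eq_norm, ← dist_toBCF_eq_dist]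
  refine le_antisymm ((BoundedContinuousFunction.dist_le zero_le_one).2 fun t ↦ ?_) ?_
  · change dist (f t) (g t) ≤ 1
    obtain ⟨hf₀, hf₁⟩ := hf t
    obtain ⟨hg₀, hg₁⟩ := hg t
    rw [Real.dist_eq, abs_le]
    constructor <;> linarith
  · simpa [hfx, hgx] using
      BoundedContinuousFunction.dist_coe_le_dist (f := f.toBCF) (g := g.toBCF) x

variable (K) in
def IsEquilateralBumpSet (N : Set C₀(K, ℝ)) : Prop :=
  (∀ f ∈ N, HasCompactSupport f ∧ ∀ t, f t ∈ Icc (0 : ℝ) 1) ∧ N.Pairwise fun f g ↦ ‖f - g‖ = 1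

theorem exists_maximal_isEquilateralBumpSet : ∃ N, Maximal (IsEquilateralBumpSet K) N := by
  refine zorn_subset _ fun c hc hchain ↦ ⟨⋃₀ c, ⟨?_, ?_⟩, fun _ ↦ subset_sUnion_of_mem⟩
  · rintro f ⟨N, hN, hf⟩
    exact (hc hN).1 f hf
  · rintro f ⟨N, hN, hf⟩ g ⟨N', hN', hg⟩
    rcases hchain.total hN hN' with h | h
    · exact (hc hN').2 (h hf) hg
    · exact (hc hN).2 hf (h hg)

theorem IsEquilateralBumpSet.insert {N : Set C₀(K, ℝ)} (hN : IsEquilateralBumpSet K N)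
    {h : C₀(K, ℝ)} (hc : HasCompactSupport h) (hI : ∀ t, h t ∈ Icc (0 : ℝ) 1) {x : K}
    (hx : h x = 1) (hNx : ∀ f ∈ N, f x = 0) : IsEquilateralBumpSet K (insert h N) := by
  refine ⟨forall_mem_insert.2 ⟨⟨hc, hI⟩, hN.1⟩, hN.2.insert fun f hf _ ↦ ?_⟩
  have hnorm :=
    ZeroAtInftyContinuousMap.norm_sub_eq_one_of_mem_Icc hI (hN.1 f hf).2 hx (hNx f hf)
  exact ⟨hnorm, by rwa [norm_sub_rev]⟩

theorem not_countable_of_maximal_isEquilateralBumpSet [RegularSpace K] [LocallyCompactSpace K]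
    (hK : ¬SigmaCompactSpace K) {N : Set C₀(K, ℝ)} (hN : Maximal (IsEquilateralBumpSet K) N) :
    ¬N.Countable := by
  intro hcount
  obtain ⟨x, hx⟩ : ∃ x, x ∉ ⋃ f ∈ N, tsupport f := by
    by_contra! hcover
    refine hK ⟨?_⟩
    rw [← eq_univ_of_forall hcover]
    exact isSigmaCompact_biUnion hcount fun f hf ↦ (hN.1.1 f hf).1.isCompact.isSigmaCompact
  obtain ⟨h, hx1, -, hc, hI⟩ := exists_continuous_one_zero_of_isCompact isCompact_singleton
    isClosed_empty (disjoint_empty {x})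
  let h₀ : C₀(K, ℝ) := ⟨h, hc.is_zero_at_infty⟩
  have hx₀ : h₀ x = 1 := hx1 rfl
  have hins : IsEquilateralBumpSet K (insert h₀ N) :=
    hN.1.insert hc hI hx₀ fun f hf ↦
      image_eq_zero_of_notMem_tsupport fun hxf ↦ hx (mem_biUnion hf hxf)
  have hxh : x ∈ tsupport h₀ := subset_tsupport _ (by simp [hx₀])
  exact hx (mem_biUnion (hN.2 hins (subset_insert _ _) (mem_insert _ _)) hxh)

theorem exists_not_countable_pairwise_norm_sub_eq_one [RegularSpace K] [LocallyCompactSpace K]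
    (hK : ¬SigmaCompactSpace K) :
    ∃ N : Set C₀(K, ℝ), ¬N.Countable ∧ N.Pairwise fun f g ↦ ‖f - g‖ = 1 :=
  let ⟨N, hN⟩ := exists_maximal_isEquilateralBumpSet (K := K)
  ⟨N, not_countable_of_maximal_isEquilateralBumpSet hK hN, hN.1.2⟩

end Bumps

theorem stmt18 (K : Type*) [TopologicalSpace K] [LocallyCompactSpace K] [T2Space K]
    (hK : ¬TopologicalSpace.MetrizableSpace K) :
    (∃ S : Set K, IsCompact S ∧ ¬TopologicalSpace.MetrizableSpace S) ∨
    (∃ N : Set C₀(K, ℝ), ¬N.Countable ∧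
      ∃ r > (0 : ℝ), ∀ f ∈ N, ∀ g ∈ N, f ≠ g → ‖f - g‖ = r) := by
  by_cases hcpt : ∃ S : Set K, IsCompact S ∧ ¬MetrizableSpace S
  · exact Or.inl hcpt
  push Not at hcpt
  have hσ : ¬SigmaCompactSpace K := fun _ ↦ by
    have := secondCountableTopology_of_forall_isCompact_metrizableSpace hcpt
    exact hK inferInstance
  obtain ⟨N, hNc, hN⟩ := exists_not_countable_pairwise_norm_sub_eq_one hσ
  exact Or.inr ⟨N, hNc, 1, one_pos, hN⟩
end
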